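/- arXiv:2103.05089 — 6 statements merged into one kernel-verified Lean document; each statement's English description precedes it below -/
import Mathlib

section
/- Let K : (0,∞) → ℝ be locally integrable, positive, eventually decreasing, with K(t) → 0 as t → ∞, and suppose K is integrable on (0,∞). Let 𝒦cos, 𝒦sin : (0,∞) → ℝ satisfy, for every ω > 0, ∫₀^A K(t)cos(ωt)dt → 𝒦cos(ω) and ∫₀^A K(t)sin(ωt)dt → 𝒦sin(ω) as A → ∞, and assume 𝒦cos(ω) > 0 for all ω > 0. Let m, λ, β, γ > 0 and set r₁₁(ω) = 2(λ + β·𝒦cos(ω)) / ((γ − m·ω² + β·ω·𝒦sin(ω))² + ω²·(λ + β·𝒦cos(ω))²). Then there exists c ∈ (0,∞) such that (1/t)·∫₀^∞ (1 − cos(tω))·ω⁻²·r₁₁(ω) dω → c as t → ∞. (This expresses that the mean squared displacement E|∫₀ᵗ x(s)ds|² = (2 k_B T/π)∫₀^∞ (1−cos(tω))ω⁻² r₁₁(ω)dω grows diffusively, i.e. linearly in t, when the memory kernel is integrable.) -/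
/-!
Substituting `u = t ω` turns `t⁻¹ ∫₀^∞ (1 - cos tω) ω⁻² r₁₁(ω) dω` into
`∫₀^∞ (1 - cos u) u⁻² r₁₁(u / t) du`. As `K` is integrable, `𝒦cos` and `𝒦sin` are bounded
continuous Fourier transforms of `K`, so `r₁₁` is bounded on `(0, ∞)` and continuous at `0`,
with `r₁₁(0) = 2 (λ + β ∫ K) / γ² > 0`. Dominated convergence then gives the limit
`r₁₁(0) ∫₀^∞ (1 - cos u) u⁻² du`.
-/

open MeasureTheory Filter Set Topology Real

lemma one_sub_cos_div_sq_nonneg (u : ℝ) : 0 ≤ (1 - cos u) / u ^ 2 :=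
  div_nonneg (sub_nonneg.2 (cos_le_one u)) (sq_nonneg u)

lemma measurable_one_sub_cos_div_sq : Measurable fun u : ℝ => (1 - cos u) / u ^ 2 := by
  fun_prop

lemma one_sub_cos_div_sq_le_half (u : ℝ) : (1 - cos u) / u ^ 2 ≤ 1 / 2 := by
  rcases eq_or_ne u 0 with rfl | hu
  · norm_num
  rw [div_le_iff₀ (by positivity)]
  linarith [one_sub_sq_div_two_le_cos (x := u)]

lemma one_sub_cos_div_sq_le_two_div_sq (u : ℝ) : (1 - cos u) / u ^ 2 ≤ 2 / u ^ 2 :=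
  div_le_div_of_nonneg_right (by linarith [neg_one_le_cos u]) (sq_nonneg u)

lemma integrableOn_one_sub_cos_div_sq :
    IntegrableOn (fun u : ℝ => (1 - cos u) / u ^ 2) (Ioi 0) := by
  have hsmall : IntegrableOn (fun u : ℝ => (1 - cos u) / u ^ 2) (Ioc 0 1) := by
    refine Integrable.mono' (integrableOn_const (C := 1 / 2) measure_Ioc_lt_top.ne)
      measurable_one_sub_cos_div_sq.aestronglyMeasurable (Eventually.of_forall fun u => ?_)
    rw [norm_of_nonneg (one_sub_cos_div_sq_nonneg u)]
    exact one_sub_cos_div_sq_le_half u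
  have hlarge : IntegrableOn (fun u : ℝ => (1 - cos u) / u ^ 2) (Ioi 1) := by
    refine Integrable.mono' ((integrableOn_Ioi_rpow_of_lt (by norm_num : (-2 : ℝ) < -1)
      one_pos).const_mul 2) measurable_one_sub_cos_div_sq.aestronglyMeasurable ?_
    filter_upwards [ae_restrict_mem measurableSet_Ioi] with u hu
    rw [norm_of_nonneg (one_sub_cos_div_sq_nonneg u), rpow_neg (by linarith [mem_Ioi.1 hu]),
      rpow_two, ← div_eq_mul_inv]
    exact one_sub_cos_div_sq_le_two_div_sq u
  rw [← Ioc_union_Ioi_eq_Ioi zero_le_one]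
  exact hsmall.union hlarge

lemma integral_one_sub_cos_div_sq_pos : 0 < ∫ u in Ioi (0 : ℝ), (1 - cos u) / u ^ 2 := by
  rw [setIntegral_pos_iff_support_of_nonneg_ae
    (Eventually.of_forall one_sub_cos_div_sq_nonneg) integrableOn_one_sub_cos_div_sq]
  have hpos : Ioc 0 π ⊆ Function.support (fun u : ℝ => (1 - cos u) / u ^ 2) ∩ Ioi 0 := by
    intro u ⟨hu0, huπ⟩
    have := cos_le_one_sub_mul_cos_sq (x := u) (by rw [abs_of_pos hu0]; exact huπ)
    refine ⟨(div_pos ?_ (by positivity)).ne', hu0⟩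
    nlinarith [pi_pos, mul_pos hu0 hu0, div_pos two_pos (pow_pos pi_pos 2)]
  exact (by simp [pi_pos] : (0 : ENNReal) < volume (Ioc 0 π)).trans_le (measure_mono hpos)

lemma one_div_mul_integral_one_sub_cos_mul_div_sq {t : ℝ} (ht : 0 < t) (g : ℝ → ℝ) :
    1 / t * ∫ ω in Ioi (0 : ℝ), (1 - cos (t * ω)) / ω ^ 2 * g ω
      = ∫ u in Ioi (0 : ℝ), (1 - cos u) / u ^ 2 * g (u / t) := by
  have hscale : ∀ ω, (1 - cos (t * ω)) / ω ^ 2 * g ω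
      = t ^ 2 * ((1 - cos (t * ω)) / (t * ω) ^ 2 * g (t * ω / t)) := fun ω => by
    rcases eq_or_ne ω 0 with rfl | hω
    · simp
    · field_simp
  simp_rw [hscale, integral_const_mul]
  rw [integral_comp_mul_left_Ioi (fun u => (1 - cos u) / u ^ 2 * g (u / t)) 0 ht, mul_zero,
    smul_eq_mul]
  field_simp

theorem tendsto_one_div_mul_integral_one_sub_cos_mul_div_sq {g : ℝ → ℝ} {c M : ℝ}
    (hg : Measurable g) (hgM : ∀ ω > 0, |g ω| ≤ M) (hgc : Tendsto g (𝓝[>] 0) (𝓝 c)) :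
    Tendsto (fun t => 1 / t * ∫ ω in Ioi (0 : ℝ), (1 - cos (t * ω)) / ω ^ 2 * g ω) atTop
      (𝓝 ((∫ u in Ioi (0 : ℝ), (1 - cos u) / u ^ 2) * c)) := by
  have hrescaled : Tendsto (fun t => ∫ u in Ioi (0 : ℝ), (1 - cos u) / u ^ 2 * g (u / t))
      atTop (𝓝 (∫ u in Ioi (0 : ℝ), (1 - cos u) / u ^ 2 * c)) := by
    refine tendsto_integral_filter_of_dominated_convergence
      (fun u => M * ((1 - cos u) / u ^ 2))
      (Eventually.of_forall fun t => by fun_prop) ?_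
      (integrableOn_one_sub_cos_div_sq.const_mul M) ?_
    · filter_upwards [eventually_gt_atTop 0] with t ht
      filter_upwards [ae_restrict_mem measurableSet_Ioi] with u (hu : 0 < u)
      rw [norm_mul, norm_of_nonneg (one_sub_cos_div_sq_nonneg u), Real.norm_eq_abs, mul_comm]
      exact mul_le_mul_of_nonneg_right (hgM _ (div_pos hu ht)) (one_sub_cos_div_sq_nonneg u)
    · filter_upwards [ae_restrict_mem measurableSet_Ioi] with u (hu : 0 < u)
      refine (hgc.comp (tendsto_nhdsWithin_iff.2 ⟨?_, ?_⟩)).const_mul _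
      · exact tendsto_const_nhds.div_atTop tendsto_id
      · filter_upwards [eventually_gt_atTop 0] with t ht using div_pos hu ht
  rw [← integral_mul_const]
  refine hrescaled.congr' ?_
  filter_upwards [eventually_gt_atTop 0] with t ht
  exact (one_div_mul_integral_one_sub_cos_mul_div_sq ht g).symm

section Transform

variable {μ : Measure ℝ} {K φ : ℝ → ℝ}

lemma norm_mul_comp_mul_le (hφ : ∀ x, |φ x| ≤ 1) (ω t : ℝ) : ‖K t * φ (ω * t)‖ ≤ ‖K t‖ := by
  rw [norm_mul, Real.norm_eq_abs (φ _)]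
  exact mul_le_of_le_one_right (norm_nonneg _) (hφ _)

lemma integrable_mul_comp_mul (hK : Integrable K μ) (hφc : Continuous φ) (hφ : ∀ x, |φ x| ≤ 1)
    (ω : ℝ) : Integrable (fun t => K t * φ (ω * t)) μ :=
  hK.norm.mono' (hK.aestronglyMeasurable.mul (by fun_prop))
    (Eventually.of_forall (norm_mul_comp_mul_le hφ ω))

lemma continuous_integral_mul_comp_mul (hK : Integrable K μ) (hφc : Continuous φ)
    (hφ : ∀ x, |φ x| ≤ 1) : Continuous fun ω => ∫ t, K t * φ (ω * t) ∂μ :=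
  continuous_of_dominated (fun ω => (integrable_mul_comp_mul hK hφc hφ ω).aestronglyMeasurable)
    (fun ω => Eventually.of_forall (norm_mul_comp_mul_le hφ ω)) hK.norm
    (Eventually.of_forall fun t => by fun_prop)

lemma abs_integral_mul_comp_mul_le (hK : Integrable K μ) (hφ : ∀ x, |φ x| ≤ 1) (ω : ℝ) :
    |∫ t, K t * φ (ω * t) ∂μ| ≤ ∫ t, ‖K t‖ ∂μ :=
  norm_integral_le_of_norm_le hK.norm (Eventually.of_forall (norm_mul_comp_mul_le hφ ω))

end Transform

/-- `r₁₁(ω)` with `kc = 𝒦cos(ω)` and `ks = 𝒦sin(ω)`. -/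
noncomputable def gleSpectralDensity (m lam β γ kc ks ω : ℝ) : ℝ :=
  2 * (lam + β * kc) / ((γ - m * ω ^ 2 + β * ω * ks) ^ 2 + ω ^ 2 * (lam + β * kc) ^ 2)

section SpectralDensity

variable {m lam β γ L : ℝ}

/-- For small `ω` the harmonic term `γ` keeps the first square away from `0`; for large `ω`
the friction `lam` keeps the second one away from `0`. -/
lemma exists_pos_le_gleSpectralDensity_denom (hm : 0 ≤ m) (hlam : 0 < lam) (hβ : 0 ≤ β)
    (hγ : 0 < γ) (hL : 0 ≤ L) : ∃ ε > 0, ∀ ω > 0, ∀ kc ks, 0 ≤ kc → |ks| ≤ L →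
      ε ≤ (γ - m * ω ^ 2 + β * ω * ks) ^ 2 + ω ^ 2 * (lam + β * kc) ^ 2 := by
  set δ := min 1 (γ / (2 * (m + β * L + 1)))
  have hδ : 0 < δ := lt_min one_pos (by positivity)
  have hδγ : δ * (m + β * L + 1) ≤ γ / 2 := by
    calc δ * (m + β * L + 1) ≤ γ / (2 * (m + β * L + 1)) * (m + β * L + 1) :=
          mul_le_mul_of_nonneg_right (min_le_right _ _) (by positivity)
      _ = γ / 2 := by field_simp
  refine ⟨min ((γ / 2) ^ 2) (δ ^ 2 * lam ^ 2), by positivity, fun ω hω kc ks hkc hks => ?_⟩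
  rcases le_or_gt ω δ with hωδ | hδω
  · have hω1 : ω ≤ 1 := hωδ.trans (min_le_left _ _)
    have hdrift : m * ω ^ 2 + β * ω * |ks| ≤ γ / 2 := by
      have : β * ω * |ks| ≤ β * ω * L := mul_le_mul_of_nonneg_left hks (by positivity)
      nlinarith [mul_le_mul_of_nonneg_right hωδ (by positivity : 0 ≤ m + β * L + 1),
        mul_nonneg hm (mul_nonneg hω.le (sub_nonneg.2 hω1))]
    have hfirst : γ / 2 ≤ γ - m * ω ^ 2 + β * ω * ks := by
      have := mul_le_mul_of_nonneg_left (neg_abs_le ks) (mul_nonneg hβ hω.le)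
      linarith
    refine (min_le_left _ _).trans ?_
    nlinarith [sq_nonneg (ω * (lam + β * kc))]
  · refine (min_le_right _ _).trans ?_
    have hlam' : lam ≤ lam + β * kc := le_add_of_nonneg_right (mul_nonneg hβ hkc)
    have := mul_le_mul (pow_le_pow_left₀ hδ.le hδω.le 2) (pow_le_pow_left₀ hlam.le hlam' 2)
      (by positivity) (by positivity)
    nlinarith [sq_nonneg (γ - m * ω ^ 2 + β * ω * ks)]

lemma exists_abs_gleSpectralDensity_le (hm : 0 ≤ m) (hlam : 0 < lam) (hβ : 0 ≤ β)
    (hγ : 0 < γ) (hL : 0 ≤ L) : ∃ M, ∀ ω > 0, ∀ kc ks, 0 ≤ kc → kc ≤ L → |ks| ≤ L →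
      |gleSpectralDensity m lam β γ kc ks ω| ≤ M := by
  obtain ⟨ε, hε, hden⟩ := exists_pos_le_gleSpectralDensity_denom hm hlam hβ hγ hL
  refine ⟨2 * (lam + β * L) / ε, fun ω hω kc ks hkc hkcL hks => ?_⟩
  have hnum : 0 ≤ 2 * (lam + β * kc) := by positivity
  have hden' := hden ω hω kc ks hkc hks
  rw [gleSpectralDensity, abs_of_nonneg (div_nonneg hnum (hε.le.trans hden'))]
  exact div_le_div₀ (by positivity) (by gcongr) hε hden'

lemma gleSpectralDensity_zero (kc ks : ℝ) :
    gleSpectralDensity m lam β γ kc ks 0 = 2 * (lam + β * kc) / γ ^ 2 := by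
  simp [gleSpectralDensity]

lemma measurable_gleSpectralDensity {kc ks : ℝ → ℝ} (hkc : Measurable kc) (hks : Measurable ks) :
    Measurable fun ω => gleSpectralDensity m lam β γ (kc ω) (ks ω) ω := by
  unfold gleSpectralDensity
  fun_prop

lemma continuousAt_zero_gleSpectralDensity {kc ks : ℝ → ℝ} (hγ : γ ≠ 0) (hkc : Continuous kc)
    (hks : Continuous ks) :
    ContinuousAt (fun ω => gleSpectralDensity m lam β γ (kc ω) (ks ω) ω) 0 := by
  unfold gleSpectralDensity
  exact ContinuousAt.div (by fun_prop) (by fun_prop) (by simpa using hγ)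

end SpectralDensity

theorem msd_diffusive_integrable_kernel_general
    (K : ℝ → ℝ)
    (hKpos : ∀ t > 0, 0 < K t)
    (hKint : IntegrableOn K (Ioi 0))
    (Kcos Ksin : ℝ → ℝ)
    (hKcos : ∀ ω > 0, Tendsto (fun A => ∫ t in (0:ℝ)..A, K t * Real.cos (ω * t))
      atTop (nhds (Kcos ω)))
    (hKsin : ∀ ω > 0, Tendsto (fun A => ∫ t in (0:ℝ)..A, K t * Real.sin (ω * t))
      atTop (nhds (Ksin ω)))
    (hKcospos : ∀ ω > 0, 0 < Kcos ω)
    (m lam β γ : ℝ) (hm : 0 < m) (hlam : 0 < lam) (hβ : 0 < β) (hγ : 0 < γ)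
    (r11 : ℝ → ℝ)
    (hr11 : ∀ ω > 0, r11 ω =
      2 * (lam + β * Kcos ω) /
        ((γ - m * ω ^ 2 + β * ω * Ksin ω) ^ 2 + ω ^ 2 * (lam + β * Kcos ω) ^ 2)) :
    ∃ c > 0, Tendsto
      (fun t => (1 / t) * ∫ ω in Ioi (0:ℝ), (1 - Real.cos (t * ω)) / ω ^ 2 * r11 ω)
      atTop (nhds c) := by
  set Kc := fun ω => ∫ t in Ioi (0 : ℝ), K t * cos (ω * t)
  set Ks := fun ω => ∫ t in Ioi (0 : ℝ), K t * sin (ω * t)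
  have hKc : ∀ ω > 0, Kcos ω = Kc ω := fun ω hω => tendsto_nhds_unique (hKcos ω hω)
    (intervalIntegral_tendsto_integral_Ioi 0
      (integrable_mul_comp_mul hKint continuous_cos abs_cos_le_one ω) tendsto_id)
  have hKs : ∀ ω > 0, Ksin ω = Ks ω := fun ω hω => tendsto_nhds_unique (hKsin ω hω)
    (intervalIntegral_tendsto_integral_Ioi 0
      (integrable_mul_comp_mul hKint continuous_sin abs_sin_le_one ω) tendsto_id)
  set R := fun ω => gleSpectralDensity m lam β γ (Kc ω) (Ks ω) ω
  have hKc_cont := continuous_integral_mul_comp_mul hKint continuous_cos abs_cos_le_one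
  have hKs_cont := continuous_integral_mul_comp_mul hKint continuous_sin abs_sin_le_one
  obtain ⟨M, hM⟩ := exists_abs_gleSpectralDensity_le hm.le hlam hβ.le hγ
    (integral_nonneg fun t => norm_nonneg (K t))
  have hRM : ∀ ω > 0, |R ω| ≤ M := fun ω hω => hM ω hω _ _ (hKc ω hω ▸ (hKcospos ω hω).le)
    ((le_abs_self _).trans (abs_integral_mul_comp_mul_le hKint abs_cos_le_one ω))
    (abs_integral_mul_comp_mul_le hKint abs_sin_le_one ω)
  have hR0 : 0 < R 0 := by
    have hKc0 : 0 ≤ Kc 0 := by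
      simpa [Kc] using setIntegral_nonneg measurableSet_Ioi fun t ht => (hKpos t ht).le
    simp only [R, gleSpectralDensity_zero]
    positivity
  have hlim := tendsto_one_div_mul_integral_one_sub_cos_mul_div_sq
    (measurable_gleSpectralDensity hKc_cont.measurable hKs_cont.measurable) hRM
    ((continuousAt_zero_gleSpectralDensity hγ.ne' hKc_cont hKs_cont).tendsto.mono_left
      nhdsWithin_le_nhds)
  refine ⟨_, mul_pos integral_one_sub_cos_div_sq_pos hR0, hlim.congr fun t => ?_⟩
  refine congrArg _ (setIntegral_congr_fun measurableSet_Ioi fun ω (hω : 0 < ω) => ?_)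
  rw [hr11 ω hω, hKc ω hω, hKs ω hω]
  rfl

/-- Diffusive growth of the mean squared displacement of the integrated
position for the harmonically bounded GLE with an integrable memory kernel:
`(1/t) ∫₀^∞ (1 − cos(tω)) ω⁻² r₁₁(ω) dω → c ∈ (0,∞)` as `t → ∞`. -/
theorem msd_diffusive_integrable_kernel
    (K : ℝ → ℝ)
    (hKloc : ∀ A > 0, IntegrableOn K (Ioc 0 A))
    (hKpos : ∀ t > 0, 0 < K t)
    (hKdec : ∃ T > 0, AntitoneOn K (Ici T))
    (hK0 : Tendsto K atTop (nhds 0))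
    (hKint : IntegrableOn K (Ioi 0))
    (Kcos Ksin : ℝ → ℝ)
    (hKcos : ∀ ω > 0, Tendsto (fun A => ∫ t in (0:ℝ)..A, K t * Real.cos (ω * t))
      atTop (nhds (Kcos ω)))
    (hKsin : ∀ ω > 0, Tendsto (fun A => ∫ t in (0:ℝ)..A, K t * Real.sin (ω * t))
      atTop (nhds (Ksin ω)))
    (hKcospos : ∀ ω > 0, 0 < Kcos ω)
    (m lam β γ : ℝ) (hm : 0 < m) (hlam : 0 < lam) (hβ : 0 < β) (hγ : 0 < γ)
    (r11 : ℝ → ℝ)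
    (hr11 : ∀ ω > 0, r11 ω =
      2 * (lam + β * Kcos ω) /
        ((γ - m * ω ^ 2 + β * ω * Ksin ω) ^ 2 + ω ^ 2 * (lam + β * Kcos ω) ^ 2)) :
    ∃ c > 0, Tendsto
      (fun t => (1 / t) * ∫ ω in Ioi (0:ℝ), (1 - Real.cos (t * ω)) / ω ^ 2 * r11 ω)
      atTop (nhds c) :=
  msd_diffusive_integrable_kernel_general K hKpos hKint Kcos Ksin hKcos hKsin hKcospos m lam β γ hm
    hlam hβ hγ r11 hr11
end

section
/- Let K : ℝ → ℝ be even with K restricted to (0,∞) locally integrable, positive, eventually decreasing, tending to 0 at ∞, and satisfying one of: (a) K is integrable on (0,∞); or (b) t·K(t) → c₁ ∈ (0,∞) as t → ∞; or (c) t^α·K(t) → c_α ∈ (0,∞) for some α ∈ (0,1). Let 𝒦cos : (0,∞) → ℝ satisfy ∫₀^A K(t)cos(ωt)dt → 𝒦cos(ω) as A → ∞ for every ω > 0. Then for every Schwartz function φ : ℝ → ℂ, ∫_ℝ K(|t|)·φ̂(t) dt = 2·∫_ℝ 𝒦cos(|ω|)·φ(ω) dω, where φ̂(ω) = ∫_ℝ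 φ(t) e^{−itω} dt. In other words, the Fourier transform of K in the sense of tempered distributions is the locally integrable function 2𝒦cos. -/
/-!
For `A ≥ 0`, Fubini and the evenness of `t ↦ K |t|` give
`∫_{-A}^{A} K(|t|) φ̂(t) dt = ∫ φ(ω) · 2 ∫₀^A K(t) cos(ωt) dt dω`; let `A → ∞` on both sides.
The left side tends to the full integral because `K(|t|) / (1 + t²)` is integrable and
`φ̂(t) = O(1 / (1 + t²))`. On the right, the partial cosine integrals converge to `𝒦cos(|ω|)`
for `ω ≠ 0` and are bounded uniformly in `A` by `C (1 + |ω|^(-β))` with `β < 1`, which is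
integrable against `φ`, so dominated convergence applies. For the bound, split at
`B = max T ω⁻¹`: up to `B` use `∫₀^B K`, controlled by the decay hypothesis; beyond `B` use the
second mean value estimate `|∫_B^A K(t) cos(ωt) dt| ≤ 2 K(B) / ω` for decreasing `K ≥ 0`,
obtained by writing `K` as a superposition of indicators of intervals (layer cake).
-/

open MeasureTheory Filter Set Real Topology
open scoped FourierTransform SchwartzMap

theorem abs_setIntegral_Ioc_cos_mul_le {a b ω : ℝ} (hω : 0 < ω) :
    |∫ t in Ioc a b, cos (ω * t)| ≤ 2 / ω := by
  rcases le_or_gt a b with hab | hba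
  · rw [← intervalIntegral.integral_of_le hab, intervalIntegral.integral_comp_mul_left
      (fun x => cos x) hω.ne', integral_cos, smul_eq_mul, abs_mul, abs_inv, abs_of_pos hω,
      inv_mul_eq_div]
    gcongr
    calc |sin (ω * b) - sin (ω * a)| ≤ |sin (ω * b)| + |sin (ω * a)| := abs_sub _ _
      _ ≤ 2 := by linarith [abs_sin_le_one (ω * b), abs_sin_le_one (ω * a)]
  · rw [Ioc_eq_empty_of_le hba.le, setIntegral_empty, abs_zero]
    positivity

theorem Set.OrdConnected.ae_eq_Ioc {E : Set ℝ} (hE : E.OrdConnected) (hne : E.Nonempty)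
    (hb : BddBelow E) (ha : BddAbove E) : E =ᵐ[volume] Ioc (sInf E) (sSup E) := by
  have hconn : IsConnected E := ⟨hne, isPreconnected_iff_ordConnected.mpr hE⟩
  exact ((subset_Icc_csInf_csSup hb ha).eventuallyLE.trans Ioc_ae_eq_Icc.symm.le).antisymm
    (Ioo_ae_eq_Ioc.symm.le.trans (hconn.Ioo_csInf_csSup_subset hb ha).eventuallyLE)

theorem abs_setIntegral_cos_mul_le_of_ordConnected {E : Set ℝ} {ω : ℝ} (hω : 0 < ω)
    (hE : E.OrdConnected) (hb : BddBelow E) (ha : BddAbove E) :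
    |∫ t in E, cos (ω * t)| ≤ 2 / ω := by
  rcases E.eq_empty_or_nonempty with rfl | hne
  · rw [setIntegral_empty, abs_zero]
    positivity
  · rw [setIntegral_congr_set (hE.ae_eq_Ioc hne hb ha)]
    exact abs_setIntegral_Ioc_cos_mul_le hω

theorem integral_mul_eq_integral_setIntegral_le {α : Type*} [MeasurableSpace α]
    {μ : Measure α} [SFinite μ] {h g : α → ℝ} {M : ℝ} (hh : Measurable h)
    (h0 : ∀ x, 0 ≤ h x) (hM : ∀ x, h x ≤ M) (hg : Integrable g μ) :
    ∫ x, h x * g x ∂μ = ∫ s in Ioc 0 M, ∫ x in {x | s ≤ h x}, g x ∂μ := by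
  set F : ℝ → α → ℝ := fun s x => {p : ℝ × α | p.1 ≤ h p.2}.indicator (fun p => g p.2) (s, x)
  have hFmeas : MeasurableSet {p : ℝ × α | p.1 ≤ h p.2} :=
    measurableSet_le measurable_fst (hh.comp measurable_snd)
  have hFint : Integrable (Function.uncurry F) ((volume.restrict (Ioc 0 M)).prod μ) := by
    have : Integrable (fun p : ℝ × α => (1 : ℝ) * g p.2) ((volume.restrict (Ioc 0 M)).prod μ) :=
      (integrable_const 1).mul_prod hg
    exact (this.indicator hFmeas).congr (ae_of_all _ fun p => by simp [F, Function.uncurry])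
  have hinner_s : ∀ x, ∫ s in Ioc 0 M, F s x = h x * g x := fun x => by
    have : (fun s => F s x) = (Iic (h x)).indicator (fun _ => g x) := by
      ext s; simp [F, indicator]
    rw [this, integral_indicator_const _ measurableSet_Iic, measureReal_restrict_apply
      measurableSet_Iic, Iic_inter_Ioc_of_le (hM x), Real.volume_real_Ioc_of_le (h0 x),
      sub_zero, smul_eq_mul]
  have hinner_x : ∀ s, ∫ x, F s x ∂μ = ∫ x in {x | s ≤ h x}, g x ∂μ := fun s => by
    rw [← integral_indicator (measurableSet_le measurable_const hh)]
    rfl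
  simp_rw [← hinner_s, ← hinner_x]
  exact (integral_integral_swap hFint).symm

theorem abs_setIntegral_Ioc_mul_cos_le_of_antitoneOn {f : ℝ → ℝ} {a b ω : ℝ} (hab : a ≤ b)
    (hω : 0 < ω) (hf : AntitoneOn f (Icc a b)) (hfb : 0 ≤ f b) :
    |∫ t in Ioc a b, f t * cos (ω * t)| ≤ 2 * f a / ω := by
  set F : ℝ → ℝ := fun t => f (projIcc a b hab t) - f b
  have hF : Antitone F := fun x y hxy =>
    sub_le_sub_right (hf (projIcc a b hab x).2 (projIcc a b hab y).2 (monotone_projIcc hab hxy)) _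
  have hF0 : ∀ t, 0 ≤ F t := fun t =>
    sub_nonneg.2 (hf (projIcc a b hab t).2 ⟨hab, le_rfl⟩ (projIcc a b hab t).2.2)
  have hFa : ∀ t, F t ≤ f a - f b := fun t =>
    sub_le_sub_right (hf ⟨le_rfl, hab⟩ (projIcc a b hab t).2 (projIcc a b hab t).2.1) _
  have hcos : IntegrableOn (fun t => cos (ω * t)) (Ioc a b) :=
    (continuous_cos.comp (continuous_const_mul ω)).integrableOn_Ioc
  -- the superlevel sets of the antitone `F` are intervals, on which `∫ cos (ω t)` is `≤ 2 / ω`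
  have hlayer : |∫ t in Ioc a b, F t * cos (ω * t)| ≤ 2 / ω * (f a - f b) := by
    rw [integral_mul_eq_integral_setIntegral_le hF.measurable hF0 hFa hcos]
    have hlevel : ∀ s, ‖∫ t in {t | s ≤ F t}, cos (ω * t) ∂volume.restrict (Ioc a b)‖ ≤ 2 / ω :=
      fun s => by
        rw [Measure.restrict_restrict (measurableSet_le measurable_const hF.measurable),
          Real.norm_eq_abs]
        refine abs_setIntegral_cos_mul_le_of_ordConnected hω ?_
          (bddBelow_Ioc.mono inter_subset_right) (bddAbove_Ioc.mono inter_subset_right)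
        exact (IsLowerSet.ordConnected fun x y hyx hx => le_trans hx (hF hyx)).inter
          ordConnected_Ioc
    have := norm_setIntegral_le_of_norm_le_const (s := Ioc 0 (f a - f b)) (μ := volume)
      measure_Ioc_lt_top fun s _ => hlevel s
    rwa [Real.volume_real_Ioc_of_le ((hF0 a).trans (hFa a)), sub_zero] at this
  have hsplit : ∫ t in Ioc a b, f t * cos (ω * t) =
      (∫ t in Ioc a b, F t * cos (ω * t)) + f b * ∫ t in Ioc a b, cos (ω * t) := by
    have hFcos : IntegrableOn (fun t => F t * cos (ω * t)) (Ioc a b) :=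
      hcos.bdd_mul hF.measurable.aestronglyMeasurable
        (ae_of_all _ fun t => (abs_of_nonneg (hF0 t)).trans_le (hFa t))
    rw [← integral_const_mul, ← integral_add hFcos (hcos.const_mul _)]
    refine setIntegral_congr_fun measurableSet_Ioc fun t ht => ?_
    simp only [F, projIcc_of_mem hab (Ioc_subset_Icc_self ht)]
    ring
  calc |∫ t in Ioc a b, f t * cos (ω * t)|
      ≤ 2 / ω * (f a - f b) + f b * (2 / ω) := by
        rw [hsplit]
        refine (abs_add_le _ _).trans (add_le_add hlayer ?_)
        rw [abs_mul, abs_of_nonneg hfb]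
        exact mul_le_mul_of_nonneg_left (abs_setIntegral_Ioc_cos_mul_le hω) hfb
    _ = 2 * f a / ω := by ring

section KernelBounds

variable {K : ℝ → ℝ}

theorem abs_setIntegral_mul_cos_le_setIntegral {s : Set ℝ} (hK : IntegrableOn K s)
    (hKnn : ∀ t ∈ s, 0 ≤ K t) (hs : MeasurableSet s) (ω : ℝ) :
    |∫ t in s, K t * cos (ω * t)| ≤ ∫ t in s, K t := by
  rw [← Real.norm_eq_abs]
  refine norm_integral_le_of_norm_le hK (ae_restrict_of_forall_mem hs fun t ht => ?_)
  rw [norm_mul, Real.norm_of_nonneg (hKnn t ht)]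
  exact mul_le_of_le_one_right (hKnn t ht) (abs_cos_le_one _)

theorem integrableOn_Ioc_zero_of_forall_pos {A : ℝ} (hKloc : ∀ A > 0, IntegrableOn K (Ioc 0 A)) :
    IntegrableOn K (Ioc 0 A) := by
  rcases le_or_gt A 0 with hA | hA
  · rw [Ioc_eq_empty_of_le hA]
    exact integrableOn_empty
  · exact hKloc A hA

theorem abs_intervalIntegral_mul_cos_le {T B A ω : ℝ}
    (hKloc : ∀ A > 0, IntegrableOn K (Ioc 0 A)) (hKnn : ∀ t > 0, 0 ≤ K t)
    (hanti : AntitoneOn K (Ici T)) (hTB : T ≤ B) (hB : 0 < B) (hA : 0 ≤ A) (hω : 0 < ω) :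
    |∫ t in 0..A, K t * cos (ω * t)| ≤ (∫ t in Ioc 0 B, K t) + 2 * K B / ω := by
  have hhead : ∀ A, |∫ t in Ioc 0 A, K t * cos (ω * t)| ≤ ∫ t in Ioc 0 A, K t := fun A =>
    abs_setIntegral_mul_cos_le_setIntegral (integrableOn_Ioc_zero_of_forall_pos hKloc)
      (fun t ht => hKnn t ht.1) measurableSet_Ioc ω
  rcases le_or_gt A B with hAB | hBA
  · rw [intervalIntegral.integral_of_le hA]
    calc |∫ t in Ioc 0 A, K t * cos (ω * t)| ≤ ∫ t in Ioc 0 A, K t := hhead A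
      _ ≤ ∫ t in Ioc 0 B, K t :=
        setIntegral_mono_set (integrableOn_Ioc_zero_of_forall_pos hKloc)
          (ae_restrict_of_forall_mem measurableSet_Ioc fun t ht => hKnn t ht.1)
          (Ioc_subset_Ioc_right hAB).eventuallyLE
      _ ≤ _ := le_add_of_nonneg_right (by have := hKnn B hB; positivity)
  · have hKcos : ∀ {a b}, 0 ≤ a → a ≤ b →
        IntervalIntegrable (fun t => K t * cos (ω * t)) volume a b := fun ha hab =>
      ((intervalIntegrable_iff_integrableOn_Ioc_of_le hab).2
        ((integrableOn_Ioc_zero_of_forall_pos hKloc).mono_set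
          (Ioc_subset_Ioc_left ha))).mul_continuousOn
        (continuous_cos.comp (continuous_const_mul ω)).continuousOn
    rw [← intervalIntegral.integral_add_adjacent_intervals (hKcos le_rfl hB.le)
      (hKcos hB.le hBA.le), intervalIntegral.integral_of_le hB.le,
      intervalIntegral.integral_of_le hBA.le]
    exact (abs_add_le _ _).trans (add_le_add (hhead B)
      (abs_setIntegral_Ioc_mul_cos_le_of_antitoneOn hBA.le hω
        (hanti.mono fun t ht => hTB.trans ht.1) (hKnn A (hB.trans hBA))))

theorem setIntegral_Ioc_zero_le_of_le_mul_rpow {T B c α : ℝ}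
    (hKloc : ∀ A > 0, IntegrableOn K (Ioc 0 A)) (hT : 0 < T) (hTB : T ≤ B) (hc : 0 ≤ c)
    (hα : α < 1) (hdom : ∀ t ≥ T, K t ≤ c * t ^ (-α)) :
    ∫ t in Ioc 0 B, K t ≤ (∫ t in Ioc 0 T, K t) + c / (1 - α) * B ^ (1 - α) := by
  have hpow : IntegrableOn (fun t => c * t ^ (-α)) (Ioc T B) :=
    ((intervalIntegral.intervalIntegrable_rpow' (by linarith)).const_mul c).1
  rw [← Ioc_union_Ioc_eq_Ioc hT.le hTB, setIntegral_union (Ioc_disjoint_Ioc_of_le le_rfl)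
    measurableSet_Ioc (hKloc T hT) ((hKloc B (hT.trans_le hTB)).mono_set
      (Ioc_subset_Ioc_left hT.le))]
  gcongr
  calc ∫ t in Ioc T B, K t ≤ ∫ t in Ioc T B, c * t ^ (-α) :=
        setIntegral_mono_on ((hKloc B (hT.trans_le hTB)).mono_set
          (Ioc_subset_Ioc_left hT.le)) hpow measurableSet_Ioc fun t ht => hdom t ht.1.le
    _ = c / (1 - α) * (B ^ (1 - α) - T ^ (1 - α)) := by
        rw [← intervalIntegral.integral_of_le hTB, intervalIntegral.integral_const_mul,
          integral_rpow (Or.inl (by linarith)), show -α + 1 = 1 - α by ring]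
        ring
    _ ≤ c / (1 - α) * B ^ (1 - α) := by
        have : 0 ≤ T ^ (1 - α) := rpow_nonneg hT.le _
        have : 0 ≤ c / (1 - α) := div_nonneg hc (by linarith)
        nlinarith

theorem exists_abs_intervalIntegral_mul_cos_le_of_le_mul_rpow {T c α : ℝ}
    (hKloc : ∀ A > 0, IntegrableOn K (Ioc 0 A)) (hKnn : ∀ t > 0, 0 ≤ K t) (hT : 0 < T)
    (hanti : AntitoneOn K (Ici T)) (hα0 : 0 ≤ α) (hα1 : α < 1)
    (hdom : ∀ t ≥ T, K t ≤ c * t ^ (-α)) :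
    ∃ C, ∀ ω > 0, ∀ A ≥ 0, |∫ t in 0..A, K t * cos (ω * t)| ≤ C * (1 + ω ^ (-(1 - α))) := by
  have hc : 0 ≤ c := nonneg_of_mul_nonneg_left ((hKnn T hT).trans (hdom T le_rfl))
    (rpow_pos_of_pos hT _)
  have hC₀ : 0 ≤ ∫ t in Ioc 0 T, K t :=
    setIntegral_nonneg measurableSet_Ioc fun t ht => hKnn t ht.1
  have hq : 0 ≤ c / (1 - α) := div_nonneg hc (by linarith)
  refine ⟨(∫ t in Ioc 0 T, K t) + c / (1 - α) * T ^ (1 - α) + c / (1 - α) + 2 * c,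
    fun ω hω A hA => ?_⟩
  -- the cutoff `B = max T ω⁻¹` balances the two terms of `abs_intervalIntegral_mul_cos_le`
  set B := max T ω⁻¹
  have hTB : T ≤ B := le_max_left _ _
  have hB : 0 < B := hT.trans_le hTB
  have hx : 0 ≤ ω ^ (-(1 - α)) := rpow_nonneg hω.le _
  have hBpow : B ^ (1 - α) ≤ T ^ (1 - α) + ω ^ (-(1 - α)) := by
    rw [rpow_neg hω.le, ← inv_rpow hω.le]
    rcases max_choice T ω⁻¹ with h | h <;> rw [show B = _ from h]
    · linarith [rpow_nonneg (inv_nonneg.2 hω.le) (1 - α)]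
    · linarith [rpow_nonneg hT.le (1 - α)]
  have hKB : 2 * K B / ω ≤ 2 * c * ω ^ (-(1 - α)) := by
    have : B ^ (-α) ≤ ω⁻¹ ^ (-α) := rpow_le_rpow_of_nonpos (by positivity) (le_max_right _ _)
      (by linarith)
    rw [inv_rpow hω.le, rpow_neg hω.le, inv_inv] at this
    rw [show -(1 - α) = α - 1 by ring, rpow_sub hω, rpow_one, div_le_iff₀ hω]
    have := (hdom B hTB).trans (mul_le_mul_of_nonneg_left this hc)
    field_simp
    nlinarith
  calc |∫ t in 0..A, K t * cos (ω * t)|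
      ≤ (∫ t in Ioc 0 B, K t) + 2 * K B / ω :=
        abs_intervalIntegral_mul_cos_le hKloc hKnn hanti hTB hB hA hω
    _ ≤ (∫ t in Ioc 0 T, K t) + c / (1 - α) * (T ^ (1 - α) + ω ^ (-(1 - α)))
          + 2 * c * ω ^ (-(1 - α)) := by
        gcongr
        exact (setIntegral_Ioc_zero_le_of_le_mul_rpow hKloc hT hTB hc hα1 hdom).trans
          (by gcongr)
    _ ≤ _ := by nlinarith [mul_nonneg hq hx, mul_nonneg hC₀ hx,
          mul_nonneg (mul_nonneg hq (rpow_nonneg hT.le (1 - α))) hx]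

theorem abs_intervalIntegral_mul_cos_le_integral (hK : IntegrableOn K (Ioi 0))
    (hKnn : ∀ t > 0, 0 ≤ K t) {A : ℝ} (hA : 0 ≤ A) (ω : ℝ) :
    |∫ t in 0..A, K t * cos (ω * t)| ≤ ∫ t in Ioi 0, K t := by
  rw [intervalIntegral.integral_of_le hA]
  exact (abs_setIntegral_mul_cos_le_setIntegral (hK.mono_set Ioc_subset_Ioi_self)
    (fun t ht => hKnn t ht.1) measurableSet_Ioc ω).trans
    (setIntegral_mono_set hK (ae_restrict_of_forall_mem measurableSet_Ioi hKnn)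
      Ioc_subset_Ioi_self.eventuallyLE)

theorem exists_eventually_le_mul_rpow_neg {α L : ℝ}
    (h : Tendsto (fun t => t ^ α * K t) atTop (𝓝 L)) :
    ∃ c, ∀ᶠ t in atTop, K t ≤ c * t ^ (-α) := by
  refine ⟨L + 1, ((h.eventually (gt_mem_nhds (lt_add_one L))).and
    (eventually_gt_atTop 0)).mono fun t ⟨hLt, ht⟩ => ?_⟩
  rw [rpow_neg ht.le, ← div_eq_mul_inv, le_div_iff₀ (rpow_pos_of_pos ht α)]
  linarith

theorem tendsto_rpow_mul_of_tendsto_mul {β L : ℝ} (hβ : β < 1)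
    (h : Tendsto (fun t => t * K t) atTop (𝓝 L)) :
    Tendsto (fun t => t ^ β * K t) atTop (𝓝 0) := by
  have := (tendsto_rpow_neg_atTop (sub_pos.2 hβ)).mul h
  rw [zero_mul] at this
  refine this.congr' ((eventually_gt_atTop 0).mono fun t ht => ?_)
  rw [← mul_assoc, ← rpow_add_one ht.ne']
  ring_nf

theorem exists_abs_intervalIntegral_mul_cos_le_mul_one_add_rpow
    (hKloc : ∀ A > 0, IntegrableOn K (Ioc 0 A)) (hKnn : ∀ t > 0, 0 ≤ K t)
    (hKdec : ∃ T > 0, AntitoneOn K (Ici T))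
    (hKcase : IntegrableOn K (Ioi 0) ∨
      (∃ c₁ > 0, Tendsto (fun t => t * K t) atTop (𝓝 c₁)) ∨
      (∃ α ∈ Ioo (0 : ℝ) 1, ∃ cα > 0, Tendsto (fun t => t ^ α * K t) atTop (𝓝 cα))) :
    ∃ C β : ℝ, 0 ≤ β ∧ β < 1 ∧
      ∀ ω > 0, ∀ A ≥ 0, |∫ t in 0..A, K t * cos (ω * t)| ≤ C * (1 + ω ^ (-β)) := by
  obtain ⟨T, hT, hanti⟩ := hKdec
  rcases hKcase with hint | hcase
  · refine ⟨∫ t in Ioi 0, K t, 0, le_rfl, zero_lt_one, fun ω _ A hA => ?_⟩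
    have := setIntegral_nonneg (μ := volume) measurableSet_Ioi hKnn
    rw [neg_zero, rpow_zero]
    linarith [abs_intervalIntegral_mul_cos_le_integral hint hKnn hA ω]
  obtain ⟨α, hα0, hα1, L, hlim⟩ : ∃ α : ℝ, 0 < α ∧ α < 1 ∧ ∃ L,
      Tendsto (fun t => t ^ α * K t) atTop (𝓝 L) := by
    rcases hcase with ⟨c₁, -, h⟩ | ⟨α, hα, cα, -, h⟩
    -- `K = O(t⁻¹)` has a logarithmically growing integral; the weaker `O(t^(-1/2))` suffices
    · exact ⟨1 / 2, by norm_num, by norm_num, 0,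
        tendsto_rpow_mul_of_tendsto_mul (β := 1 / 2) (by norm_num) h⟩
    · exact ⟨α, hα.1, hα.2, cα, h⟩
  obtain ⟨c, hc⟩ := exists_eventually_le_mul_rpow_neg hlim
  obtain ⟨T', hT'⟩ := eventually_atTop.1 hc
  obtain ⟨C, hC⟩ := exists_abs_intervalIntegral_mul_cos_le_of_le_mul_rpow hKloc hKnn
    (lt_max_of_lt_left hT) (hanti.mono (Ici_subset_Ici.2 (le_max_left T T'))) hα0.le hα1
    fun t ht => hT' t ((le_max_right _ _).trans ht)
  exact ⟨C, 1 - α, by linarith, by linarith, hC⟩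

theorem integrableOn_Ioi_div_one_add_sq {T : ℝ} (hT : 0 ≤ T)
    (hloc : IntegrableOn K (Ioc 0 T)) (hanti : AntitoneOn K (Ici T))
    (hnn : ∀ t > T, 0 ≤ K t) : IntegrableOn (fun t => K t / (1 + t ^ 2)) (Ioi 0) := by
  have hc : Continuous fun t : ℝ => (1 + t ^ 2)⁻¹ :=
    (continuous_const.add (continuous_pow 2)).inv₀ fun t => (by positivity : 0 < 1 + t ^ 2).ne'
  simp_rw [div_eq_mul_inv]
  rw [← Ioc_union_Ioi_eq_Ioi hT]
  refine IntegrableOn.union ?_ ?_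
  · refine hloc.mul_bdd (c := 1) hc.aestronglyMeasurable (ae_of_all _ fun t => ?_)
    rw [Real.norm_of_nonneg (by positivity)]
    exact inv_le_one_of_one_le₀ (le_add_of_nonneg_right (sq_nonneg t))
  · refine ((integrable_inv_one_add_sq.const_mul (K T)).integrableOn).mono' ?_
      (ae_restrict_of_forall_mem measurableSet_Ioi fun t ht => ?_)
    · exact ((aemeasurable_restrict_of_antitoneOn measurableSet_Ioi
        (hanti.mono Ioi_subset_Ici_self)).aestronglyMeasurable).mul hc.aestronglyMeasurable
    · have hTt : T ≤ t := le_of_lt ht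
      rw [Real.norm_of_nonneg (mul_nonneg (hnn t ht) (by positivity))]
      exact mul_le_mul_of_nonneg_right (hanti self_mem_Ici hTt hTt) (by positivity)

end KernelBounds

section EvenExtension
variable {E : Type*} [NormedAddCommGroup E]

theorem integrable_comp_abs {f : ℝ → E} (hf : IntegrableOn f (Ioi 0)) :
    Integrable fun x => f |x| := by
  have h := (integrable_indicator_iff measurableSet_Ioi).2 hf
  refine (h.add h.comp_neg).congr ((Measure.ae_ne volume 0).mono fun x hx => ?_)
  rcases hx.lt_or_gt with hx | hx
  · simp [indicator, hx, hx.not_gt, abs_of_neg hx]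
  · simp [indicator, hx, hx.le, abs_of_pos hx]

theorem IntervalIntegrable.comp_abs {f : ℝ → E} {A : ℝ} (hA : 0 ≤ A)
    (hf : IntegrableOn f (Ioc 0 A)) : IntervalIntegrable (fun t => f |t|) volume (-A) A := by
  have hpos : IntervalIntegrable (fun t => f |t|) volume 0 A :=
    (intervalIntegrable_iff_integrableOn_Ioc_of_le hA).2
      (hf.congr_fun (fun t ht => by rw [abs_of_pos ht.1]) measurableSet_Ioc)
  have hneg := (IntervalIntegrable.iff_comp_neg (by simp)).1 hpos
  simp only [abs_neg, neg_zero] at hneg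
  exact hneg.symm.trans hpos

end EvenExtension

section FourierIntegral

open Complex

theorem intervalIntegral_comp_abs_mul_cexp_neg {f : ℝ → ℝ} {A : ℝ} (hA : 0 ≤ A)
    (hf : IntegrableOn f (Ioc 0 A)) (ω : ℝ) :
    ∫ t in -A..A, (f |t| : ℂ) * cexp (-(I * ω * t)) =
      2 * ↑(∫ t in 0..A, f t * Real.cos (ω * t)) := by
  set F : ℝ → ℂ := fun t => (f |t| : ℂ) * cexp (-(I * ω * t))
  have hF : IntervalIntegrable F volume (-A) A :=
    (IntervalIntegrable.comp_abs hA (f := fun t => (f t : ℂ)) hf.ofReal).mul_continuousOn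
      (by fun_prop)
  have hF₁ : IntervalIntegrable F volume (-A) 0 :=
    hF.mono_set (uIcc_subset_uIcc left_mem_uIcc (by simp [hA]))
  have hF₂ : IntervalIntegrable F volume 0 A :=
    hF.mono_set (uIcc_subset_uIcc (by simp [hA]) right_mem_uIcc)
  have hF₁' : IntervalIntegrable (fun t => F (-t)) volume 0 A := by
    simpa using ((IntervalIntegrable.iff_comp_neg (by simp)).1 hF₁).symm
  rw [← intervalIntegral.integral_add_adjacent_intervals hF₁ hF₂, ← neg_zero,
    ← intervalIntegral.integral_comp_neg, neg_zero, ← intervalIntegral.integral_add hF₁' hF₂,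
    ← intervalIntegral.integral_ofReal, ← intervalIntegral.integral_const_mul]
  refine intervalIntegral.integral_congr fun t ht => ?_
  rw [uIcc_of_le hA] at ht
  simp only [F, abs_neg, abs_of_nonneg ht.1]
  push_cast
  rw [show -(I * ω * -t) = (ω : ℂ) * t * I by ring, show -(I * ω * t) = -((ω : ℂ) * t) * I by ring]
  linear_combination (-(f t : ℂ)) * two_cos (ω * t)

theorem integral_mul_integral_mul_cexp_swap {μ ν : Measure ℝ} [SFinite μ] [SFinite ν]
    {g f : ℝ → ℂ} (hg : Integrable g μ) (hf : Integrable f ν) :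
    ∫ t, g t * ∫ s, f s * cexp (-(I * s * t)) ∂ν ∂μ =
      ∫ s, f s * ∫ t, g t * cexp (-(I * s * t)) ∂μ ∂ν := by
  have hint : Integrable (fun p : ℝ × ℝ => g p.1 * (f p.2 * cexp (-(I * p.2 * p.1))))
      (μ.prod ν) := by
    refine (hg.mul_prod hf).mono ?_ (ae_of_all _ fun p => ?_)
    · exact hg.aestronglyMeasurable.comp_fst.mul (hf.aestronglyMeasurable.comp_snd.mul
        (Continuous.aestronglyMeasurable (by fun_prop)))
    · simp [norm_exp]
  simp_rw [← integral_const_mul]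
  rw [integral_integral_swap hint]
  congr 1 with s
  congr 1 with t
  ring

theorem intervalIntegral_comp_abs_mul_integral_mul_cexp {f : ℝ → ℝ} {φ : ℝ → ℂ} {A : ℝ}
    (hA : 0 ≤ A) (hf : IntegrableOn f (Ioc 0 A)) (hφ : Integrable φ) :
    ∫ t in -A..A, (f |t| : ℂ) * ∫ s, φ s * cexp (-(I * s * t)) =
      ∫ ω, φ ω * ↑(2 * ∫ t in 0..A, f t * Real.cos (ω * t)) := by
  rw [intervalIntegral.integral_of_le (neg_le_self hA), integral_mul_integral_mul_cexp_swap
    (g := fun t => (f |t| : ℂ)) (IntervalIntegrable.comp_abs hA hf).1.ofReal hφ]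
  congr 1 with ω
  rw [← intervalIntegral.integral_of_le (neg_le_self hA),
    intervalIntegral_comp_abs_mul_cexp_neg hA hf]
  push_cast
  ring

theorem integral_mul_cexp_neg_eq_fourier (f : ℝ → ℂ) (t : ℝ) :
    ∫ s, f s * cexp (-(I * s * t)) = 𝓕 f (t / (2 * π)) := by
  rw [Real.fourier_real_eq_integral_exp_smul]
  congr 1 with s
  rw [smul_eq_mul, mul_comm]
  congr 2
  push_cast
  field_simp

theorem SchwartzMap.exists_one_add_sq_mul_norm_le {F : Type*} [NormedAddCommGroup F]
    [NormedSpace ℝ F] (ψ : 𝓢(ℝ, F)) : ∃ D, ∀ x, (1 + x ^ 2) * ‖ψ x‖ ≤ D := by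
  obtain ⟨C₀, -, h₀⟩ := ψ.decay 0 0
  obtain ⟨C₂, -, h₂⟩ := ψ.decay 2 0
  refine ⟨C₀ + C₂, fun x => ?_⟩
  have h₀ := h₀ x
  have h₂ := h₂ x
  simp only [pow_zero, one_mul, norm_iteratedFDeriv_zero, Real.norm_eq_abs, sq_abs] at h₀ h₂
  linarith

theorem integrable_comp_abs_mul_integral_mul_cexp {K : ℝ → ℝ}
    (hK : Integrable fun t => K |t| / (1 + t ^ 2)) (φ : 𝓢(ℝ, ℂ)) :
    Integrable fun t => (K |t| : ℂ) * ∫ s, φ s * cexp (-(I * s * t)) := by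
  obtain ⟨D, hD⟩ := (𝓕 φ).exists_one_add_sq_mul_norm_le
  have hscale : ∀ t : ℝ, 1 + t ^ 2 ≤ (2 * π) ^ 2 * (1 + (t / (2 * π)) ^ 2) := fun t => by
    have : 1 ≤ (2 * π) ^ 2 := by nlinarith [pi_gt_three]
    field_simp
    linarith
  have hbdd : ∀ t : ℝ, ‖((1 + t ^ 2 : ℝ) : ℂ) * 𝓕 φ (t / (2 * π))‖ ≤ (2 * π) ^ 2 * D :=
    fun t => by
      rw [norm_mul, Complex.norm_real, Real.norm_of_nonneg (by positivity)]
      exact (mul_le_mul_of_nonneg_right (hscale t) (norm_nonneg _)).trans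
        (by rw [mul_assoc]; exact mul_le_mul_of_nonneg_left (hD _) (by positivity))
  refine (hK.ofReal.mul_bdd (Continuous.aestronglyMeasurable (by fun_prop))
    (ae_of_all _ hbdd)).congr (ae_of_all _ fun t => ?_)
  have : ((1 + t ^ 2 : ℝ) : ℂ) ≠ 0 := ofReal_ne_zero.2 (by positivity)
  simp only [integral_mul_cexp_neg_eq_fourier, ← SchwartzMap.fourier_coe]
  rw [RCLike.ofReal_div, div_mul_eq_mul_div, mul_left_comm]
  exact mul_div_cancel_left₀ _ this

end FourierIntegral

theorem continuous_intervalIntegral_mul_cos {f : ℝ → ℝ} {A : ℝ} (hA : 0 ≤ A)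
    (hf : IntegrableOn f (Ioc 0 A)) : Continuous fun ω => ∫ t in 0..A, f t * cos (ω * t) := by
  simp_rw [intervalIntegral.integral_of_le hA]
  refine continuous_of_dominated (bound := fun t => |f t|)
    (fun ω => hf.aestronglyMeasurable.mul (Continuous.aestronglyMeasurable (by fun_prop)))
    (fun ω => ae_of_all _ fun t => ?_) hf.abs (ae_of_all _ fun t => by fun_prop)
  rw [Real.norm_eq_abs, abs_mul]
  exact mul_le_of_le_one_right (abs_nonneg _) (abs_cos_le_one _)

theorem integrable_abs_rpow_neg_mul {g : ℝ → ℝ} {β M : ℝ} (hβ0 : 0 ≤ β) (hβ1 : β < 1)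
    (hg : Integrable g) (hgM : ∀ x, |g x| ≤ M) : Integrable fun x => |x| ^ (-β) * g x := by
  have hsing : IntegrableOn (fun x : ℝ => |x| ^ (-β)) (Ioc (-1) 1) :=
    (IntervalIntegrable.comp_abs zero_le_one
      (intervalIntegral.intervalIntegrable_rpow' (by linarith)).1).1
  refine Integrable.mono' ((((integrable_indicator_iff measurableSet_Ioc).2 hsing).const_mul
      M).add hg.abs) ((by fun_prop : Measurable fun x : ℝ => |x| ^ (-β)).aestronglyMeasurable.mul
      hg.aestronglyMeasurable) (ae_of_all _ fun x => ?_)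
  have hpow := rpow_nonneg (abs_nonneg x) (-β)
  have hM : 0 ≤ M := (abs_nonneg _).trans (hgM x)
  rw [Real.norm_eq_abs, abs_mul, abs_of_nonneg hpow, Pi.add_apply]
  by_cases hx : x ∈ Ioc (-1) 1
  · rw [indicator_of_mem hx]
    nlinarith [mul_le_mul_of_nonneg_left (hgM x) hpow, abs_nonneg (g x)]
  · have h1 : 1 ≤ |x| := by
      by_contra h
      exact hx ⟨(abs_lt.1 (not_le.1 h)).1, (abs_lt.1 (not_le.1 h)).2.le⟩
    rw [indicator_of_notMem hx, mul_zero, zero_add]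
    exact mul_le_of_le_one_left (abs_nonneg _) (rpow_le_one_of_one_le_of_nonpos h1 (by linarith))

theorem tendsto_integral_mul_of_abs_le_mul_one_add_rpow {ι : Type*} {l : Filter ι}
    [l.IsCountablyGenerated] {f : ℝ → ℂ} {G : ι → ℝ → ℝ} {L : ℝ → ℝ} {C β M : ℝ}
    (hβ0 : 0 ≤ β) (hβ1 : β < 1) (hf : Integrable f) (hfM : ∀ x, ‖f x‖ ≤ M)
    (hG : ∀ᶠ i in l, AEStronglyMeasurable (G i))
    (hGC : ∀ᶠ i in l, ∀ ω ≠ 0, |G i ω| ≤ C * (1 + |ω| ^ (-β)))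
    (hlim : ∀ ω ≠ 0, Tendsto (fun i => G i ω) l (𝓝 (L ω))) :
    Tendsto (fun i => ∫ ω, f ω * G i ω) l (𝓝 (∫ ω, f ω * L ω)) := by
  refine tendsto_integral_filter_of_dominated_convergence
    (fun ω => C * (‖f ω‖ + |ω| ^ (-β) * ‖f ω‖))
    (hG.mono fun i hi => hf.aestronglyMeasurable.mul
      (Complex.continuous_ofReal.comp_aestronglyMeasurable hi))
    (hGC.mono fun i hi => (Measure.ae_ne volume 0).mono fun ω hω => ?_)
    ((hf.norm.add (integrable_abs_rpow_neg_mul hβ0 hβ1 hf.norm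
      fun x => (abs_norm _).trans_le (hfM x))).const_mul C)
    ((Measure.ae_ne volume 0).mono fun ω hω =>
      tendsto_const_nhds.mul (Complex.continuous_ofReal.tendsto _ |>.comp (hlim ω hω)))
  rw [norm_mul, Complex.norm_real, Real.norm_eq_abs]
  calc ‖f ω‖ * |G i ω| ≤ ‖f ω‖ * (C * (1 + |ω| ^ (-β))) :=
        mul_le_mul_of_nonneg_left (hi ω hω) (norm_nonneg _)
    _ = C * (‖f ω‖ + |ω| ^ (-β) * ‖f ω‖) := by ring

theorem cos_abs_mul (ω t : ℝ) : cos (|ω| * t) = cos (ω * t) := by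
  rcases abs_choice ω with h | h <;> simp [h]

theorem tendsto_integral_mul_two_mul_intervalIntegral_mul_cos {K Kcos : ℝ → ℝ} {C β : ℝ}
    (hKloc : ∀ A > 0, IntegrableOn K (Ioc 0 A)) (hβ0 : 0 ≤ β) (hβ1 : β < 1)
    (hbound : ∀ ω > 0, ∀ A ≥ 0, |∫ t in 0..A, K t * cos (ω * t)| ≤ C * (1 + ω ^ (-β)))
    (hKcos : ∀ ω > 0, Tendsto (fun A => ∫ t in 0..A, K t * cos (ω * t)) atTop (𝓝 (Kcos ω)))
    (φ : 𝓢(ℝ, ℂ)) :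
    Tendsto (fun A => ∫ ω, φ ω * ↑(2 * ∫ t in 0..A, K t * cos (ω * t))) atTop
      (𝓝 (∫ ω, φ ω * ↑(2 * Kcos |ω|))) :=
  tendsto_integral_mul_of_abs_le_mul_one_add_rpow (C := 2 * C) hβ0 hβ1 φ.integrable
    (φ.norm_le_seminorm ℝ)
    ((eventually_ge_atTop 0).mono fun A hA => (continuous_const.mul
      (continuous_intervalIntegral_mul_cos hA
        (integrableOn_Ioc_zero_of_forall_pos hKloc))).aestronglyMeasurable)
    ((eventually_ge_atTop 0).mono fun A hA ω hω => by
      rw [abs_mul, abs_two, mul_assoc]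
      simpa only [cos_abs_mul] using
        mul_le_mul_of_nonneg_left (hbound |ω| (abs_pos.2 hω) A hA) zero_le_two)
    fun ω hω => by
      simpa only [cos_abs_mul] using (hKcos |ω| (abs_pos.2 hω)).const_mul 2

theorem kernel_distributional_fourier_transform_general
    (K : ℝ → ℝ)
    (hKloc : ∀ A > 0, IntegrableOn K (Ioc 0 A))
    (hKpos : ∀ t > 0, 0 < K t)
    (hKdec : ∃ T > 0, AntitoneOn K (Ici T))
    (hKcase : IntegrableOn K (Ioi 0) ∨
      (∃ c₁ > 0, Tendsto (fun t => t * K t) atTop (nhds c₁)) ∨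
      (∃ α ∈ Set.Ioo (0:ℝ) 1, ∃ cα > 0,
        Tendsto (fun t => t ^ α * K t) atTop (nhds cα)))
    (Kcos : ℝ → ℝ)
    (hKcos : ∀ ω > 0, Tendsto (fun A => ∫ t in (0:ℝ)..A, K t * Real.cos (ω * t))
      atTop (nhds (Kcos ω))) :
    ∀ φ : SchwartzMap ℝ ℂ,
      ∫ t : ℝ, (K |t| : ℂ) *
          (∫ s : ℝ, φ s * Complex.exp (-(Complex.I * (s : ℂ) * (t : ℂ)))) =
        2 * ∫ ω : ℝ, (Kcos |ω| : ℂ) * φ ω := by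
  intro φ
  have hKnn : ∀ t > 0, 0 ≤ K t := fun t ht => (hKpos t ht).le
  obtain ⟨C, β, hβ0, hβ1, hbound⟩ :=
    exists_abs_intervalIntegral_mul_cos_le_mul_one_add_rpow hKloc hKnn hKdec hKcase
  obtain ⟨T, hT, hanti⟩ := hKdec
  have hmajorant : Integrable fun t => K |t| / (1 + t ^ 2) := by
    simpa only [sq_abs] using integrable_comp_abs (integrableOn_Ioi_div_one_add_sq hT.le
      (hKloc T hT) hanti fun t ht => hKnn t (hT.trans ht))
  have hLHS := intervalIntegral_tendsto_integral
    (integrable_comp_abs_mul_integral_mul_cexp hmajorant φ) tendsto_neg_atTop_atBot tendsto_id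
  have htrunc := (eventually_ge_atTop 0).mono fun A hA =>
    intervalIntegral_comp_abs_mul_integral_mul_cexp hA
      (integrableOn_Ioc_zero_of_forall_pos hKloc) φ.integrable
  have hRHS := tendsto_integral_mul_two_mul_intervalIntegral_mul_cos hKloc hβ0 hβ1 hbound hKcos φ
  rw [tendsto_nhds_unique (hLHS.congr' htrunc) hRHS, ← integral_const_mul]
  congr 1 with ω
  push_cast
  ring

/-- The Fourier transform of the even memory kernel `K` in the sense of
tempered distributions is the locally integrable function `2𝒦cos`:
for every Schwartz function `φ`, `∫ K(|t|) φ̂(t) dt = 2 ∫ 𝒦cos(|ω|) φ(ω) dω`. -/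
theorem kernel_distributional_fourier_transform
    (K : ℝ → ℝ) (hKeven : ∀ t, K (-t) = K t)
    (hKloc : ∀ A > 0, IntegrableOn K (Ioc 0 A))
    (hKpos : ∀ t > 0, 0 < K t)
    (hKdec : ∃ T > 0, AntitoneOn K (Ici T))
    (hK0 : Tendsto K atTop (nhds 0))
    (hKcase : IntegrableOn K (Ioi 0) ∨
      (∃ c₁ > 0, Tendsto (fun t => t * K t) atTop (nhds c₁)) ∨
      (∃ α ∈ Set.Ioo (0:ℝ) 1, ∃ cα > 0,
        Tendsto (fun t => t ^ α * K t) atTop (nhds cα)))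
    (Kcos : ℝ → ℝ)
    (hKcos : ∀ ω > 0, Tendsto (fun A => ∫ t in (0:ℝ)..A, K t * Real.cos (ω * t))
      atTop (nhds (Kcos ω))) :
    ∀ φ : SchwartzMap ℝ ℂ,
      ∫ t : ℝ, (K |t| : ℂ) *
          (∫ s : ℝ, φ s * Complex.exp (-(Complex.I * (s : ℂ) * (t : ℂ)))) =
        2 * ∫ ω : ℝ, (Kcos |ω| : ℂ) * φ ω :=
  kernel_distributional_fourier_transform_general K hKloc hKpos hKdec hKcase Kcos hKcos
end

section
/- Let K : (0,∞) → ℝ be locally integrable, positive, eventually decreasing, and suppose t·K(t) → c₁ for some c₁ ∈ (0,∞) as t → ∞ (in particular K(t) → 0). Let 𝒦cos, 𝒦sin : (0,∞) → ℝ satisfy ∫₀^A K(t)cos(ωt)dt → 𝒦cos(ω) and ∫₀^A K(t)sin(ωt)dt → 𝒦sin(ω) as A → ∞ for every ω > 0. Then, as ω → 0⁺, 𝒦cos(ω)/|log ω| → c₁ and 𝒦sin(ω) → c₁·π/2. -/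
/-!
Truncate each transform at a point `B` where the oscillating factor restarts as `sin (ω (t - B))`.
Beyond `B` the kernel is positive and decreasing, so the tail is an alternating integral bounded
by `π K(B) / ω`, which stays bounded because `t K(t) → c₁`.

For the cosine, `B = 3π / (2ω)`: the truncated integral differs from `∫₀^B K` by at most
`ω ∫₀^B t K(t) dt = O(1)`, while `∫₀^B K ∼ c₁ log B ∼ c₁ |log ω|`.

For the sine, `B = 2πN / ω`: writing `K(t) sin(ωt) = c₁ ω sinc(ωt) + (t K(t) - c₁) sin(ωt) / t`,
the truncated integral is `c₁ ∫₀^{2πN} sinc` up to `ω ∫₀^B |t K(t) - c₁| dt`, which tends to `0` by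
a Cesàro argument. Letting `N → ∞` and using the Dirichlet integral gives `c₁ π / 2`.
-/

open MeasureTheory Filter Set Real Topology Asymptotics

theorem integrableOn_exp_neg_mul_Ioi {x : ℝ} (hx : 0 < x) :
    IntegrableOn (fun s => exp (-(s * x))) (Ioi 0) := by
  simpa [mul_comm] using integrableOn_exp_mul_Ioi (neg_neg_iff_pos.2 hx) 0

theorem integral_exp_neg_mul_Ioi {x : ℝ} (hx : 0 < x) : ∫ s in Ioi 0, exp (-(s * x)) = x⁻¹ := by
  simpa [mul_comm] using integral_exp_mul_Ioi (neg_neg_iff_pos.2 hx) 0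

theorem integral_exp_neg_mul_mul_sin (s b : ℝ) :
    ∫ x in 0..b, exp (-(s * x)) * sin x
      = (1 - exp (-(s * b)) * (s * sin b + cos b)) / (1 + s ^ 2) := by
  have hs : 1 + s ^ 2 ≠ 0 := by positivity
  have hderiv : ∀ x, HasDerivAt (fun x => -(exp (-(s * x)) * (s * sin x + cos x)) / (1 + s ^ 2))
      (exp (-(s * x)) * sin x) x := fun x => by
    have hexp : HasDerivAt (fun x => exp (-(s * x))) (exp (-(s * x)) * -s) x := by
      simpa using ((hasDerivAt_id x).const_mul s).neg.exp
    have htrig : HasDerivAt (fun x => s * sin x + cos x) (s * cos x + -sin x) x :=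
      ((hasDerivAt_sin x).const_mul s).add (hasDerivAt_cos x)
    refine (((hexp.mul htrig).neg).div_const (1 + s ^ 2)).congr_deriv ?_
    rw [div_eq_iff hs]
    ring
  rw [intervalIntegral.integral_eq_sub_of_hasDerivAt (fun x _ => hderiv x)
    (Continuous.intervalIntegrable (by fun_prop) _ _)]
  simp only [mul_zero, neg_zero, exp_zero, sin_zero, cos_zero, zero_add, one_mul]
  ring

theorem integral_sinc_eq_integral_Ioi {b : ℝ} (hb : 0 ≤ b) :
    ∫ x in 0..b, sinc x = ∫ s in Ioi 0, ∫ x in 0..b, exp (-(s * x)) * sin x := by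
  set F : ℝ × ℝ → ℝ := fun p => exp (-(p.2 * p.1)) * sin p.1
  have hF : Continuous F := by fun_prop
  have hF_int : Integrable F ((volume.restrict (Ioc 0 b)).prod (volume.restrict (Ioi 0))) := by
    refine (integrable_prod_iff hF.aestronglyMeasurable).2 ⟨?_, ?_⟩
    · filter_upwards [ae_restrict_mem measurableSet_Ioc] with x hx
      simpa only [F] using (integrableOn_exp_neg_mul_Ioi hx.1).mul_const (sin x)
    · refine Measure.integrableOn_of_bounded (M := 1) measure_Ioc_lt_top.ne
        (hF.norm.stronglyMeasurable.integral_prod_right').aestronglyMeasurable ?_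
      filter_upwards [ae_restrict_mem measurableSet_Ioc] with x hx
      have hnorm : ∫ s in Ioi 0, ‖F (x, s)‖ = |sin x| * x⁻¹ := by
        simp only [F, norm_mul, Real.norm_eq_abs, abs_exp]
        rw [integral_mul_const, integral_exp_neg_mul_Ioi hx.1, mul_comm]
      rw [hnorm, Real.norm_eq_abs, abs_of_nonneg (by have := hx.1.le; positivity),
        ← div_eq_mul_inv, div_le_one hx.1]
      simpa [abs_of_pos hx.1] using abs_sin_le_abs (x := x)
  have hswap := integral_integral_swap (f := fun x s => F (x, s)) hF_int
  simp only [F] at hswap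
  rw [intervalIntegral.integral_of_le hb]
  simp_rw [intervalIntegral.integral_of_le hb]
  rw [← hswap]
  refine setIntegral_congr_fun measurableSet_Ioc fun x hx => ?_
  rw [integral_mul_const, integral_exp_neg_mul_Ioi hx.1, sinc_of_ne_zero hx.1.ne', inv_mul_eq_div]

theorem abs_integral_sinc_sub_pi_div_two_le {b : ℝ} (hb : 0 < b) :
    |(∫ x in 0..b, sinc x) - π / 2| ≤ 2 / b := by
  set r : ℝ → ℝ := fun s => exp (-(s * b)) * (s * sin b + cos b) / (1 + s ^ 2)
  have hr : ∀ s ≥ 0, |r s| ≤ 2 * exp (-(s * b)) := fun s hs => by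
    have htrig : |s * sin b + cos b| ≤ s + 1 := by
      refine (abs_add_le _ _).trans (add_le_add ?_ (abs_cos_le_one b))
      rw [abs_mul, abs_of_nonneg hs]
      exact mul_le_of_le_one_right hs (abs_sin_le_one b)
    have hden : 0 < 1 + s ^ 2 := by positivity
    simp only [r, abs_div, abs_mul, abs_exp, abs_of_pos hden]
    rw [div_le_iff₀ hden]
    nlinarith [mul_le_mul_of_nonneg_left htrig (exp_pos (-(s * b))).le, exp_pos (-(s * b)),
      sq_nonneg (2 * s - 1)]
  have hexp_int : Integrable (fun s => 2 * exp (-(s * b))) (volume.restrict (Ioi 0)) :=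
    (integrableOn_exp_neg_mul_Ioi hb).const_mul 2
  have hr_int : IntegrableOn r (Ioi 0) :=
    hexp_int.mono'
      ((Continuous.div (by fun_prop) (by fun_prop) fun s => by positivity).aestronglyMeasurable)
      ((ae_restrict_mem measurableSet_Ioi).mono fun s hs => (hr s (le_of_lt hs)))
  have hrepr : ∫ x in 0..b, sinc x = π / 2 - ∫ s in Ioi 0, r s := by
    rw [integral_sinc_eq_integral_Ioi hb.le]
    simp_rw [integral_exp_neg_mul_mul_sin, sub_div, one_div]
    rw [integral_sub integrable_inv_one_add_sq.integrableOn hr_int, integral_Ioi_inv_one_add_sq,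
      arctan_zero, sub_zero]
  rw [hrepr, sub_sub_cancel_left, abs_neg, ← Real.norm_eq_abs]
  calc ‖∫ s in Ioi 0, r s‖ ≤ ∫ s in Ioi 0, 2 * exp (-(s * b)) :=
        norm_integral_le_of_norm_le hexp_int
          ((ae_restrict_mem measurableSet_Ioi).mono fun s hs => hr s (le_of_lt hs))
    _ = 2 / b := by rw [integral_const_mul, integral_exp_neg_mul_Ioi hb, div_eq_mul_inv]

theorem tendsto_integral_sinc_atTop :
    Tendsto (fun b => ∫ x in 0..b, sinc x) atTop (𝓝 (π / 2)) := by
  refine tendsto_sub_nhds_zero_iff.1 (squeeze_zero_norm' ?_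
    (tendsto_const_nhds.div_atTop tendsto_id : Tendsto (fun b : ℝ => 2 / b) atTop (𝓝 0)))
  filter_upwards [eventually_gt_atTop 0] with b hb
  exact abs_integral_sinc_sub_pi_div_two_le hb

theorem isLittleO_integral_mul_of_tendsto_zero {g w : ℝ → ℝ} {a : ℝ}
    (hg : Tendsto g atTop (𝓝 0)) (hw : ∀ t ≥ a, 0 ≤ w t)
    (hW : Tendsto (fun b => ∫ t in a..b, w t) atTop atTop)
    (hgw : ∀ b ≥ a, IntervalIntegrable (fun t => g t * w t) volume a b)
    (hwi : ∀ b ≥ a, IntervalIntegrable w volume a b) :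
    (fun b => ∫ t in a..b, g t * w t) =o[atTop] fun b => ∫ t in a..b, w t := by
  refine isLittleO_iff.2 fun ε hε => ?_
  obtain ⟨S, hS⟩ :=
    eventually_atTop.1 (hg.eventually (Metric.closedBall_mem_nhds (0 : ℝ) (half_pos hε)))
  set S' := max S a
  have hS'a : a ≤ S' := le_max_right _ _
  filter_upwards [eventually_ge_atTop S',
    hW.eventually_ge_atTop (2 / ε * |∫ t in a..S', g t * w t|)] with b hb hWb
  have hsplit := intervalIntegral.integral_add_adjacent_intervals (hgw S' hS'a)
    ((hgw S' hS'a).symm.trans (hgw b (hS'a.trans hb)))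
  have htail : ‖∫ t in S'..b, g t * w t‖ ≤ ∫ t in S'..b, ε / 2 * w t := by
    refine intervalIntegral.norm_integral_le_of_norm_le hb (ae_of_all _ fun t ht => ?_)
      (((hwi S' hS'a).symm.trans (hwi b (hS'a.trans hb))).const_mul _)
    have hgt : |g t| ≤ ε / 2 := by
      simpa [Real.dist_eq] using hS t (le_of_max_le_left ht.1.le)
    rw [Real.norm_eq_abs, abs_mul, abs_of_nonneg (hw t (hS'a.trans ht.1.le))]
    exact mul_le_mul_of_nonneg_right hgt (hw t (hS'a.trans ht.1.le))
  have hW_split := intervalIntegral.integral_add_adjacent_intervals (hwi S' hS'a)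
    ((hwi S' hS'a).symm.trans (hwi b (hS'a.trans hb)))
  have hW_head : 0 ≤ ∫ t in a..S', w t :=
    intervalIntegral.integral_nonneg hS'a fun t ht => hw t ht.1
  have hW_nonneg : 0 ≤ ∫ t in a..b, w t :=
    intervalIntegral.integral_nonneg (hS'a.trans hb) fun t ht => hw t ht.1
  rw [intervalIntegral.integral_const_mul, Real.norm_eq_abs] at htail
  rw [Real.norm_eq_abs, Real.norm_eq_abs, abs_of_nonneg hW_nonneg, ← hsplit]
  have hhead : |∫ t in a..S', g t * w t| ≤ ε / 2 * ∫ t in a..b, w t := by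
    rw [div_mul_eq_mul_div, le_div_iff₀ two_pos]
    rw [div_mul_eq_mul_div, div_le_iff₀ hε] at hWb
    linarith
  calc |(∫ t in a..S', g t * w t) + ∫ t in S'..b, g t * w t|
      ≤ ε / 2 * (∫ t in a..b, w t) + ε / 2 * ∫ t in S'..b, w t :=
        (abs_add_le _ _).trans (add_le_add hhead htail)
    _ ≤ ε * ∫ t in a..b, w t := by nlinarith

theorem tendsto_integral_div_of_tendsto {f : ℝ → ℝ} {c : ℝ} (hf : Tendsto f atTop (𝓝 c))
    (hfi : ∀ b ≥ 0, IntervalIntegrable f volume 0 b) :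
    Tendsto (fun b => (∫ t in 0..b, f t) / b) atTop (𝓝 c) := by
  have h := (isLittleO_integral_mul_of_tendsto_zero (a := 0) (w := fun _ => 1)
    (tendsto_sub_nhds_zero_iff.2 hf) (fun _ _ => zero_le_one)
    (tendsto_id.congr fun b => by simp)
    (fun b hb => by simpa using (hfi b hb).sub intervalIntegrable_const)
    (fun _ _ => intervalIntegrable_const)).tendsto_div_nhds_zero
  refine Tendsto.congr' ?_ (by simpa using h.add_const c)
  filter_upwards [eventually_gt_atTop 0] with b hb
  rw [intervalIntegral.integral_sub (hfi b hb.le) intervalIntegrable_const,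
    intervalIntegral.integral_const, smul_eq_mul, sub_zero]
  field_simp
  ring

theorem tendsto_integral_div_log_of_tendsto_mul {K : ℝ → ℝ} {c : ℝ}
    (hK : Tendsto (fun t => t * K t) atTop (𝓝 c))
    (hKi : ∀ b ≥ 0, IntervalIntegrable K volume 0 b) :
    Tendsto (fun b => (∫ t in 0..b, K t) / log b) atTop (𝓝 c) := by
  have hKi1 : ∀ b ≥ 1, IntervalIntegrable K volume 1 b := fun b hb =>
    (hKi 1 zero_le_one).symm.trans (hKi b (zero_le_one.trans hb))
  have hlog : ∀ b ≥ 1, ∫ t in (1 : ℝ)..b, t⁻¹ = log b := fun b hb => by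
    rw [integral_inv_of_pos one_pos (one_pos.trans_le hb), div_one]
  have hinv : ∀ b ≥ 1, IntervalIntegrable (fun t : ℝ => t⁻¹) volume 1 b := fun b hb =>
    intervalIntegral.intervalIntegrable_inv (fun t ht => by
      rw [uIcc_of_le hb] at ht; linarith [ht.1]) continuousOn_id
  have h := (isLittleO_integral_mul_of_tendsto_zero (a := 1) (w := fun t => t⁻¹)
    (tendsto_sub_nhds_zero_iff.2 hK) (fun t ht => inv_nonneg.2 (zero_le_one.trans ht))
    (tendsto_log_atTop.congr' (by
      filter_upwards [eventually_ge_atTop 1] with b hb using (hlog b hb).symm))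
    (fun b hb => (((hKi1 b hb).continuousOn_mul continuousOn_id).sub
      intervalIntegrable_const).mul_continuousOn (continuousOn_inv₀.mono fun t ht => by
        rw [uIcc_of_le hb] at ht; exact (one_pos.trans_le ht.1).ne'))
    hinv).tendsto_div_nhds_zero
  have hhead : Tendsto (fun b => (∫ t in (0 : ℝ)..1, K t) / log b) atTop (𝓝 0) :=
    tendsto_const_nhds.div_atTop tendsto_log_atTop
  refine Tendsto.congr' ?_ (by simpa using (hhead.add h).add_const c)
  filter_upwards [eventually_gt_atTop 1] with b hb
  have hlogb : log b ≠ 0 := (log_pos hb).ne'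
  have hmid : ∫ t in (1 : ℝ)..b, (t * K t - c) * t⁻¹ = (∫ t in (1 : ℝ)..b, K t) - c * log b := by
    rw [← hlog b hb.le, ← intervalIntegral.integral_const_mul,
      ← intervalIntegral.integral_sub (hKi1 b hb.le) ((hinv b hb.le).const_mul c)]
    refine intervalIntegral.integral_congr fun t ht => ?_
    rw [uIcc_of_le hb.le] at ht
    have : t ≠ 0 := (one_pos.trans_le ht.1).ne'
    field_simp
  simp only [hlog b hb.le, hmid]
  rw [← intervalIntegral.integral_add_adjacent_intervals (hKi 1 zero_le_one) (hKi1 b hb.le)]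
  field_simp
  ring

section AntitoneMulSin

variable {g : ℝ → ℝ} {ω : ℝ}

theorem AntitoneOn.intervalIntegrable_mul_sin (hg : AntitoneOn g (Ici 0)) {a b : ℝ}
    (ha : 0 ≤ a) (hb : 0 ≤ b) : IntervalIntegrable (fun s => g s * sin (ω * s)) volume a b :=
  (hg.mono fun _ hx => (le_min ha hb).trans hx.1).intervalIntegrable.mul_continuousOn
    (by fun_prop)

theorem AntitoneOn.comp_add_const (hg : AntitoneOn g (Ici 0)) {c : ℝ} (hc : 0 ≤ c) :
    AntitoneOn (fun s => g (s + c)) (Ici 0) := fun x hx y hy hxy =>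
  hg (add_nonneg hx hc) (add_nonneg hy hc) (by linarith)

theorem integral_comp_add_period_mul_sin (g : ℝ → ℝ) (hω : ω ≠ 0) (N : ℕ) (a b : ℝ) :
    ∫ s in a..b, g (s + 2 * π * N / ω) * sin (ω * s)
      = ∫ t in a + 2 * π * N / ω..b + 2 * π * N / ω, g t * sin (ω * t) := by
  rw [← intervalIntegral.integral_comp_add_right]
  refine intervalIntegral.integral_congr fun s _ => ?_
  have : ω * (s + 2 * π * N / ω) = ω * s + N * (2 * π) := by field_simp
  simp only [this, sin_add_nat_mul_two_pi]

theorem integral_antitoneOn_mul_sin_period (hω : 0 < ω) (hg : AntitoneOn g (Ici 0)) :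
    0 ≤ ∫ s in 0..2 * π / ω, g s * sin (ω * s) ∧
      ∫ s in 0..2 * π / ω, g s * sin (ω * s) ≤ π / ω * (g 0 - g (2 * π / ω)) := by
  set h := π / ω
  have hh : 0 ≤ h := by positivity
  have h2h : 2 * π / ω = h + h := by ring
  -- the second half-period is the first one, shifted by `h` and with the sign of `sin` flipped
  have hfold : ∫ s in 0..2 * π / ω, g s * sin (ω * s)
      = ∫ s in 0..h, (g s * sin (ω * s) - g (s + h) * sin (ω * s)) := by
    have hshift : ∫ s in h..h + h, g s * sin (ω * s)
        = -∫ s in 0..h, g (s + h) * sin (ω * s) := by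
      have := intervalIntegral.integral_comp_add_right (a := 0) (b := h)
        (fun t => g t * sin (ω * t)) h
      rw [zero_add] at this
      rw [← this, ← intervalIntegral.integral_neg]
      refine intervalIntegral.integral_congr fun s _ => ?_
      have : ω * (s + h) = ω * s + π := by simp only [h]; field_simp
      simp only [this, sin_add_pi, mul_neg]
    rw [h2h, ← intervalIntegral.integral_add_adjacent_intervals
        (hg.intervalIntegrable_mul_sin le_rfl hh)
        (hg.intervalIntegrable_mul_sin hh (by positivity)),
      hshift, ← sub_eq_add_neg, ← intervalIntegral.integral_sub
        (hg.intervalIntegrable_mul_sin le_rfl hh)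
        ((hg.comp_add_const hh).intervalIntegrable_mul_sin le_rfl hh)]
  have hsin : ∀ s ∈ Icc 0 h, 0 ≤ sin (ω * s) ∧ sin (ω * s) ≤ 1 := fun s hs =>
    ⟨sin_nonneg_of_nonneg_of_le_pi (by nlinarith [hs.1])
      (by have := mul_le_mul_of_nonneg_left hs.2 hω.le; simpa [h, mul_div_cancel₀ _ hω.ne']),
      sin_le_one _⟩
  have hdrop : ∀ s ∈ Icc 0 h, 0 ≤ g s - g (s + h) ∧ g s - g (s + h) ≤ g 0 - g (2 * π / ω) :=
    fun s hs => by
      have hsh : s + h ∈ Ici (0 : ℝ) := show 0 ≤ s + h by linarith [hs.1]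
      have h1 := hg (show s ∈ Ici 0 from hs.1) hsh (by linarith)
      have h2 := hg (mem_Ici.2 le_rfl : (0 : ℝ) ∈ Ici 0) (show s ∈ Ici 0 from hs.1) hs.1
      have h3 := hg hsh (mem_Ici.2 (by positivity) : 2 * π / ω ∈ Ici 0)
        (show s + h ≤ 2 * π / ω by linarith [hs.2])
      exact ⟨sub_nonneg.2 h1, by linarith⟩
  rw [hfold]
  refine ⟨intervalIntegral.integral_nonneg hh fun s hs =>
    by nlinarith [mul_nonneg (hdrop s hs).1 (hsin s hs).1], ?_⟩
  calc ∫ s in 0..h, (g s * sin (ω * s) - g (s + h) * sin (ω * s))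
      ≤ ∫ _ in 0..h, g 0 - g (2 * π / ω) :=
        intervalIntegral.integral_mono_on hh
          ((hg.intervalIntegrable_mul_sin le_rfl hh).sub
            ((hg.comp_add_const hh).intervalIntegrable_mul_sin le_rfl hh))
          intervalIntegrable_const fun s hs => by
            nlinarith [hdrop s hs, hsin s hs,
              mul_le_mul_of_nonneg_left (hsin s hs).2 (hdrop s hs).1]
    _ = h * (g 0 - g (2 * π / ω)) := by simp [mul_sub]

theorem integral_antitoneOn_mul_sin_periods (hω : 0 < ω) (hg : AntitoneOn g (Ici 0)) (N : ℕ) :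
    0 ≤ ∫ s in 0..2 * π * N / ω, g s * sin (ω * s) ∧
      ∫ s in 0..2 * π * N / ω, g s * sin (ω * s) ≤ π / ω * (g 0 - g (2 * π * N / ω)) := by
  induction N with
  | zero => simp
  | succ N ih =>
    set c := 2 * π * N / ω
    have hc : 0 ≤ c := by positivity
    have hnext : 2 * π * ↑(N + 1) / ω = c + 2 * π / ω := by push_cast; ring
    have hperiod := integral_antitoneOn_mul_sin_period hω (hg.comp_add_const hc)
    rw [integral_comp_add_period_mul_sin g hω.ne' N, zero_add, add_comm (2 * π / ω)] at hperiod
    rw [hnext, ← intervalIntegral.integral_add_adjacent_intervals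
      (hg.intervalIntegrable_mul_sin le_rfl hc) (hg.intervalIntegrable_mul_sin hc (by positivity))]
    constructor <;> nlinarith [ih.1, ih.2, hperiod.1, hperiod.2]

theorem mem_Icc_of_tendsto_integral_antitoneOn_mul_sin (hω : 0 < ω) (hg : AntitoneOn g (Ici 0))
    (hg_nonneg : ∀ s ≥ 0, 0 ≤ g s) {L : ℝ}
    (hL : Tendsto (fun A => ∫ s in 0..A, g s * sin (ω * s)) atTop (𝓝 L)) :
    L ∈ Icc 0 (π / ω * g 0) := by
  have hN : Tendsto (fun N : ℕ => 2 * π * N / ω) atTop atTop :=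
    (tendsto_natCast_atTop_atTop.const_mul_atTop (by positivity : 0 < 2 * π / ω)).congr
      fun N => by ring
  have hperiods := integral_antitoneOn_mul_sin_periods hω hg
  refine ⟨ge_of_tendsto (hL.comp hN) (Eventually.of_forall fun N => (hperiods N).1),
    le_of_tendsto (hL.comp hN) (Eventually.of_forall fun N => ?_)⟩
  have := hg_nonneg (2 * π * N / ω) (by positivity)
  have : 0 ≤ π / ω := by positivity
  simp only [Function.comp_apply]
  nlinarith [(hperiods N).2]

end AntitoneMulSin

theorem tendsto_integral_comp_const_add {F : ℝ → ℝ} {B I : ℝ}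
    (hF : ∀ b ≥ 0, IntervalIntegrable F volume 0 b) (hB : 0 ≤ B)
    (hI : Tendsto (fun A => ∫ t in 0..A, F t) atTop (𝓝 I)) :
    Tendsto (fun A => ∫ s in 0..A, F (B + s)) atTop (𝓝 (I - ∫ t in 0..B, F t)) := by
  refine ((hI.comp (tendsto_atTop_add_const_left _ B tendsto_id)).sub_const _).congr' ?_
  filter_upwards [eventually_ge_atTop 0] with A hA
  rw [intervalIntegral.integral_comp_add_left, add_zero, Function.comp_apply, id,
    intervalIntegral.integral_interval_sub_left (hF _ (add_nonneg hB hA)) (hF B hB)]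

theorem abs_sub_integral_le_of_antitoneOn {f h : ℝ → ℝ} {ω B I : ℝ} (hω : 0 < ω) (hB : 0 ≤ B)
    (hf : ∀ b ≥ 0, IntervalIntegrable f volume 0 b) (hf_anti : AntitoneOn f (Ici B))
    (hf_nonneg : ∀ t ≥ B, 0 ≤ f t) (hh : Continuous h) (hhB : ∀ s, h (B + s) = sin (ω * s))
    (hI : Tendsto (fun A => ∫ t in 0..A, f t * h t) atTop (𝓝 I)) :
    |I - ∫ t in 0..B, f t * h t| ≤ π / ω * f B := by
  have htail := tendsto_integral_comp_const_add
    (fun b hb => (hf b hb).mul_continuousOn hh.continuousOn) hB hI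
  simp only [hhB] at htail
  have hmem := mem_Icc_of_tendsto_integral_antitoneOn_mul_sin (g := fun s => f (B + s)) hω
    (fun x hx y hy hxy => hf_anti (show B ≤ B + x by linarith [mem_Ici.1 hx])
      (show B ≤ B + y by linarith [mem_Ici.1 hy]) (by linarith))
    (fun s hs => hf_nonneg _ (by linarith)) htail
  rw [add_zero] at hmem
  have : 0 ≤ π / ω * f B := mul_nonneg (by positivity) (hf_nonneg B le_rfl)
  exact abs_le.2 ⟨by linarith [hmem.1], hmem.2⟩

theorem abs_mul_sin_sub_mul_sinc_le {ω t : ℝ} (ht : 0 < t) (hω : 0 ≤ ω) (k c : ℝ) :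
    |k * sin (ω * t) - c * (ω * sinc (ω * t))| ≤ ω * |t * k - c| := by
  rcases hω.eq_or_lt with rfl | hω
  · simp
  have hωt : ω * t ≠ 0 := by positivity
  have hfactor : k * sin (ω * t) - c * (ω * sinc (ω * t)) = (t * k - c) * (sin (ω * t) / t) := by
    rw [sinc_of_ne_zero hωt]
    field_simp
  have hsin : |sin (ω * t) / t| ≤ ω := by
    rw [abs_div, abs_of_pos ht, div_le_iff₀ ht]
    simpa [abs_of_pos (mul_pos hω ht)] using abs_sin_le_abs (x := ω * t)
  rw [hfactor, abs_mul]
  exact (mul_le_mul_of_nonneg_left hsin (abs_nonneg _)).trans_eq (mul_comm _ _)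

theorem tendsto_const_div_nhdsGT_zero {b : ℝ} (hb : 0 < b) :
    Tendsto (fun x : ℝ => b / x) (𝓝[>] 0) atTop :=
  (tendsto_inv_nhdsGT_zero.const_mul_atTop hb).congr fun x => (div_eq_mul_inv b x).symm

theorem tendsto_div_mul_comp_const_div {K : ℝ → ℝ} {c₁ : ℝ}
    (hK : Tendsto (fun t => t * K t) atTop (𝓝 c₁)) (a : ℝ) {b : ℝ} (hb : 0 < b) :
    Tendsto (fun ω => a / ω * K (b / ω)) (𝓝[>] 0) (𝓝 (a / b * c₁)) := by
  refine ((hK.comp (tendsto_const_div_nhdsGT_zero hb)).const_mul (a / b)).congr' ?_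
  filter_upwards [self_mem_nhdsWithin] with ω hω
  simp only [Function.comp_apply]
  field_simp [(mem_Ioi.1 hω).ne']

theorem tendsto_mul_integral_const_div {f : ℝ → ℝ} {L : ℝ}
    (hf : Tendsto (fun B => (∫ t in 0..B, f t) / B) atTop (𝓝 L)) {b : ℝ} (hb : 0 < b) :
    Tendsto (fun ω => ω * ∫ t in 0..b / ω, f t) (𝓝[>] 0) (𝓝 (b * L)) := by
  refine ((hf.comp (tendsto_const_div_nhdsGT_zero hb)).const_mul b).congr' ?_
  filter_upwards [self_mem_nhdsWithin] with ω hω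
  simp only [Function.comp_apply]
  field_simp [(mem_Ioi.1 hω).ne']

theorem tendsto_of_forall_eventually_abs_sub_le {α : Type*} {l : Filter α} {u : α → ℝ} {a : ℝ}
    {δ : ℕ → ℝ} (hδ : Tendsto δ atTop (𝓝 0)) (h : ∀ N, ∀ᶠ x in l, |u x - a| ≤ δ N) :
    Tendsto u l (𝓝 a) := by
  refine Metric.tendsto_nhds.2 fun ε hε => ?_
  obtain ⟨N, hN⟩ := (hδ.eventually_lt_const hε).exists
  exact (h N).mono fun x hx => (Real.dist_eq _ _).trans_lt (hx.trans_lt hN)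

section Kernel

variable {K : ℝ → ℝ} {c₁ ω : ℝ}

theorem abs_sub_mul_integral_sinc_le (hω : 0 < ω) {N : ℕ} (hN : 0 < N)
    (hKi : ∀ b ≥ 0, IntervalIntegrable K volume 0 b) (hKpos : ∀ t > 0, 0 < K t)
    (hanti : AntitoneOn K (Ici (2 * π * N / ω))) {I : ℝ}
    (hI : Tendsto (fun A => ∫ t in 0..A, K t * sin (ω * t)) atTop (𝓝 I)) :
    |I - c₁ * ∫ u in 0..2 * π * N, sinc u|
      ≤ π / ω * K (2 * π * N / ω) + ω * ∫ t in 0..2 * π * N / ω, |t * K t - c₁| := by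
  set B := 2 * π * N / ω
  have hB : 0 < B := by positivity
  have htail := abs_sub_integral_le_of_antitoneOn hω hB.le hKi hanti
    (fun t ht => (hKpos t (hB.trans_le ht)).le) (by fun_prop) (fun s => by
      have : ω * (B + s) = ω * s + N * (2 * π) := by simp only [B]; field_simp; ring
      rw [this, sin_add_nat_mul_two_pi]) hI
  have hKsin : IntervalIntegrable (fun t => K t * sin (ω * t)) volume 0 B :=
    (hKi B hB.le).mul_continuousOn (by fun_prop)
  have hsinc : c₁ * ∫ u in 0..2 * π * N, sinc u = ∫ t in 0..B, c₁ * (ω * sinc (ω * t)) := by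
    rw [intervalIntegral.integral_const_mul, intervalIntegral.integral_const_mul,
      intervalIntegral.integral_comp_mul_left _ hω.ne', mul_zero, smul_eq_mul,
      mul_inv_cancel_left₀ hω.ne']
    simp only [B]
    field_simp
  have hmain : |(∫ t in 0..B, K t * sin (ω * t)) - c₁ * ∫ u in 0..2 * π * N, sinc u|
      ≤ ω * ∫ t in 0..B, |t * K t - c₁| := by
    rw [hsinc, ← intervalIntegral.integral_sub hKsin
      (Continuous.intervalIntegrable (by fun_prop) _ _), ← Real.norm_eq_abs,
      ← intervalIntegral.integral_const_mul]
    exact intervalIntegral.norm_integral_le_of_norm_le hB.le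
      (ae_of_all _ fun t ht => abs_mul_sin_sub_mul_sinc_le ht.1 hω.le _ _)
      ((((hKi B hB.le).continuousOn_mul continuousOn_id).sub
        intervalIntegrable_const).abs.const_mul ω)
  calc |I - c₁ * ∫ u in 0..2 * π * N, sinc u|
      ≤ |I - ∫ t in 0..B, K t * sin (ω * t)|
        + |(∫ t in 0..B, K t * sin (ω * t)) - c₁ * ∫ u in 0..2 * π * N, sinc u| :=
        abs_sub_le _ _ _
    _ ≤ _ := add_le_add htail hmain

theorem abs_sub_integral_le_of_tendsto_integral_mul_cos (hω : 0 < ω)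
    (hKi : ∀ b ≥ 0, IntervalIntegrable K volume 0 b) (hKpos : ∀ t > 0, 0 < K t)
    (hanti : AntitoneOn K (Ici (3 * π / 2 / ω))) {I : ℝ}
    (hI : Tendsto (fun A => ∫ t in 0..A, K t * cos (ω * t)) atTop (𝓝 I)) :
    |I - ∫ t in 0..3 * π / 2 / ω, K t|
      ≤ π / ω * K (3 * π / 2 / ω) + ω * ∫ t in 0..3 * π / 2 / ω, t * K t := by
  set B := 3 * π / 2 / ω
  have hB : 0 < B := by positivity
  have htail := abs_sub_integral_le_of_antitoneOn hω hB.le hKi hanti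
    (fun t ht => (hKpos t (hB.trans_le ht)).le) (by fun_prop) (fun s => by
      have : ω * (B + s) = ω * s + 2 * π - π / 2 := by simp only [B]; field_simp; ring
      rw [this, cos_sub_pi_div_two, sin_add_two_pi]) hI
  have hmain : |(∫ t in 0..B, K t * cos (ω * t)) - ∫ t in 0..B, K t|
      ≤ ω * ∫ t in 0..B, t * K t := by
    rw [← intervalIntegral.integral_sub ((hKi B hB.le).mul_continuousOn (by fun_prop))
        (hKi B hB.le),
      ← Real.norm_eq_abs, ← intervalIntegral.integral_const_mul]
    refine intervalIntegral.norm_integral_le_of_norm_le hB.le (ae_of_all _ fun t ht => ?_)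
      (((hKi B hB.le).continuousOn_mul continuousOn_id).const_mul ω)
    have hcos : |cos (ω * t) - 1| ≤ ω * t := by
      simpa [abs_of_pos (mul_pos hω ht.1)] using abs_cos_sub_cos_le (ω * t) 0
    rw [Real.norm_eq_abs, ← mul_sub_one, abs_mul, abs_of_pos (hKpos t ht.1)]
    nlinarith [mul_le_mul_of_nonneg_left hcos (hKpos t ht.1).le]
  calc |I - ∫ t in 0..B, K t|
      ≤ |I - ∫ t in 0..B, K t * cos (ω * t)|
        + |(∫ t in 0..B, K t * cos (ω * t)) - ∫ t in 0..B, K t| := abs_sub_le _ _ _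
    _ ≤ _ := add_le_add htail hmain

theorem eventually_abs_sub_mul_integral_sinc_le
    (hKi : ∀ b ≥ 0, IntervalIntegrable K volume 0 b) (hKpos : ∀ t > 0, 0 < K t) {T : ℝ}
    (hanti : AntitoneOn K (Ici T)) (hK : Tendsto (fun t => t * K t) atTop (𝓝 c₁))
    {Ksin : ℝ → ℝ}
    (hKsin : ∀ ω > 0, Tendsto (fun A => ∫ t in 0..A, K t * sin (ω * t)) atTop (𝓝 (Ksin ω)))
    (N : ℕ) :
    ∀ᶠ ω in 𝓝[>] 0,
      |Ksin ω - c₁ * ∫ u in 0..2 * π * ↑(N + 1), sinc u| ≤ (c₁ / 2 + 1) / (N + 1) := by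
  have hb : 0 < 2 * π * ↑(N + 1) := by positivity
  have hdefect : Tendsto (fun t => |t * K t - c₁|) atTop (𝓝 0) := by
    simpa using (hK.sub_const c₁).abs
  have hbound := (tendsto_div_mul_comp_const_div hK π hb).add (tendsto_mul_integral_const_div
    (tendsto_integral_div_of_tendsto hdefect fun b hb =>
      (((hKi b hb).continuousOn_mul continuousOn_id).sub intervalIntegrable_const).abs) hb)
  have hlt : π / (2 * π * ↑(N + 1)) * c₁ + 2 * π * ↑(N + 1) * 0 < (c₁ / 2 + 1) / (N + 1) := by
    push_cast
    field_simp
    linarith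
  filter_upwards [hbound.eventually_lt_const hlt, self_mem_nhdsWithin,
    (tendsto_const_div_nhdsGT_zero hb).eventually_ge_atTop T] with ω hlt hω hT
  exact (abs_sub_mul_integral_sinc_le hω (Nat.succ_pos N) hKi hKpos
    (hanti.mono (Ici_subset_Ici.2 hT)) (hKsin ω hω)).trans hlt.le

theorem tendsto_mul_pi_div_two_of_tendsto_integral_mul_sin
    (hKi : ∀ b ≥ 0, IntervalIntegrable K volume 0 b) (hKpos : ∀ t > 0, 0 < K t) {T : ℝ}
    (hanti : AntitoneOn K (Ici T)) (hK : Tendsto (fun t => t * K t) atTop (𝓝 c₁))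
    {Ksin : ℝ → ℝ}
    (hKsin : ∀ ω > 0, Tendsto (fun A => ∫ t in 0..A, K t * sin (ω * t)) atTop (𝓝 (Ksin ω))) :
    Tendsto Ksin (𝓝[>] 0) (𝓝 (c₁ * π / 2)) := by
  set D := fun N : ℕ => ∫ u in 0..2 * π * ↑(N + 1), sinc u
  have hD : Tendsto (fun N => |D N - π / 2|) atTop (𝓝 0) := by
    have hN : Tendsto (fun N : ℕ => 2 * π * ↑(N + 1)) atTop atTop :=
      (tendsto_natCast_atTop_atTop.comp (tendsto_add_atTop_nat 1)).const_mul_atTop (by positivity)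
    have := ((tendsto_integral_sinc_atTop.comp hN).sub_const (π / 2)).abs
    rwa [sub_self, abs_zero] at this
  refine tendsto_of_forall_eventually_abs_sub_le
    (δ := fun N => (c₁ / 2 + 1) / (N + 1) + |c₁| * |D N - π / 2|) ?_ fun N => ?_
  · simpa using (tendsto_const_nhds.div_atTop
      (tendsto_natCast_atTop_atTop.atTop_add tendsto_const_nhds)).add (hD.const_mul |c₁|)
  · filter_upwards [eventually_abs_sub_mul_integral_sinc_le hKi hKpos hanti hK hKsin N] with ω hω
    calc |Ksin ω - c₁ * π / 2| ≤ |Ksin ω - c₁ * D N| + |c₁ * D N - c₁ * π / 2| := abs_sub_le _ _ _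
      _ ≤ _ := by
        rw [mul_div_assoc, ← mul_sub, abs_mul]
        exact add_le_add hω le_rfl

theorem tendsto_div_abs_log_of_tendsto_integral_mul_cos
    (hKi : ∀ b ≥ 0, IntervalIntegrable K volume 0 b) (hKpos : ∀ t > 0, 0 < K t) {T : ℝ}
    (hanti : AntitoneOn K (Ici T)) (hK : Tendsto (fun t => t * K t) atTop (𝓝 c₁))
    {Kcos : ℝ → ℝ}
    (hKcos : ∀ ω > 0, Tendsto (fun A => ∫ t in 0..A, K t * cos (ω * t)) atTop (𝓝 (Kcos ω))) :
    Tendsto (fun ω => Kcos ω / |log ω|) (𝓝[>] 0) (𝓝 c₁) := by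
  set b := 3 * π / 2
  have hb : 0 < b := by positivity
  have hlog : Tendsto (fun ω => |log ω|) (𝓝[>] 0) atTop :=
    tendsto_abs_atBot_atTop.comp tendsto_log_nhdsGT_zero
  have hbound := (tendsto_div_mul_comp_const_div hK π hb).add (tendsto_mul_integral_const_div
    (tendsto_integral_div_of_tendsto hK fun b hb => (hKi b hb).continuousOn_mul continuousOn_id) hb)
  have hrem : Tendsto (fun ω => (Kcos ω - ∫ t in 0..b / ω, K t) / |log ω|) (𝓝[>] 0) (𝓝 0) := by
    refine squeeze_zero_norm' ?_ (hbound.div_atTop hlog)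
    filter_upwards [self_mem_nhdsWithin, (tendsto_const_div_nhdsGT_zero hb).eventually_ge_atTop T]
      with ω hω hT
    rw [Real.norm_eq_abs, abs_div, abs_abs]
    exact div_le_div_of_nonneg_right (abs_sub_integral_le_of_tendsto_integral_mul_cos hω hKi hKpos
      (hanti.mono (Ici_subset_Ici.2 hT)) (hKcos ω hω)) (abs_nonneg _)
  have hmain := (tendsto_integral_div_log_of_tendsto_mul hK hKi).comp
    (tendsto_const_div_nhdsGT_zero hb)
  have hratio : Tendsto (fun ω => log (b / ω) / |log ω|) (𝓝[>] 0) (𝓝 1) := by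
    refine Tendsto.congr' ?_
      (by simpa using (tendsto_const_nhds (x := log b)).div_atTop hlog |>.add_const 1)
    filter_upwards [Ioo_mem_nhdsGT one_pos] with ω hω
    rw [log_div hb.ne' hω.1.ne', abs_of_neg (log_neg hω.1 hω.2)]
    field_simp [(log_neg hω.1 hω.2).ne]
    ring
  refine Tendsto.congr' ?_ (by simpa using hrem.add (hmain.mul hratio))
  filter_upwards [Ioo_mem_nhdsGT one_pos,
    (tendsto_log_atTop.comp (tendsto_const_div_nhdsGT_zero hb)).eventually_gt_atTop 0]
    with ω hω hlogb
  simp only [Function.comp_apply] at hlogb ⊢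
  have : |log ω| ≠ 0 := (abs_pos.2 (log_neg hω.1 hω.2).ne).ne'
  field_simp
  ring

end Kernel

theorem abelian_critical_case_general
    (K : ℝ → ℝ)
    (hKloc : ∀ A > 0, IntegrableOn K (Ioc 0 A))
    (hKpos : ∀ t > 0, 0 < K t)
    (hKdec : ∃ T > 0, AntitoneOn K (Ici T))
    (c₁ : ℝ)
    (hK1 : Tendsto (fun t => t * K t) atTop (nhds c₁))
    (Kcos Ksin : ℝ → ℝ)
    (hKcos : ∀ ω > 0, Tendsto (fun A => ∫ t in (0:ℝ)..A, K t * Real.cos (ω * t))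
      atTop (nhds (Kcos ω)))
    (hKsin : ∀ ω > 0, Tendsto (fun A => ∫ t in (0:ℝ)..A, K t * Real.sin (ω * t))
      atTop (nhds (Ksin ω))) :
    Tendsto (fun ω => Kcos ω / |Real.log ω|) (nhdsWithin 0 (Ioi 0)) (nhds c₁) ∧
    Tendsto Ksin (nhdsWithin 0 (Ioi 0)) (nhds (c₁ * Real.pi / 2)) := by
  obtain ⟨T, -, hanti⟩ := hKdec
  have hKi : ∀ b ≥ 0, IntervalIntegrable K volume 0 b := fun b hb => by
    rcases hb.eq_or_lt with rfl | hb
    · exact .refl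
    · exact (intervalIntegrable_iff_integrableOn_Ioc_of_le hb.le).2 (hKloc b hb)
  exact ⟨tendsto_div_abs_log_of_tendsto_integral_mul_cos hKi hKpos hanti hK1 hKcos,
    tendsto_mul_pi_div_two_of_tendsto_integral_mul_sin hKi hKpos hanti hK1 hKsin⟩

/-- Abelian theorem in the critical case: if `t·K(t) → c₁ ∈ (0,∞)`, then
`𝒦cos(ω)/|log ω| → c₁` and `𝒦sin(ω) → c₁·π/2` as `ω → 0⁺`. -/
theorem abelian_critical_case
    (K : ℝ → ℝ)
    (hKloc : ∀ A > 0, IntegrableOn K (Ioc 0 A))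
    (hKpos : ∀ t > 0, 0 < K t)
    (hKdec : ∃ T > 0, AntitoneOn K (Ici T))
    (c₁ : ℝ) (hc₁ : 0 < c₁)
    (hK1 : Tendsto (fun t => t * K t) atTop (nhds c₁))
    (Kcos Ksin : ℝ → ℝ)
    (hKcos : ∀ ω > 0, Tendsto (fun A => ∫ t in (0:ℝ)..A, K t * Real.cos (ω * t))
      atTop (nhds (Kcos ω)))
    (hKsin : ∀ ω > 0, Tendsto (fun A => ∫ t in (0:ℝ)..A, K t * Real.sin (ω * t))
      atTop (nhds (Ksin ω))) :
    Tendsto (fun ω => Kcos ω / |Real.log ω|) (nhdsWithin 0 (Ioi 0)) (nhds c₁) ∧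
    Tendsto Ksin (nhdsWithin 0 (Ioi 0)) (nhds (c₁ * Real.pi / 2)) :=
  abelian_critical_case_general K hKloc hKpos hKdec c₁ hK1 Kcos Ksin hKcos hKsin
end

section
/- Let α ∈ (0,1) and let K : (0,∞) → ℝ be locally integrable, positive, eventually decreasing, and suppose t^α·K(t) → c_α for some c_α ∈ (0,∞) as t → ∞ (in particular K(t) → 0). Let 𝒦cos, 𝒦sin : (0,∞) → ℝ satisfy ∫₀^A K(t)cos(ωt)dt → 𝒦cos(ω) and ∫₀^A K(t)sin(ωt)dt → 𝒦sin(ω) as A → ∞ for every ω > 0. Then the improper integrals C₁ = lim_{A→∞} ∫₀^A u^{−α}cos(u) du and C₂ = lim_{A→∞} ∫₀^A u^{−α}sin(u) du exist and are positive, and, as ω → 0⁺, ω^{1−α}·𝒦cos(ω) → c_α·C₁ and ω^{1−α}·𝒦sin(ω) → c_α·C₂. -/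
/-!
Substituting `u = ω t`, `ω^(1-α) ∫₀^A K(t) φ(ω t) dt = ∫₀^(ωA) ω^(-α) K(u/ω) φ(u) du`, and
`ω^(-α) K(u/ω) → cα u^(-α)` as `ω → 0⁺`. Back in the variable `t`, the difference with
`cα ∫₀^∞ u^(-α) φ(u) du` is controlled on `[0, X]` by `∫₀^X |K t - cα t^(-α)| dt = o(X^(1-α))`,
and on `[X, ∞)` by the second mean value bound `|∫_a^b g φ| ≤ 2 p g(a)` for `g ≥ 0` antitone and
`φ` bounded and `p`-antiperiodic (here `φ(ω ·)` with `p = π / ω`); the same bound gives the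
convergence of `C₁` and `C₂`. Since `u^(-α)` decreases, the half-periods of `sin` pair off
positively, so `C₂ > 0`; integrating by parts, `C₁ = α ∫₀^∞ u^(-α-1) sin u du > 0` likewise.
-/

open MeasureTheory Filter Set Real Topology intervalIntegral

theorem Function.Antiperiodic.integral_mul_add_integral_mul {g φ : ℝ → ℝ} {p a b : ℝ}
    (hφ : Function.Antiperiodic φ p)
    (hab : IntervalIntegrable (fun u => g u * φ u) volume a b)
    (hab' : IntervalIntegrable (fun u => g u * φ u) volume (a + p) (b + p)) :
    (∫ u in a..b, g u * φ u) + ∫ u in (a + p)..(b + p), g u * φ u =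
      ∫ u in a..b, (g u - g (u + p)) * φ u := by
  have hshift : IntervalIntegrable (fun u => g (u + p) * φ (u + p)) volume a b := by
    simpa using hab'.comp_add_right p
  rw [← integral_comp_add_right (fun u => g u * φ u) p, ← integral_add hab hshift]
  refine integral_congr fun u _ => ?_
  simp only [hφ u]
  ring

theorem AntitoneOn.intervalIntegrable_of_le {g : ℝ → ℝ} {a c d : ℝ} (hg : AntitoneOn g (Ici a))
    (hc : a ≤ c) (hd : a ≤ d) : IntervalIntegrable g volume c d :=
  (hg.mono fun _ hu => le_trans (le_min hc hd) hu.1).intervalIntegrable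

theorem integral_abs_le_of_abs_le_rpow {α η T X : ℝ} {f : ℝ → ℝ} (hα : α < 1) (hη : 0 ≤ η)
    (hT : 0 < T) (hTX : T ≤ X) (hf : ∀ Y ≥ 0, IntervalIntegrable f volume 0 Y)
    (hfη : ∀ t ≥ T, |f t| ≤ η * t ^ (-α)) :
    ∫ t in (0:ℝ)..X, |f t| ≤ (∫ t in (0:ℝ)..T, |f t|) + η * (X ^ (1 - α) / (1 - α)) := by
  have hTXi : IntervalIntegrable f volume T X := (hf T hT.le).symm.trans (hf X (hT.le.trans hTX))
  rw [← integral_add_adjacent_intervals (hf T hT.le).abs hTXi.abs, add_le_add_iff_left]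
  calc ∫ t in T..X, |f t| ≤ ∫ t in T..X, η * t ^ (-α) :=
        integral_mono_on hTX hTXi.abs ((intervalIntegrable_rpow' (by linarith)).const_mul η)
          fun t ht => hfη t ht.1
    _ = η * ((X ^ (1 - α) - T ^ (1 - α)) / (1 - α)) := by
        rw [intervalIntegral.integral_const_mul, integral_rpow (Or.inl (by linarith)),
          show -α + 1 = 1 - α by ring]
    _ ≤ η * (X ^ (1 - α) / (1 - α)) := by
        gcongr
        linarith [rpow_nonneg hT.le (1 - α)]

theorem tendsto_rpow_mul_integral_abs_of_tendsto {α : ℝ} (hα : α < 1) {f : ℝ → ℝ}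
    (hf : ∀ X ≥ 0, IntervalIntegrable f volume 0 X)
    (hlim : Tendsto (fun t => t ^ α * f t) atTop (𝓝 0)) :
    Tendsto (fun X => X ^ (α - 1) * ∫ t in (0:ℝ)..X, |f t|) atTop (𝓝 0) := by
  rw [Metric.tendsto_atTop]
  intro ε hε
  set η := ε * (1 - α) / 2
  obtain ⟨N₁, hN₁⟩ := Metric.tendsto_atTop.1 hlim η (by positivity)
  set T := max N₁ 1
  have hT : 0 < T := zero_lt_one.trans_le (le_max_right _ _)
  have hfη : ∀ t ≥ T, |f t| ≤ η * t ^ (-α) := by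
    intro t ht
    have ht0 : 0 < t := hT.trans_le ht
    have hdist := hN₁ t (le_trans (le_max_left _ _) ht)
    rw [Real.dist_eq, sub_zero, abs_mul, abs_of_pos (rpow_pos_of_pos ht0 _)] at hdist
    calc |f t| = t ^ (-α) * (t ^ α * |f t|) := by
          rw [← mul_assoc, ← rpow_add ht0, neg_add_cancel, rpow_zero, one_mul]
      _ ≤ η * t ^ (-α) := by nlinarith [rpow_nonneg ht0.le (-α)]
  set M := ∫ t in (0:ℝ)..T, |f t|
  obtain ⟨N₂, hN₂⟩ := eventually_atTop.1 <|
    (by simpa using (tendsto_rpow_neg_atTop (y := 1 - α) (by linarith)).mul_const M :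
      Tendsto (fun X : ℝ => X ^ (α - 1) * M) atTop (𝓝 0)).eventually_lt_const (half_pos hε)
  refine ⟨max T N₂, fun X hX => ?_⟩
  have hTX : T ≤ X := le_trans (le_max_left _ _) hX
  have hX0 : 0 < X := hT.trans_le hTX
  have hcancel : X ^ (α - 1) * X ^ (1 - α) = 1 := by
    rw [← rpow_add hX0, show α - 1 + (1 - α) = 0 by ring, rpow_zero]
  have hnonneg : 0 ≤ X ^ (α - 1) * ∫ t in (0:ℝ)..X, |f t| :=
    mul_nonneg (rpow_nonneg hX0.le _) (integral_nonneg hX0.le fun t _ => abs_nonneg _)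
  rw [Real.dist_eq, sub_zero, abs_of_nonneg hnonneg]
  calc X ^ (α - 1) * ∫ t in (0:ℝ)..X, |f t|
      ≤ X ^ (α - 1) * (M + η * (X ^ (1 - α) / (1 - α))) :=
        mul_le_mul_of_nonneg_left (integral_abs_le_of_abs_le_rpow hα (by positivity) hT hTX hf hfη)
          (rpow_nonneg hX0.le _)
    _ = X ^ (α - 1) * M + ε / 2 := by
        rw [mul_add, show X ^ (α - 1) * (η * (X ^ (1 - α) / (1 - α))) =
          η / (1 - α) * (X ^ (α - 1) * X ^ (1 - α)) by ring, hcancel]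
        have : 1 - α ≠ 0 := by linarith
        simp only [η]
        field_simp
    _ < ε := by linarith [hN₂ X (le_trans (le_max_right _ _) hX)]

theorem tendsto_rpow_mul_integral_rpow_neg_mul_comp_mul {φ : ℝ → ℝ} {α ω C : ℝ} (hω : 0 < ω)
    (hC : Tendsto (fun A => ∫ u in (0:ℝ)..A, u ^ (-α) * φ u) atTop (𝓝 C)) :
    Tendsto (fun A => ω ^ (1 - α) * ∫ t in (0:ℝ)..A, t ^ (-α) * φ (ω * t)) atTop (𝓝 C) := by
  refine (hC.comp (tendsto_id.const_mul_atTop hω)).congr' ?_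
  filter_upwards [eventually_ge_atTop 0] with A hA
  show ∫ u in (0:ℝ)..ω * A, u ^ (-α) * φ u = ω ^ (1 - α) * ∫ t in (0:ℝ)..A, t ^ (-α) * φ (ω * t)
  have hscale : ∫ t in (0:ℝ)..A, t ^ (-α) * φ (ω * t) =
      ω ^ α * ∫ t in (0:ℝ)..A, (ω * t) ^ (-α) * φ (ω * t) := by
    rw [← intervalIntegral.integral_const_mul]
    refine integral_congr fun t ht => ?_
    rw [uIcc_of_le hA] at ht
    rw [mul_rpow hω.le ht.1, rpow_neg hω.le, ← mul_assoc, ← mul_assoc,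
      mul_inv_cancel₀ (rpow_pos_of_pos hω α).ne', one_mul]
  rw [hscale, integral_comp_mul_left (fun u => u ^ (-α) * φ u) hω.ne', mul_zero, smul_eq_mul,
    ← mul_assoc, ← mul_assoc, rpow_sub hω, rpow_one, div_mul_cancel₀ _ (rpow_pos_of_pos hω α).ne',
    mul_inv_cancel₀ hω.ne', one_mul]

theorem rpow_one_sub_mul_add_rpow_neg_mul_eq {α ω U a b c q : ℝ} (hω : 0 < ω) (hU : 0 < U) :
    ω ^ (1 - α) * a + q * ω ^ (-α) * (b + c * (U / ω) ^ (-α)) =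
      U ^ (1 - α) * ((U / ω) ^ (α - 1) * a) + q * U ^ (-α) * ((U / ω) ^ α * b + c) := by
  have e1 : U ^ (1 - α) * (U / ω) ^ (α - 1) = ω ^ (1 - α) := by
    rw [div_rpow hU.le hω.le, mul_div_assoc', ← rpow_add hU, show 1 - α + (α - 1) = 0 by ring,
      rpow_zero, one_div, ← rpow_neg hω.le, neg_sub]
  have e2 : U ^ (-α) * (U / ω) ^ α = ω ^ (-α) := by
    rw [div_rpow hU.le hω.le, rpow_neg hU.le, rpow_neg hω.le]
    field_simp
  have e3 : ω ^ (-α) * (U / ω) ^ (-α) = U ^ (-α) := by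
    rw [← mul_rpow hω.le (div_pos hU hω).le, mul_div_cancel₀ _ hω.ne']
  linear_combination (-a) * e1 - q * b * e2 + q * c * e3

structure IsOscillatory (φ : ℝ → ℝ) (p : ℝ) : Prop where
  period_pos : 0 < p
  continuous : Continuous φ
  abs_le_one : ∀ u, |φ u| ≤ 1
  antiperiodic : Function.Antiperiodic φ p

namespace IsOscillatory

variable {φ : ℝ → ℝ} {p : ℝ}

theorem comp_mul (hφ : IsOscillatory φ p) {ω : ℝ} (hω : 0 < ω) :
    IsOscillatory (fun t => φ (ω * t)) (ω⁻¹ * p) :=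
  ⟨mul_pos (inv_pos.2 hω) hφ.period_pos, hφ.continuous.comp (continuous_const_mul ω),
    fun _ => hφ.abs_le_one _, hφ.antiperiodic.const_mul hω.ne'⟩

theorem abs_integral_sub_shift_mul_le {g : ℝ → ℝ} {a b : ℝ} (hφ : IsOscillatory φ p)
    (hg : AntitoneOn g (Ici a)) (hg0 : ∀ u ∈ Ici a, 0 ≤ g u) (hab : a ≤ b) :
    |∫ u in a..b, (g u - g (u + p)) * φ u| ≤ p * g a := by
  have hp := hφ.period_pos
  have hgi : ∀ c d, a ≤ c → a ≤ d → IntervalIntegrable g volume c d :=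
    fun c d hc hd => hg.intervalIntegrable_of_le hc hd
  have hgs : IntervalIntegrable (fun u => g (u + p)) volume a b := by
    simpa using (hgi (a + p) (b + p) (by linarith) (by linarith)).comp_add_right p
  have hincr := (hgi a b le_rfl hab).sub hgs
  calc |∫ u in a..b, (g u - g (u + p)) * φ u|
      ≤ ∫ u in a..b, (g u - g (u + p)) := by
        refine (abs_integral_le_integral_abs hab).trans (integral_mono_on hab
          (hincr.mul_continuousOn hφ.continuous.continuousOn).abs hincr fun u hu => ?_)
        have hgu : 0 ≤ g u - g (u + p) :=
          sub_nonneg.2 (hg hu.1 (mem_Ici.2 (by linarith [hu.1])) (by linarith))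
        rw [abs_mul, abs_of_nonneg hgu]
        exact mul_le_of_le_one_right hgu (hφ.abs_le_one u)
    _ = (∫ u in a..a + p, g u) - ∫ u in b..b + p, g u := by
        rw [integral_sub (hgi a b le_rfl hab) hgs, integral_comp_add_right g p]
        exact integral_interval_sub_interval_comm (hgi _ _ le_rfl hab)
          (hgi _ _ (by linarith) (by linarith)) (hgi _ _ le_rfl (by linarith))
    _ ≤ p * g a := by
        have hfirst : ∫ u in a..a + p, g u ≤ ∫ _ in a..a + p, g a :=
          integral_mono_on (by linarith) (hgi _ _ le_rfl (by linarith)) intervalIntegrable_const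
            fun u hu => hg self_mem_Ici hu.1 hu.1
        have hlast : 0 ≤ ∫ u in b..b + p, g u :=
          integral_nonneg (by linarith) fun u hu => hg0 u (hab.trans hu.1)
        rw [intervalIntegral.integral_const, add_sub_cancel_left, smul_eq_mul] at hfirst
        linarith

/-- A second mean value theorem: pairing `u` with `u + p` turns the integral into one of the
nonnegative increments `g u - g (u + p)`, which telescope. -/
theorem abs_integral_mul_le_of_antitoneOn {g : ℝ → ℝ} {a b : ℝ} (hφ : IsOscillatory φ p)
    (hg : AntitoneOn g (Ici a)) (hg0 : ∀ u ∈ Ici a, 0 ≤ g u) (hab : a ≤ b) :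
    |∫ u in a..b, g u * φ u| ≤ 2 * p * g a := by
  have hp := hφ.period_pos
  have hgφi : ∀ c d, a ≤ c → a ≤ d → IntervalIntegrable (fun u => g u * φ u) volume c d :=
    fun c d hc hd => (hg.intervalIntegrable_of_le hc hd).mul_continuousOn
      hφ.continuous.continuousOn
  have hperiod : ∀ c, a ≤ c → |∫ u in c..c + p, g u * φ u| ≤ p * g a := by
    intro c hc
    have := norm_integral_le_of_norm_le_const (a := c) (b := c + p) (C := g a)
      (f := fun u => g u * φ u) fun u hu => by
        rw [uIoc_of_le (by linarith)] at hu
        have hu' : u ∈ Ici a := hc.trans hu.1.le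
        rw [Real.norm_eq_abs, abs_mul, abs_of_nonneg (hg0 u hu')]
        exact (mul_le_of_le_one_right (hg0 u hu') (hφ.abs_le_one u)).trans
          (hg self_mem_Ici hu' hu')
    simpa [abs_of_pos hp, mul_comm] using this
  have hpair := hφ.antiperiodic.integral_mul_add_integral_mul
    (hgφi a b le_rfl hab) (hgφi (a + p) (b + p) (by linarith) (by linarith))
  have hcomm := integral_interval_sub_interval_comm (hgφi a b le_rfl hab)
    (hgφi (a + p) (b + p) (by linarith) (by linarith)) (hgφi a (a + p) le_rfl (by linarith))
  have h1 := abs_le.1 (hφ.abs_integral_sub_shift_mul_le hg hg0 hab)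
  have h2 := abs_le.1 (hperiod a le_rfl)
  have h3 := abs_le.1 (hperiod b hab)
  have hga := hg0 a self_mem_Ici
  rw [abs_le]
  constructor <;> linarith

theorem exists_tendsto_integral_mul {g : ℝ → ℝ} {a c : ℝ} (hφ : IsOscillatory φ p)
    (hg : AntitoneOn g (Ici a)) (hg0 : ∀ u ∈ Ici a, 0 ≤ g u) (hglim : Tendsto g atTop (𝓝 0))
    (hint : ∀ b ≥ c, IntervalIntegrable (fun u => g u * φ u) volume c b) :
    ∃ C, Tendsto (fun b => ∫ u in c..b, g u * φ u) atTop (𝓝 C) := by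
  refine cauchySeq_tendsto_of_complete (Metric.cauchySeq_iff'.2 fun ε hε => ?_)
  have hsmall : ∀ᶠ N in atTop, 2 * p * g N < ε := by
    simpa using (hglim.const_mul (2 * p)).eventually (gt_mem_nhds (by simpa using hε))
  obtain ⟨N, hNε, hNa, hNc⟩ :=
    (hsmall.and ((eventually_ge_atTop a).and (eventually_ge_atTop c))).exists
  refine ⟨N, fun n hn => ?_⟩
  rw [Real.dist_eq, integral_interval_sub_left (hint n (hNc.trans hn)) (hint N hNc)]
  refine lt_of_le_of_lt ?_ hNε
  exact hφ.abs_integral_mul_le_of_antitoneOn (hg.mono (Ici_subset_Ici.2 hNa))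
    (fun u hu => hg0 u (hNa.trans hu)) hn

theorem abs_integral_sub_rpow_mul_le {K : ℝ → ℝ} {α X A cα : ℝ} (hφ : IsOscillatory φ p)
    (hα0 : 0 ≤ α) (hα1 : α < 1) (hX : 0 < X) (hXA : X ≤ A)
    (hKint : IntervalIntegrable K volume 0 X) (hKdec : AntitoneOn K (Ici X))
    (hKpos : ∀ t ∈ Ici X, 0 ≤ K t) :
    |(∫ t in (0:ℝ)..A, K t * φ t) - cα * ∫ t in (0:ℝ)..A, t ^ (-α) * φ t| ≤
      (∫ t in (0:ℝ)..X, |K t - cα * t ^ (-α)|) + 2 * p * (K X + |cα| * X ^ (-α)) := by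
  have hrpow : ∀ a b, IntervalIntegrable (fun t : ℝ => t ^ (-α)) volume a b :=
    fun _ _ => intervalIntegrable_rpow' (by linarith)
  have hKA : IntervalIntegrable K volume X A := hKdec.intervalIntegrable_of_le le_rfl hXA
  have hφc : ∀ {s}, ContinuousOn φ s := hφ.continuous.continuousOn
  have hdiff := hKint.sub ((hrpow 0 X).const_mul cα)
  have hsplit : (∫ t in (0:ℝ)..A, K t * φ t) - cα * ∫ t in (0:ℝ)..A, t ^ (-α) * φ t =
      (∫ t in (0:ℝ)..X, (K t - cα * t ^ (-α)) * φ t) +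
        ((∫ t in X..A, K t * φ t) - cα * ∫ t in X..A, t ^ (-α) * φ t) := by
    rw [← integral_add_adjacent_intervals (hKint.mul_continuousOn hφc) (hKA.mul_continuousOn hφc),
      ← integral_add_adjacent_intervals ((hrpow 0 X).mul_continuousOn hφc)
        ((hrpow X A).mul_continuousOn hφc),
      show (fun t => (K t - cα * t ^ (-α)) * φ t) = fun t => K t * φ t - cα * (t ^ (-α) * φ t) by
        funext t; ring,
      integral_sub (hKint.mul_continuousOn hφc) (((hrpow 0 X).mul_continuousOn hφc).const_mul cα),
      intervalIntegral.integral_const_mul]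
    ring
  have hhead : |∫ t in (0:ℝ)..X, (K t - cα * t ^ (-α)) * φ t| ≤
      ∫ t in (0:ℝ)..X, |K t - cα * t ^ (-α)| := by
    refine (abs_integral_le_integral_abs hX.le).trans
      (integral_mono_on hX.le (hdiff.mul_continuousOn hφc).abs hdiff.abs fun t _ => ?_)
    rw [abs_mul]
    exact mul_le_of_le_one_right (abs_nonneg _) (hφ.abs_le_one t)
  have htailK : |∫ t in X..A, K t * φ t| ≤ 2 * p * K X :=
    hφ.abs_integral_mul_le_of_antitoneOn hKdec hKpos hXA
  have htailC : |cα * ∫ t in X..A, t ^ (-α) * φ t| ≤ |cα| * (2 * p * X ^ (-α)) := by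
    rw [abs_mul]
    exact mul_le_mul_of_nonneg_left (hφ.abs_integral_mul_le_of_antitoneOn
      ((antitoneOn_rpow_Ioi_of_exponent_nonpos (by linarith)).mono fun _ ht => hX.trans_le ht)
      (fun t ht => rpow_nonneg (hX.le.trans ht) _) hXA) (abs_nonneg _)
  rw [hsplit]
  linarith [abs_add_le (∫ t in (0:ℝ)..X, (K t - cα * t ^ (-α)) * φ t)
    ((∫ t in X..A, K t * φ t) - cα * ∫ t in X..A, t ^ (-α) * φ t),
    abs_sub (∫ t in X..A, K t * φ t) (cα * ∫ t in X..A, t ^ (-α) * φ t)]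

theorem abs_rpow_mul_transform_sub_le {K : ℝ → ℝ} {α ω X cα C Kφ : ℝ} (hφ : IsOscillatory φ p)
    (hα0 : 0 ≤ α) (hα1 : α < 1) (hω : 0 < ω) (hX : 0 < X)
    (hKint : IntervalIntegrable K volume 0 X) (hKdec : AntitoneOn K (Ici X))
    (hKpos : ∀ t ∈ Ici X, 0 ≤ K t)
    (hKφ : Tendsto (fun A => ∫ t in (0:ℝ)..A, K t * φ (ω * t)) atTop (𝓝 Kφ))
    (hC : Tendsto (fun A => ∫ u in (0:ℝ)..A, u ^ (-α) * φ u) atTop (𝓝 C)) :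
    |ω ^ (1 - α) * Kφ - cα * C| ≤ ω ^ (1 - α) * (∫ t in (0:ℝ)..X, |K t - cα * t ^ (-α)|) +
      2 * p * ω ^ (-α) * (K X + |cα| * X ^ (-α)) := by
  have hlim : Tendsto (fun A => ω ^ (1 - α) * ((∫ t in (0:ℝ)..A, K t * φ (ω * t)) -
      cα * ∫ t in (0:ℝ)..A, t ^ (-α) * φ (ω * t))) atTop (𝓝 (ω ^ (1 - α) * Kφ - cα * C)) :=
    ((hKφ.const_mul _).sub
      ((tendsto_rpow_mul_integral_rpow_neg_mul_comp_mul hω hC).const_mul cα)).congr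
      fun A => by ring
  have hωinv : ω ^ (1 - α) * ω⁻¹ = ω ^ (-α) := by
    rw [rpow_sub hω, rpow_one, rpow_neg hω.le]
    field_simp
  refine le_of_tendsto hlim.abs ((eventually_ge_atTop X).mono fun A hXA => ?_)
  rw [abs_mul, abs_of_pos (rpow_pos_of_pos hω _), ← hωinv]
  calc _ ≤ ω ^ (1 - α) * ((∫ t in (0:ℝ)..X, |K t - cα * t ^ (-α)|) +
          2 * (ω⁻¹ * p) * (K X + |cα| * X ^ (-α))) :=
        mul_le_mul_of_nonneg_left ((hφ.comp_mul hω).abs_integral_sub_rpow_mul_le hα0 hα1 hX hXA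
          hKint hKdec hKpos) (rpow_nonneg hω.le _)
    _ = _ := by ring

/-- For `U > 0` and `X = U / ω`, the bound of `abs_rpow_mul_transform_sub_le` is
`U^(1-α) · X^(α-1) ∫₀^X |K - cα t^(-α)| + 2p U^(-α) (X^α K X + |cα|)`, whose first term tends to `0`
and whose second tends to `2p U^(-α) (cα + |cα|)` as `ω → 0⁺`; then let `U → ∞`. -/
theorem tendsto_rpow_mul_transform {K Kφ : ℝ → ℝ} {α T cα C : ℝ}
    (hφ : IsOscillatory φ p) (hα0 : 0 < α) (hα1 : α < 1)
    (hKloc : ∀ A > 0, IntegrableOn K (Ioc 0 A)) (hKpos : ∀ t > 0, 0 < K t)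
    (hKdec : AntitoneOn K (Ici T)) (hKα : Tendsto (fun t => t ^ α * K t) atTop (𝓝 cα))
    (hKφ : ∀ ω > 0, Tendsto (fun A => ∫ t in (0:ℝ)..A, K t * φ (ω * t)) atTop (𝓝 (Kφ ω)))
    (hC : Tendsto (fun A => ∫ u in (0:ℝ)..A, u ^ (-α) * φ u) atTop (𝓝 C)) :
    Tendsto (fun ω => ω ^ (1 - α) * Kφ ω) (𝓝[>] 0) (𝓝 (cα * C)) := by
  have hKint : ∀ X ≥ 0, IntervalIntegrable K volume 0 X := by
    intro X hX
    rcases hX.eq_or_lt with rfl | hX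
    · exact IntervalIntegrable.refl
    · exact (intervalIntegrable_iff_integrableOn_Ioc_of_le hX.le).2 (hKloc X hX)
  have hdiff : Tendsto (fun t => t ^ α * (K t - cα * t ^ (-α))) atTop (𝓝 0) := by
    rw [← sub_self cα]
    refine (hKα.sub_const cα).congr' ((eventually_gt_atTop 0).mono fun t ht => ?_)
    dsimp only
    rw [mul_sub, mul_left_comm, ← rpow_add ht, add_neg_cancel, rpow_zero, mul_one]
  have hR : Tendsto (fun X => X ^ (α - 1) * ∫ t in (0:ℝ)..X, |K t - cα * t ^ (-α)|) atTop (𝓝 0) :=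
    tendsto_rpow_mul_integral_abs_of_tendsto hα1
      (fun X hX => (hKint X hX).sub ((intervalIntegrable_rpow' (by linarith)).const_mul cα)) hdiff
  rw [Metric.tendsto_nhds]
  intro ε hε
  obtain ⟨U, hUε, hU⟩ := (((((tendsto_rpow_neg_atTop hα0).const_mul (2 * p)).mul_const
    (cα + |cα|)).eventually (gt_mem_nhds (by simpa using hε))).and (eventually_gt_atTop 0)).exists
  have hX : Tendsto (fun ω => U / ω) (𝓝[>] 0) atTop := by
    simpa only [div_eq_mul_inv] using tendsto_inv_nhdsGT_zero.const_mul_atTop hU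
  have hbound : Tendsto (fun ω => U ^ (1 - α) * ((U / ω) ^ (α - 1) *
      ∫ t in (0:ℝ)..U / ω, |K t - cα * t ^ (-α)|) +
      2 * p * U ^ (-α) * ((U / ω) ^ α * K (U / ω) + |cα|)) (𝓝[>] 0)
      (𝓝 (U ^ (1 - α) * 0 + 2 * p * U ^ (-α) * (cα + |cα|))) :=
    ((hR.comp hX).const_mul _).add (((hKα.comp hX).add_const |cα|).const_mul _)
  rw [mul_zero, zero_add] at hbound
  filter_upwards [hbound.eventually (gt_mem_nhds hUε), hX.eventually (eventually_ge_atTop T),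
    self_mem_nhdsWithin] with ω hlt hXT (hω : 0 < ω)
  have hXpos : 0 < U / ω := div_pos hU hω
  have key := hφ.abs_rpow_mul_transform_sub_le (cα := cα) hα0.le hα1 hω hXpos (hKint _ hXpos.le)
    (hKdec.mono (Ici_subset_Ici.2 hXT)) (fun t ht => (hKpos t (hXpos.trans_le ht)).le)
    (hKφ ω hω) hC
  rw [Real.dist_eq]
  exact key.trans_lt ((rpow_one_sub_mul_add_rpow_neg_mul_eq hω hU).trans_lt hlt)

end IsOscillatory

theorem isOscillatory_cos : IsOscillatory cos π :=
  ⟨pi_pos, continuous_cos, abs_cos_le_one, cos_antiperiodic⟩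

theorem isOscillatory_sin : IsOscillatory sin π :=
  ⟨pi_pos, continuous_sin, abs_sin_le_one, sin_antiperiodic⟩

theorem exists_tendsto_integral_rpow_neg_mul {φ : ℝ → ℝ} {p α : ℝ} (hφ : IsOscillatory φ p)
    (hα0 : 0 < α) (hα1 : α < 1) :
    ∃ C, Tendsto (fun A => ∫ u in (0:ℝ)..A, u ^ (-α) * φ u) atTop (𝓝 C) :=
  hφ.exists_tendsto_integral_mul (a := 1)
    ((antitoneOn_rpow_Ioi_of_exponent_nonpos (by linarith)).mono
      fun _ hu => mem_Ioi.2 (one_pos.trans_le hu))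
    (fun u hu => rpow_nonneg (zero_le_one.trans hu) _) (tendsto_rpow_neg_atTop hα0)
    fun _ _ => (intervalIntegrable_rpow' (by linarith)).mul_continuousOn
      hφ.continuous.continuousOn

/-- Pairing `u` with `u + π` shows that each block `[2πn, 2πn + 2π]` contributes positively. -/
theorem pos_of_tendsto_integral_mul_sin {f : ℝ → ℝ} (hf : StrictAntiOn f (Ioi 0))
    (hint : ∀ b ≥ 0, IntervalIntegrable (fun u => f u * sin u) volume 0 b) {L : ℝ}
    (hL : Tendsto (fun b => ∫ u in (0:ℝ)..b, f u * sin u) atTop (𝓝 L)) : 0 < L := by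
  have hint' : ∀ c d, 0 ≤ c → 0 ≤ d → IntervalIntegrable (fun u => f u * sin u) volume c d :=
    fun c d hc hd => (hint c hc).symm.trans (hint d hd)
  have hblock : ∀ n : ℕ, 0 < ∫ u in 2 * π * n..2 * π * n + 2 * π, f u * sin u := by
    intro n
    set c : ℝ := 2 * π * n
    have hc : 0 ≤ c := by positivity
    have h1 := hint' c (c + π) hc (by positivity)
    have h2 := hint' (c + π) (c + π + π) (by positivity) (by positivity)
    have hshift : IntervalIntegrable (fun u => (f u - f (u + π)) * sin u) volume c (c + π) := by
      have := h1.add (by simpa using h2.comp_add_right π)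
      exact this.congr fun u _ => by ring
    rw [show c + 2 * π = c + π + π by ring, ← integral_add_adjacent_intervals h1 h2,
      sin_antiperiodic.integral_mul_add_integral_mul h1 h2]
    refine intervalIntegral_pos_of_pos_on hshift (fun u hu => mul_pos ?_ ?_) (by linarith [pi_pos])
    · exact sub_pos.2 (hf (hc.trans_lt hu.1) (mem_Ioi.2 (by linarith [hc.trans_lt hu.1, pi_pos]))
        (by linarith [pi_pos]))
    · rw [← sin_sub_nat_mul_two_pi u n]
      exact sin_pos_of_pos_of_lt_pi (by linarith [hu.1]) (by linarith [hu.2])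
  set S : ℕ → ℝ := fun n => ∫ u in (0:ℝ)..2 * π * n, f u * sin u
  have hS : ∀ n : ℕ, S (n + 1) = S n + ∫ u in 2 * π * n..2 * π * n + 2 * π, f u * sin u := by
    intro n
    have : 2 * π * ((n + 1 : ℕ) : ℝ) = 2 * π * n + 2 * π := by push_cast; ring
    simp only [S, this]
    exact (integral_add_adjacent_intervals (hint' _ _ le_rfl (by positivity))
      (hint' _ _ (by positivity) (by positivity))).symm
  have hmono : Monotone S := monotone_nat_of_le_succ fun n => by linarith [hS n, hblock n]
  have hSL : Tendsto S atTop (𝓝 L) :=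
    hL.comp (tendsto_natCast_atTop_atTop.const_mul_atTop (by positivity))
  have h1 : 0 < S 1 := by simpa [S] using hblock 0
  exact h1.trans_le (ge_of_tendsto hSL (eventually_atTop.2 ⟨1, fun n hn => hmono hn⟩))

theorem rpow_sub_one_mul_sin {β : ℝ} (hβ : β ≠ 0) (u : ℝ) :
    u ^ (β - 1) * sin u = u ^ β * sinc u := by
  rcases eq_or_ne u 0 with rfl | hu
  · simp [zero_rpow hβ]
  · rw [rpow_sub_one hu, sinc_of_ne_zero hu]
    ring

theorem integral_rpow_neg_mul_cos {α A : ℝ} (hα0 : α ≠ 0) (hα1 : α < 1) (hA : 0 ≤ A) :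
    ∫ u in (0:ℝ)..A, u ^ (-α) * cos u =
      A ^ (-α) * sin A + α * ∫ u in (0:ℝ)..A, u ^ (-α - 1) * sin u := by
  have hsin : IntervalIntegrable (fun u => u ^ (-α - 1) * sin u) volume 0 A := by
    simp only [rpow_sub_one_mul_sin (neg_ne_zero.2 hα0)]
    exact (intervalIntegrable_rpow' (by linarith)).mul_continuousOn continuous_sinc.continuousOn
  have hcos : IntervalIntegrable (fun u => u ^ (-α) * cos u) volume 0 A :=
    (intervalIntegrable_rpow' (by linarith)).mul_continuousOn continuous_cos.continuousOn
  have hcont : Continuous fun u : ℝ => u ^ (-α) * sin u := by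
    have := rpow_sub_one_mul_sin (β := 1 - α) (by linarith)
    simp only [show 1 - α - 1 = -α by ring] at this
    simp only [this]
    exact (continuous_rpow_const (by linarith)).mul continuous_sinc
  have hFTC := integral_eq_sub_of_hasDerivAt_of_le hA hcont.continuousOn
    (f' := fun u => -α * (u ^ (-α - 1) * sin u) + u ^ (-α) * cos u)
    (fun u hu => ((hasDerivAt_rpow_const (Or.inl hu.1.ne')).fun_mul (hasDerivAt_sin u)).congr_deriv
      (by ring))
    ((hsin.const_mul (-α)).add hcos)
  rw [integral_add (hsin.const_mul (-α)) hcos, intervalIntegral.integral_const_mul] at hFTC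
  simp only [sin_zero, mul_zero, sub_zero] at hFTC
  linarith

theorem pos_of_tendsto_integral_rpow_neg_mul_sin {α C : ℝ} (hα0 : 0 < α) (hα1 : α < 1)
    (hC : Tendsto (fun A => ∫ u in (0:ℝ)..A, u ^ (-α) * sin u) atTop (𝓝 C)) : 0 < C :=
  pos_of_tendsto_integral_mul_sin (strictAntiOn_rpow_Ioi_of_exponent_neg (by linarith))
    (fun _ _ => (intervalIntegrable_rpow' (by linarith)).mul_continuousOn
      continuous_sin.continuousOn) hC

/-- Integrating by parts, `C = α ∫₀^∞ u^(-α-1) sin u du`, and the latter is positive. -/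
theorem pos_of_tendsto_integral_rpow_neg_mul_cos {α C : ℝ} (hα0 : 0 < α) (hα1 : α < 1)
    (hC : Tendsto (fun A => ∫ u in (0:ℝ)..A, u ^ (-α) * cos u) atTop (𝓝 C)) : 0 < C := by
  have hint : ∀ b, IntervalIntegrable (fun u => u ^ (-α - 1) * sin u) volume 0 b := fun b => by
    simp only [rpow_sub_one_mul_sin (neg_ne_zero.2 hα0.ne')]
    exact (intervalIntegrable_rpow' (by linarith)).mul_continuousOn continuous_sinc.continuousOn
  obtain ⟨J, hJ⟩ := isOscillatory_sin.exists_tendsto_integral_mul (a := 1)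
    ((antitoneOn_rpow_Ioi_of_exponent_nonpos (by linarith)).mono
      fun _ hu => mem_Ioi.2 (one_pos.trans_le hu))
    (fun u hu => rpow_nonneg (zero_le_one.trans hu) _)
    (by simpa only [neg_add'] using tendsto_rpow_neg_atTop (y := α + 1) (by linarith))
    fun b _ => hint b
  have hJpos : 0 < J := pos_of_tendsto_integral_mul_sin
    (strictAntiOn_rpow_Ioi_of_exponent_neg (by linarith)) (fun b _ => hint b) hJ
  have hboundary : Tendsto (fun A : ℝ => A ^ (-α) * sin A) atTop (𝓝 0) :=
    (tendsto_rpow_neg_atTop hα0).zero_mul_isBoundedUnder_le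
      (isBoundedUnder_of ⟨1, fun A => by simpa using abs_sin_le_one A⟩)
  have hIBP : Tendsto (fun A => ∫ u in (0:ℝ)..A, u ^ (-α) * cos u) atTop (𝓝 (0 + α * J)) :=
    (hboundary.add (hJ.const_mul α)).congr' <| (eventually_ge_atTop 0).mono fun A hA =>
      (integral_rpow_neg_mul_cos hα0.ne' hα1 hA).symm
  rw [tendsto_nhds_unique hC hIBP, zero_add]
  exact mul_pos hα0 hJpos

theorem abelian_power_law_case_general
    (α : ℝ) (hα : α ∈ Set.Ioo (0:ℝ) 1)
    (K : ℝ → ℝ)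
    (hKloc : ∀ A > 0, IntegrableOn K (Ioc 0 A))
    (hKpos : ∀ t > 0, 0 < K t)
    (hKdec : ∃ T > 0, AntitoneOn K (Ici T))
    (cα : ℝ)
    (hKα : Tendsto (fun t => t ^ α * K t) atTop (nhds cα))
    (Kcos Ksin : ℝ → ℝ)
    (hKcos : ∀ ω > 0, Tendsto (fun A => ∫ t in (0:ℝ)..A, K t * Real.cos (ω * t))
      atTop (nhds (Kcos ω)))
    (hKsin : ∀ ω > 0, Tendsto (fun A => ∫ t in (0:ℝ)..A, K t * Real.sin (ω * t))
      atTop (nhds (Ksin ω))) :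
    ∃ C₁ C₂ : ℝ, 0 < C₁ ∧ 0 < C₂ ∧
      Tendsto (fun A => ∫ u in (0:ℝ)..A, u ^ (-α) * Real.cos u) atTop (nhds C₁) ∧
      Tendsto (fun A => ∫ u in (0:ℝ)..A, u ^ (-α) * Real.sin u) atTop (nhds C₂) ∧
      Tendsto (fun ω => ω ^ (1 - α) * Kcos ω) (nhdsWithin 0 (Ioi 0)) (nhds (cα * C₁)) ∧
      Tendsto (fun ω => ω ^ (1 - α) * Ksin ω) (nhdsWithin 0 (Ioi 0)) (nhds (cα * C₂)) := by
  obtain ⟨hα0, hα1⟩ := hα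
  obtain ⟨T, -, hT⟩ := hKdec
  obtain ⟨C₁, hC₁⟩ := exists_tendsto_integral_rpow_neg_mul isOscillatory_cos hα0 hα1
  obtain ⟨C₂, hC₂⟩ := exists_tendsto_integral_rpow_neg_mul isOscillatory_sin hα0 hα1
  exact ⟨C₁, C₂, pos_of_tendsto_integral_rpow_neg_mul_cos hα0 hα1 hC₁,
    pos_of_tendsto_integral_rpow_neg_mul_sin hα0 hα1 hC₂, hC₁, hC₂,
    isOscillatory_cos.tendsto_rpow_mul_transform hα0 hα1 hKloc hKpos hT hKα hKcos hC₁,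
    isOscillatory_sin.tendsto_rpow_mul_transform hα0 hα1 hKloc hKpos hT hKα hKsin hC₂⟩

/-- Abelian theorem in the power-law case: if `t^α·K(t) → c_α ∈ (0,∞)` with
`α ∈ (0,1)`, then the improper integrals `C₁ = ∫₀^∞ u^{−α}cos u du` and
`C₂ = ∫₀^∞ u^{−α}sin u du` exist and are positive, and
`ω^{1−α}𝒦cos(ω) → c_α C₁`, `ω^{1−α}𝒦sin(ω) → c_α C₂` as `ω → 0⁺`. -/
theorem abelian_power_law_case
    (α : ℝ) (hα : α ∈ Set.Ioo (0:ℝ) 1)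
    (K : ℝ → ℝ)
    (hKloc : ∀ A > 0, IntegrableOn K (Ioc 0 A))
    (hKpos : ∀ t > 0, 0 < K t)
    (hKdec : ∃ T > 0, AntitoneOn K (Ici T))
    (cα : ℝ) (hcα : 0 < cα)
    (hKα : Tendsto (fun t => t ^ α * K t) atTop (nhds cα))
    (Kcos Ksin : ℝ → ℝ)
    (hKcos : ∀ ω > 0, Tendsto (fun A => ∫ t in (0:ℝ)..A, K t * Real.cos (ω * t))
      atTop (nhds (Kcos ω)))
    (hKsin : ∀ ω > 0, Tendsto (fun A => ∫ t in (0:ℝ)..A, K t * Real.sin (ω * t))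
      atTop (nhds (Ksin ω))) :
    ∃ C₁ C₂ : ℝ, 0 < C₁ ∧ 0 < C₂ ∧
      Tendsto (fun A => ∫ u in (0:ℝ)..A, u ^ (-α) * Real.cos u) atTop (nhds C₁) ∧
      Tendsto (fun A => ∫ u in (0:ℝ)..A, u ^ (-α) * Real.sin u) atTop (nhds C₂) ∧
      Tendsto (fun ω => ω ^ (1 - α) * Kcos ω) (nhdsWithin 0 (Ioi 0)) (nhds (cα * C₁)) ∧
      Tendsto (fun ω => ω ^ (1 - α) * Ksin ω) (nhdsWithin 0 (Ioi 0)) (nhds (cα * C₂)) :=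
  abelian_power_law_case_general α hα K hKloc hKpos hKdec cα hKα Kcos Ksin hKcos hKsin
end

section
/- Let μ be a positive Borel measure on [0,∞) and define K(t) = ∫₀^∞ e^{−tx} μ(dx) for t > 0. Assume K(t) < ∞ for all t > 0, K is integrable on (0,1), and K(t) decreases to 0 as t → ∞. Then μ([0,1]) < ∞, ∫₁^∞ x⁻¹ μ(dx) < ∞, μ({0}) = 0, and for every ω ≠ 0 the improper integrals converge with lim_{A→∞} ∫₀^A K(t)cos(ωt) dt = ∫₀^∞ x/(x² + ω²) μ(dx) and lim_{A→∞} ∫₀^A K(t)sin(ωt) dt = ∫₀^∞ ω/(x² + ω²) μ(dx), both right-hand sides being finite. -/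
/-!
For `t > 0` one has `K(t) e^{iωt} = ∫ e^{-(x - iω)t} μ(dx)`, so by Fubini the truncated transform
`∫₀^A K(t) e^{iωt} dt` equals `∫ (1 - e^{-(x - iω)A}) / (x - iω) μ(dx)`. The integrands are
bounded by `2 / |x - iω|`, which is `μ`-integrable: `μ` is finite on `[0, 1]` because `e^{-x}` is
integrable, and `e⁻¹ ∫_{[1,∞)} x⁻¹ dμ ≤ ∫₀¹ K` by Tonelli. Since `μ {0} ≤ K(t) → 0`, they converge
`μ`-a.e. to `1 / (x - iω) = (x + iω) / (x² + ω²)`, and dominated convergence gives both transforms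
at once.
-/

open MeasureTheory Filter Set Topology
open Complex (I)

namespace LaplaceFourier

theorem integral_cexp_neg_mul {z : ℂ} (hz : z ≠ 0) (A : ℝ) :
    ∫ t in (0:ℝ)..A, Complex.exp (-(z * t)) = (1 - Complex.exp (-(z * A))) / z := by
  simp_rw [← neg_mul]
  rw [integral_exp_mul_complex (neg_ne_zero.mpr hz), Complex.ofReal_zero, mul_zero,
    Complex.exp_zero, neg_mul, div_neg, ← neg_div, neg_sub]

theorem norm_one_sub_cexp_div_le {z : ℂ} (hz : 0 ≤ z.re) {A : ℝ} (hA : 0 ≤ A) :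
    ‖(1 - Complex.exp (-(z * A))) / z‖ ≤ 2 * ‖z‖⁻¹ := by
  have hexp : ‖Complex.exp (-(z * A))‖ ≤ 1 := by
    rw [Complex.norm_exp, Real.exp_le_one_iff]
    simpa using mul_nonneg hz hA
  rw [norm_div, div_eq_mul_inv]
  gcongr
  calc ‖1 - Complex.exp (-(z * A))‖ ≤ ‖(1:ℂ)‖ + ‖Complex.exp (-(z * A))‖ := norm_sub_le _ _
    _ ≤ 2 := by rw [norm_one]; linarith

theorem tendsto_one_sub_cexp_div {z : ℂ} (hz : 0 < z.re) :
    Tendsto (fun A : ℝ => (1 - Complex.exp (-(z * A))) / z) atTop (𝓝 z⁻¹) := by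
  have hexp : Tendsto (fun A : ℝ => Complex.exp (-(z * A))) atTop (𝓝 0) := by
    rw [tendsto_zero_iff_norm_tendsto_zero]
    simp only [Complex.norm_exp, Complex.neg_re, Complex.mul_re, Complex.ofReal_re,
      Complex.ofReal_im, mul_zero, sub_zero]
    exact Real.tendsto_exp_neg_atTop_nhds_zero.comp (tendsto_id.const_mul_atTop hz)
  have h := (tendsto_const_nhds (x := (1:ℂ))).sub hexp |>.div_const z
  rwa [sub_zero, one_div] at h

theorem cexp_neg_sub_mul_I_mul (x ω t : ℝ) :
    Complex.exp (-(((x:ℂ) - ω * I) * t)) = Real.exp (-(t * x)) * Complex.exp ((ω * t : ℝ) * I) := by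
  rw [Complex.ofReal_exp, ← Complex.exp_add]
  push_cast
  ring_nf

theorem norm_cexp_neg_sub_mul_I_mul (x ω t : ℝ) :
    ‖Complex.exp (-(((x:ℂ) - ω * I) * t))‖ = Real.exp (-(t * x)) := by
  rw [cexp_neg_sub_mul_I_mul, norm_mul, Complex.norm_exp_ofReal_mul_I, mul_one,
    Complex.norm_real, Real.norm_of_nonneg (Real.exp_nonneg _)]

theorem re_inv_sub_mul_I (x ω : ℝ) : ((x:ℂ) - ω * I)⁻¹.re = x / (x ^ 2 + ω ^ 2) := by
  simp [Complex.inv_re, Complex.normSq_apply, sq]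

theorem im_inv_sub_mul_I (x ω : ℝ) : ((x:ℂ) - ω * I)⁻¹.im = ω / (x ^ 2 + ω ^ 2) := by
  simp [Complex.inv_im, Complex.normSq_apply, sq]

theorem AntitoneOn.integrableOn_Ioc {f : ℝ → ℝ} {a b : ℝ} (hab : a < b)
    (hf : AntitoneOn f (Ioi a)) (hint : IntegrableOn f (Ioo a b)) (c : ℝ) :
    IntegrableOn f (Ioc a c) := by
  have hcpt : IntegrableOn f (Icc ((a + b) / 2) (max b c)) :=
    (hf.mono fun x hx => by simp only [mem_Ioi]; linarith [hx.1]).integrableOn_isCompact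
      isCompact_Icc
  refine (hint.union hcpt).mono_set fun x hx => ?_
  rcases lt_or_ge x b with hxb | hxb
  · exact Or.inl ⟨hx.1, hxb⟩
  · exact Or.inr ⟨by linarith, hx.2.trans (le_max_right _ _)⟩

variable {μ : Measure ℝ} {K : ℝ → ℝ}

theorem measure_Icc_lt_top_of_integrableOn_exp {t : ℝ} (ht : 0 ≤ t)
    (h : IntegrableOn (fun x => Real.exp (-(t * x))) (Ici 0) μ) (b : ℝ) : μ (Icc 0 b) < ⊤ := by
  have h1 : IntegrableOn (fun _ => (1:ℝ)) (Icc 0 b) μ := by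
    refine ((h.mono_set Icc_subset_Ici_self).const_mul (Real.exp (t * b))).mono'
      aestronglyMeasurable_const ?_
    filter_upwards [ae_restrict_mem measurableSet_Icc] with x hx
    rw [norm_one, ← Real.exp_add, Real.one_le_exp_iff]
    nlinarith [hx.2]
  simpa using h1

theorem isFiniteMeasureOnCompacts_restrict_Ici (h : ∀ b, μ (Icc 0 b) < ⊤) :
    IsFiniteMeasureOnCompacts (μ.restrict (Ici 0)) := by
  constructor
  intro s hs
  obtain ⟨b, hb⟩ := hs.bddAbove
  have hsub : s ∩ Ici 0 ⊆ Icc 0 b := fun x hx => ⟨hx.2, hb hx.1⟩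
  rw [Measure.restrict_apply' measurableSet_Ici]
  exact (measure_mono hsub).trans_lt (h b)

theorem integrableOn_inv_norm_sub_mul_I {ω : ℝ} (hω : ω ≠ 0) (h1 : μ (Icc 0 1) < ⊤)
    (hinv : IntegrableOn (fun x : ℝ => x⁻¹) (Ici 1) μ) :
    IntegrableOn (fun x : ℝ => ‖(x:ℂ) - ω * I‖⁻¹) (Ici 0) μ := by
  have hmeas : ∀ s, AEStronglyMeasurable (fun x : ℝ => ‖(x:ℂ) - ω * I‖⁻¹) (μ.restrict s) :=
    fun s => by fun_prop
  have hIcc : IntegrableOn (fun x : ℝ => ‖(x:ℂ) - ω * I‖⁻¹) (Icc 0 1) μ := by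
    refine (integrableOn_const (C := |ω|⁻¹) h1.ne).mono' (hmeas _) (ae_of_all _ fun x => ?_)
    have : |ω| ≤ ‖(x:ℂ) - ω * I‖ := by simpa using Complex.abs_im_le_norm ((x:ℂ) - ω * I)
    rw [norm_inv, norm_norm]
    gcongr
  have hIci : IntegrableOn (fun x : ℝ => ‖(x:ℂ) - ω * I‖⁻¹) (Ici 1) μ := by
    refine hinv.mono' (hmeas _) ?_
    filter_upwards [ae_restrict_mem measurableSet_Ici] with x hx
    have hx0 : (0:ℝ) < x := by linarith [mem_Ici.mp hx]
    have : x ≤ ‖(x:ℂ) - ω * I‖ := by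
      simpa [abs_of_pos hx0] using Complex.abs_re_le_norm ((x:ℂ) - ω * I)
    rw [norm_inv, norm_norm]
    gcongr
  rw [← Icc_union_Ici_eq_Ici zero_le_one]
  exact hIcc.union hIci

theorem exp_neg_one_mul_inv_le_lintegral {x : ℝ} (hx : 1 ≤ x) :
    ENNReal.ofReal (Real.exp (-1) * x⁻¹)
      ≤ ∫⁻ t in Ioo 0 1, ENNReal.ofReal (Real.exp (-(t * x))) := by
  have hx0 : 0 < x := by linarith
  calc ENNReal.ofReal (Real.exp (-1) * x⁻¹)
      = ∫⁻ _ in Ioo 0 x⁻¹, ENNReal.ofReal (Real.exp (-1)) := by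
        rw [setLIntegral_const, Real.volume_Ioo, sub_zero, ENNReal.ofReal_mul (Real.exp_nonneg _)]
    _ ≤ ∫⁻ t in Ioo 0 x⁻¹, ENNReal.ofReal (Real.exp (-(t * x))) := by
        refine setLIntegral_mono (by fun_prop) fun t ht => ?_
        have : t * x ≤ 1 := by
          simpa [hx0.ne'] using mul_le_mul_of_nonneg_right ht.2.le hx0.le
        gcongr
    _ ≤ ∫⁻ t in Ioo 0 1, ENNReal.ofReal (Real.exp (-(t * x))) :=
        lintegral_mono_set (Ioo_subset_Ioo_right (inv_le_one_of_one_le₀ hx))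

theorem integrableOn_mul_cexp {A : ℝ} (hKA : IntegrableOn K (Ioc 0 A)) (ω : ℝ) :
    IntegrableOn (fun t => (K t : ℂ) * Complex.exp ((ω * t : ℝ) * I)) (Ioc 0 A) :=
  hKA.ofReal.mul_bdd (by fun_prop) (ae_of_all _ fun t => (Complex.norm_exp_ofReal_mul_I _).le)

theorem re_integral_mul_cexp {A : ℝ} (hA : 0 ≤ A) (hKA : IntegrableOn K (Ioc 0 A)) (ω : ℝ) :
    (∫ t in Ioc 0 A, (K t : ℂ) * Complex.exp ((ω * t : ℝ) * I)).re
      = ∫ t in (0:ℝ)..A, K t * Real.cos (ω * t) := by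
  rw [intervalIntegral.integral_of_le hA, ← RCLike.re_to_complex,
    ← integral_re (integrableOn_mul_cexp hKA ω)]
  simp only [RCLike.re_to_complex, Complex.re_ofReal_mul, Complex.exp_ofReal_mul_I_re]

theorem im_integral_mul_cexp {A : ℝ} (hA : 0 ≤ A) (hKA : IntegrableOn K (Ioc 0 A)) (ω : ℝ) :
    (∫ t in Ioc 0 A, (K t : ℂ) * Complex.exp ((ω * t : ℝ) * I)).im
      = ∫ t in (0:ℝ)..A, K t * Real.sin (ω * t) := by
  rw [intervalIntegral.integral_of_le hA, ← RCLike.im_to_complex,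
    ← integral_im (integrableOn_mul_cexp hKA ω)]
  simp only [RCLike.im_to_complex, Complex.im_ofReal_mul, Complex.exp_ofReal_mul_I_im]

structure IsLaplaceTransform (μ : Measure ℝ) (K : ℝ → ℝ) : Prop where
  integrableOn : ∀ t > 0, IntegrableOn (fun x => Real.exp (-(t * x))) (Ici 0) μ
  eq_integral : ∀ t > 0, K t = ∫ x in Ici (0:ℝ), Real.exp (-(t * x)) ∂μ

namespace IsLaplaceTransform

variable (hK : IsLaplaceTransform μ K)
include hK

theorem ofReal_eq_lintegral {t : ℝ} (ht : 0 < t) :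
    ENNReal.ofReal (K t) = ∫⁻ x in Ici 0, ENNReal.ofReal (Real.exp (-(t * x))) ∂μ := by
  rw [hK.eq_integral t ht, ofReal_integral_eq_lintegral_ofReal (hK.integrableOn t ht)
    (ae_of_all _ fun x => Real.exp_nonneg _)]

theorem measure_singleton_zero_eq_zero (hK0 : Tendsto K atTop (𝓝 0)) : μ {0} = 0 := by
  have hle : ∀ t > 0, μ {0} ≤ ENNReal.ofReal (K t) := fun t ht => by
    rw [hK.ofReal_eq_lintegral ht]
    calc μ {0} = ∫⁻ x in {0}, ENNReal.ofReal (Real.exp (-(t * x))) ∂μ := by simp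
      _ ≤ _ := lintegral_mono_set (by simp)
  have hlim : Tendsto (fun t => ENNReal.ofReal (K t)) atTop (𝓝 0) := by
    simpa using ENNReal.tendsto_ofReal hK0
  exact nonpos_iff_eq_zero.mp (ge_of_tendsto hlim ((eventually_gt_atTop 0).mono hle))

variable [SigmaFinite (μ.restrict (Ici 0))]

theorem integrableOn_inv_Ici_one (hKint : IntegrableOn K (Ioo 0 1)) :
    IntegrableOn (fun x : ℝ => x⁻¹) (Ici 1) μ := by
  have htonelli :
      ∫⁻ x in Ici 0, (∫⁻ t in Ioo 0 1, ENNReal.ofReal (Real.exp (-(t * x)))) ∂μ < ⊤ := by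
    rw [← lintegral_lintegral_swap (μ := volume.restrict (Ioo (0:ℝ) 1))
      (f := fun t x => ENNReal.ofReal (Real.exp (-(t * x)))) (by fun_prop)]
    calc ∫⁻ t in Ioo 0 1, ∫⁻ x in Ici 0, ENNReal.ofReal (Real.exp (-(t * x))) ∂μ
        = ∫⁻ t in Ioo 0 1, ENNReal.ofReal (K t) :=
          setLIntegral_congr_fun measurableSet_Ioo fun t ht => (hK.ofReal_eq_lintegral ht.1).symm
      _ ≤ ∫⁻ t in Ioo 0 1, ‖K t‖ₑ := lintegral_mono fun t => Real.ofReal_le_enorm (K t)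
      _ < ⊤ := hKint.2
  have hbound : ∫⁻ x in Ici 1, ENNReal.ofReal (Real.exp (-1) * x⁻¹) ∂μ < ⊤ := by
    refine lt_of_le_of_lt ?_ htonelli
    calc ∫⁻ x in Ici 1, ENNReal.ofReal (Real.exp (-1) * x⁻¹) ∂μ
        ≤ ∫⁻ x in Ici 1, (∫⁻ t in Ioo 0 1, ENNReal.ofReal (Real.exp (-(t * x)))) ∂μ :=
          setLIntegral_mono' measurableSet_Ici fun x hx => exp_neg_one_mul_inv_le_lintegral hx
      _ ≤ _ := lintegral_mono_set (Ici_subset_Ici.mpr zero_le_one)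
  have hint : IntegrableOn (fun x : ℝ => Real.exp (-1) * x⁻¹) (Ici 1) μ := by
    refine ⟨by fun_prop, (hasFiniteIntegral_iff_ofReal ?_).mpr hbound⟩
    filter_upwards [ae_restrict_mem measurableSet_Ici] with x hx
    have : (0:ℝ) < x := by linarith [mem_Ici.mp hx]
    positivity
  exact (integrable_const_mul_iff (Real.exp_pos _).ne'.isUnit _).mp hint

theorem integral_mul_cexp_eq_integral_integral {A : ℝ} (hKA : IntegrableOn K (Ioc 0 A))
    (ω : ℝ) :
    ∫ t in Ioc 0 A, (K t : ℂ) * Complex.exp ((ω * t : ℝ) * I)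
      = ∫ x in Ici 0, (∫ t in Ioc 0 A, Complex.exp (-(((x:ℂ) - ω * I) * t))) ∂μ := by
  set F : ℝ → ℝ → ℂ := fun t x => Complex.exp (-(((x:ℂ) - ω * I) * t))
  have hF : Integrable (Function.uncurry F)
      ((volume.restrict (Ioc 0 A)).prod (μ.restrict (Ici 0))) := by
    have hcont : Continuous (Function.uncurry F) := by fun_prop
    rw [integrable_prod_iff hcont.aestronglyMeasurable]
    refine ⟨?_, ?_⟩
    · filter_upwards [ae_restrict_mem measurableSet_Ioc] with t ht
      exact (hK.integrableOn t ht.1).mono' (by fun_prop)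
        (ae_of_all _ fun x => (norm_cexp_neg_sub_mul_I_mul x ω t).le)
    · refine hKA.congr ?_
      filter_upwards [ae_restrict_mem measurableSet_Ioc] with t ht
      simp only [F, Function.uncurry_apply_pair, norm_cexp_neg_sub_mul_I_mul,
        hK.eq_integral t ht.1]
  rw [← integral_integral_swap hF]
  refine setIntegral_congr_fun measurableSet_Ioc fun t ht => ?_
  simp only [F, cexp_neg_sub_mul_I_mul, integral_mul_const, integral_complex_ofReal,
    hK.eq_integral t ht.1]

theorem tendsto_integral_mul_cexp (hKloc : ∀ A, IntegrableOn K (Ioc 0 A)) (h0 : μ {0} = 0)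
    {ω : ℝ} (hdom : IntegrableOn (fun x : ℝ => ‖(x:ℂ) - ω * I‖⁻¹) (Ici 0) μ) :
    Tendsto (fun A => ∫ t in Ioc 0 A, (K t : ℂ) * Complex.exp ((ω * t : ℝ) * I)) atTop
      (𝓝 (∫ x in Ici 0, ((x:ℂ) - ω * I)⁻¹ ∂μ)) := by
  have hre : ∀ x : ℝ, ((x:ℂ) - ω * I).re = x := fun x => by simp
  have hpos : ∀ᵐ x ∂μ.restrict (Ici 0), 0 < x := by
    rw [ae_restrict_iff' measurableSet_Ici]
    filter_upwards [measure_eq_zero_iff_ae_notMem.mp h0] with x hx0 hx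
    exact lt_of_le_of_ne hx (Ne.symm hx0)
  have hclosed : ∀ᶠ A in atTop, ∫ t in Ioc 0 A, (K t : ℂ) * Complex.exp ((ω * t : ℝ) * I)
      = ∫ x in Ici 0, (1 - Complex.exp (-(((x:ℂ) - ω * I) * A))) / ((x:ℂ) - ω * I) ∂μ := by
    filter_upwards [eventually_ge_atTop 0] with A hA
    rw [hK.integral_mul_cexp_eq_integral_integral (hKloc A)]
    refine integral_congr_ae ?_
    filter_upwards [hpos] with x hx
    rw [← intervalIntegral.integral_of_le hA,
      integral_cexp_neg_mul (Complex.ne_zero_of_re_pos ((hre x).symm ▸ hx))]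
  refine Tendsto.congr' (EventuallyEq.symm hclosed) ?_
  refine tendsto_integral_filter_of_dominated_convergence _
    (Eventually.of_forall fun A => (by fun_prop : Measurable _).aestronglyMeasurable) ?_
    (hdom.const_mul 2) ?_
  · filter_upwards [eventually_ge_atTop 0] with A hA
    filter_upwards [ae_restrict_mem measurableSet_Ici] with x hx
    exact norm_one_sub_cexp_div_le ((hre x).symm ▸ hx) hA
  · filter_upwards [hpos] with x hx
    exact tendsto_one_sub_cexp_div ((hre x).symm ▸ hx)

end IsLaplaceTransform

end LaplaceFourier

open LaplaceFourier

/-- Fourier cosine and sine transforms of a completely monotonic kernel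
`K(t) = ∫₀^∞ e^{−tx} μ(dx)`: `μ([0,1]) < ∞`, `∫₁^∞ x⁻¹ μ(dx) < ∞`,
`μ({0}) = 0`, and for every `ω ≠ 0`,
`𝒦cos(ω) = ∫₀^∞ x/(x²+ω²) μ(dx)` and `𝒦sin(ω) = ∫₀^∞ ω/(x²+ω²) μ(dx)`
as convergent improper integrals. -/
theorem completely_monotonic_kernel_fourier_transforms
    (μ : Measure ℝ) (K : ℝ → ℝ)
    (hKfin : ∀ t > 0, IntegrableOn (fun x => Real.exp (-(t * x))) (Ici 0) μ)
    (hK : ∀ t > 0, K t = ∫ x in Ici (0:ℝ), Real.exp (-(t * x)) ∂μ)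
    (hKint : IntegrableOn K (Ioo 0 1))
    (hKanti : AntitoneOn K (Ioi 0))
    (hK0 : Tendsto K atTop (nhds 0)) :
    μ (Icc (0:ℝ) 1) < ⊤ ∧
    IntegrableOn (fun x : ℝ => x⁻¹) (Ici 1) μ ∧
    μ {0} = 0 ∧
    ∀ ω : ℝ, ω ≠ 0 →
      IntegrableOn (fun x => x / (x ^ 2 + ω ^ 2)) (Ici 0) μ ∧
      IntegrableOn (fun x => ω / (x ^ 2 + ω ^ 2)) (Ici 0) μ ∧
      Tendsto (fun A => ∫ t in (0:ℝ)..A, K t * Real.cos (ω * t)) atTop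
        (nhds (∫ x in Ici (0:ℝ), x / (x ^ 2 + ω ^ 2) ∂μ)) ∧
      Tendsto (fun A => ∫ t in (0:ℝ)..A, K t * Real.sin (ω * t)) atTop
        (nhds (∫ x in Ici (0:ℝ), ω / (x ^ 2 + ω ^ 2) ∂μ)) := by
  have hμK : IsLaplaceTransform μ K := ⟨hKfin, hK⟩
  have hfin := measure_Icc_lt_top_of_integrableOn_exp zero_le_one (hKfin 1 one_pos)
  have : IsFiniteMeasureOnCompacts (μ.restrict (Ici 0)) :=
    isFiniteMeasureOnCompacts_restrict_Ici hfin
  have hinv := hμK.integrableOn_inv_Ici_one hKint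
  have h0 := hμK.measure_singleton_zero_eq_zero hK0
  have hKloc := hKanti.integrableOn_Ioc one_pos hKint
  refine ⟨hfin 1, hinv, h0, fun ω hω => ?_⟩
  have hdom := integrableOn_inv_norm_sub_mul_I hω (hfin 1) hinv
  have hL : IntegrableOn (fun x : ℝ => ((x:ℂ) - ω * I)⁻¹) (Ici 0) μ :=
    hdom.mono' (by fun_prop) (ae_of_all _ fun x => (norm_inv _).le)
  have hlim := hμK.tendsto_integral_mul_cexp hKloc h0 hdom
  refine ⟨by simpa only [IntegrableOn, RCLike.re_to_complex, re_inv_sub_mul_I] using hL.re,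
    by simpa only [IntegrableOn, RCLike.im_to_complex, im_inv_sub_mul_I] using hL.im, ?_, ?_⟩
  · have hre := (Complex.continuous_re.tendsto _).comp hlim
    rw [← RCLike.re_to_complex, ← integral_re hL] at hre
    simp only [RCLike.re_to_complex, re_inv_sub_mul_I] at hre
    exact hre.congr' <| (eventually_ge_atTop 0).mono fun A hA =>
      re_integral_mul_cexp hA (hKloc A) ω
  · have him := (Complex.continuous_im.tendsto _).comp hlim
    rw [← RCLike.im_to_complex, ← integral_im hL] at him
    simp only [RCLike.im_to_complex, im_inv_sub_mul_I] at him
    exact him.congr' <| (eventually_ge_atTop 0).mono fun A hA =>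
      im_integral_mul_cexp hA (hKloc A) ω
end

section
/- Let μ be a positive Borel measure on [0,∞) and define K(t) = ∫₀^∞ e^{−t²x} μ(dx). Assume K(t) < ∞ for all t > 0, K is integrable on (0,1), and K(t) decreases to 0 as t → ∞. Then μ({0}) = 0, ∫₁^∞ x^{−1/2} μ(dx) < ∞, and for every ω ≠ 0 the improper integrals converge with lim_{A→∞} ∫₀^A K(t)cos(ωt) dt = (√π/2) ∫₀^∞ x^{−1/2} e^{−ω²/(4x)} μ(dx) and lim_{A→∞} ∫₀^A K(t)sin(ωt) dt = ∫₀^∞ x^{−1/2} daw(ω/(2√x)) μ(dx), where daw(y) = e^{−y²} ∫₀^y e^{s²} ds is Dawson's integral; both right-hand sides are finite. (Equivalently, 𝒦cos(ω) ± i𝒦sin(ω) = (√π/2)∫₀^∞ x^{−1/2} w(±ω/(2√x)) μ(dx), where w(z) = e^{−z²}erfc(−iz) is the Faddeeva function, whose value at real y is e^{−y²} + (2i/√π)daw(y).) -/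
/-!
Write `K t = ∫ e^{-t²x} ν(dx)` with `ν = μ` restricted to `[0,∞)`. Letting `t → ∞` gives
`ν{0} ≤ lim K = 0`, and Tonelli applied to `∫₀¹ K` controls `∫_{x ≥ 1} x^{-1/2} dν`, since
`∫₀¹ e^{-t²x} dt ≥ e^{-1}/√x` there.

For fixed `x > 0` the transforms of `e^{-t²x}` are explicit: `F(y) = ∫₀^∞ e^{-s²+2iys} ds`
solves `F' = i - 2yF` with `F(0) = √π/2`, so `F(y) = (√π/2) e^{-y²} + i daw(y)` (this is
`(√π/2) w(y)` for the Faddeeva function `w`), and the substitution `s = √x t` rescales it.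

To pass the limit `A → ∞` through `∫ dν`, bound the truncated transform
`∫₀^A e^{-t²x} cos(ωt) dt` (or with `sin`) by `2/|ω|`, integrating by parts against the
decreasing weight, and by `√π/(2√x)`. The minimum of the two is `ν`-integrable, so Fubini on
`[0,A]` followed by dominated convergence concludes.
-/

open MeasureTheory Filter Set

/-- Dawson's integral `daw(y) = e^{-y²} ∫₀^y e^{s²} ds`. -/
noncomputable def daw (y : ℝ) : ℝ :=
  Real.exp (-y ^ 2) * ∫ s in (0:ℝ)..y, Real.exp (s ^ 2)

open Real Topology

lemma daw_zero : daw 0 = 0 := by simp [daw]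

lemma hasDerivAt_daw (y : ℝ) : HasDerivAt daw (1 - 2 * y * daw y) y := by
  have hc : Continuous fun s : ℝ => rexp (s ^ 2) := by fun_prop
  have hexp : HasDerivAt (fun y : ℝ => rexp (-y ^ 2)) (rexp (-y ^ 2) * (-(2 * y))) y := by
    simpa using ((hasDerivAt_pow 2 y).fun_neg).exp
  have hint : HasDerivAt (fun y => ∫ s in (0:ℝ)..y, rexp (s ^ 2)) (rexp (y ^ 2)) y :=
    intervalIntegral.integral_hasDerivAt_right (hc.intervalIntegrable _ _)
      (hc.stronglyMeasurableAtFilter _ _) hc.continuousAt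
  refine (hexp.mul hint).congr_deriv ?_
  rw [daw, ← Real.exp_add, neg_add_cancel, Real.exp_zero]
  ring

section

open Complex

lemma eq_of_hasDerivAt_sub_two_mul_self {f : ℝ → ℂ} {c : ℂ}
    (hf : ∀ y, HasDerivAt f (c - 2 * y * f y) y) (y : ℝ) :
    f y = f 0 * rexp (-y ^ 2) + c * daw y := by
  set g : ℝ → ℂ := fun y => rexp (y ^ 2) * (f y - f 0 * rexp (-y ^ 2) - c * daw y)
  have hg : ∀ z, HasDerivAt g 0 z := by
    intro z
    have hsq : HasDerivAt (fun y : ℝ => y ^ 2) (2 * z) z := by simpa using hasDerivAt_pow 2 z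
    refine (((hsq.exp).ofReal_comp).fun_mul
      (((hf z).fun_sub (((hsq.fun_neg.exp).ofReal_comp).const_mul (f 0))).fun_sub
        ((hasDerivAt_daw z).ofReal_comp.const_mul c))).congr_deriv ?_
    push_cast
    rw [Complex.exp_neg]
    field_simp
    ring
  have hgy : g y = 0 := by
    rw [is_const_of_deriv_eq_zero (fun z => (hg z).differentiableAt) (fun z => (hg z).deriv) y 0]
    simp [g, daw_zero]
  have hne : (rexp (y ^ 2) : ℂ) ≠ 0 := ofReal_ne_zero.2 (exp_pos _).ne'
  linear_combination (mul_eq_zero.1 hgy).resolve_left hne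

noncomputable def gaussHalfFourier (y : ℝ) : ℂ :=
  ∫ s in Ioi (0:ℝ), cexp (-(s:ℂ) ^ 2 + 2 * y * s * I)

lemma norm_cexp_neg_sq_add (y s : ℝ) : ‖cexp (-(s:ℂ) ^ 2 + 2 * y * s * I)‖ = rexp (-s ^ 2) := by
  rw [Complex.norm_exp]
  congr 1
  simp [pow_two]

lemma integrable_cexp_neg_sq_add (y : ℝ) :
    Integrable (fun s : ℝ => cexp (-(s:ℂ) ^ 2 + 2 * y * s * I)) := by
  refine (integrable_exp_neg_mul_sq one_pos).mono' (by fun_prop) (ae_of_all _ fun s => ?_)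
  simp [norm_cexp_neg_sq_add]

lemma integrableOn_two_mul_cexp_neg_sq_add (y : ℝ) :
    IntegrableOn (fun s : ℝ => 2 * s * cexp (-(s:ℂ) ^ 2 + 2 * y * s * I)) (Ioi 0) := by
  refine ((integrable_mul_exp_neg_mul_sq one_pos).const_mul 2).integrableOn.mono' (by fun_prop) ?_
  filter_upwards [ae_restrict_mem measurableSet_Ioi] with s hs
  rw [norm_mul, norm_cexp_neg_sq_add]
  simp [abs_of_pos (mem_Ioi.1 hs), mul_assoc]

lemma integral_two_mul_cexp_neg_sq_add (y : ℝ) :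
    ∫ s in Ioi (0:ℝ), 2 * s * cexp (-(s:ℂ) ^ 2 + 2 * y * s * I) =
      1 + 2 * y * I * gaussHalfFourier y := by
  have hderiv : ∀ s ∈ Ici (0:ℝ), HasDerivAt (fun s : ℝ => -cexp (-(s:ℂ) ^ 2 + 2 * y * s * I))
      (2 * s * cexp (-(s:ℂ) ^ 2 + 2 * y * s * I) -
        2 * y * I * cexp (-(s:ℂ) ^ 2 + 2 * y * s * I)) s := by
    intro s _
    have h : HasDerivAt (fun s : ℝ => -(s:ℂ) ^ 2 + 2 * y * s * I) (-(2 * s) + 2 * y * I) s := by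
      simpa using ((hasDerivAt_id s).ofReal_comp.fun_pow 2).fun_neg.fun_add
        (((hasDerivAt_id s).ofReal_comp.const_mul (2 * (y:ℂ))).mul_const I)
    exact h.cexp.fun_neg.congr_deriv (by ring)
  have hint := (integrable_cexp_neg_sq_add y).integrableOn (s := Ioi 0) |>.const_mul (2 * y * I)
  have htend : Tendsto (fun s : ℝ => -cexp (-(s:ℂ) ^ 2 + 2 * y * s * I)) atTop (nhds 0) := by
    rw [tendsto_zero_iff_norm_tendsto_zero]
    simp only [norm_neg, norm_cexp_neg_sq_add]
    exact tendsto_exp_atBot.comp (tendsto_neg_atTop_atBot.comp (tendsto_pow_atTop two_ne_zero))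
  have h := integral_Ioi_of_hasDerivAt_of_tendsto' hderiv
    ((integrableOn_two_mul_cexp_neg_sq_add y).sub hint) htend
  rw [integral_sub (integrableOn_two_mul_cexp_neg_sq_add y) hint, integral_const_mul] at h
  simp only [ofReal_zero, ne_eq, OfNat.ofNat_ne_zero, not_false_eq_true, zero_pow, neg_zero,
    mul_zero, zero_mul, add_zero, Complex.exp_zero, sub_neg_eq_add, zero_add] at h
  rw [gaussHalfFourier]
  linear_combination h

lemma hasDerivAt_gaussHalfFourier (y : ℝ) :
    HasDerivAt gaussHalfFourier (I - 2 * y * gaussHalfFourier y) y := by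
  have h := (hasDerivAt_integral_of_dominated_loc_of_deriv_le (μ := volume.restrict (Ioi 0))
    (F := fun y s : ℝ => cexp (-(s:ℂ) ^ 2 + 2 * y * s * I))
    (F' := fun y s : ℝ => I * (2 * s * cexp (-(s:ℂ) ^ 2 + 2 * y * s * I)))
    (bound := fun s : ℝ => ‖2 * s * cexp (-(s:ℂ) ^ 2 + 2 * y * s * I)‖) univ_mem
    (Eventually.of_forall fun y => by fun_prop) (integrable_cexp_neg_sq_add y).integrableOn
    (by fun_prop) ?_ (integrableOn_two_mul_cexp_neg_sq_add y).norm ?_).2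
  · rw [integral_const_mul, integral_two_mul_cexp_neg_sq_add] at h
    exact h.congr_deriv (by linear_combination (2 * y * gaussHalfFourier y) * I_sq)
  · refine ae_of_all _ fun s x _ => ?_
    simp [norm_cexp_neg_sq_add]
  · refine ae_of_all _ fun s x _ => ?_
    have h : HasDerivAt (fun x : ℝ => -(s:ℂ) ^ 2 + 2 * x * s * I) (2 * s * I) x := by
      simpa using ((((hasDerivAt_id x).ofReal_comp.const_mul 2).mul_const (s : ℂ)).mul_const
        I).const_add (-(s:ℂ) ^ 2)
    exact h.cexp.congr_deriv (by ring)

lemma gaussHalfFourier_eq (y : ℝ) :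
    gaussHalfFourier y = √π / 2 * rexp (-y ^ 2) + daw y * I := by
  have h0 : gaussHalfFourier 0 = √π / 2 := by
    have h := integral_gaussian_Ioi 1
    simp only [neg_mul, one_mul, div_one] at h
    calc gaussHalfFourier 0 = ∫ s in Ioi (0:ℝ), ((rexp (-s ^ 2) : ℝ) : ℂ) := by
          simp [gaussHalfFourier]
      _ = √π / 2 := by rw [integral_complex_ofReal, h]; push_cast; rfl
  rw [eq_of_hasDerivAt_sub_two_mul_self hasDerivAt_gaussHalfFourier y, h0, mul_comm I]

lemma integral_exp_neg_sq_mul_cos (y : ℝ) :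
    ∫ s in Ioi (0:ℝ), rexp (-s ^ 2) * Real.cos (2 * y * s) = √π / 2 * rexp (-y ^ 2) := by
  have h := congrArg Complex.re (gaussHalfFourier_eq y)
  rw [gaussHalfFourier, ← reCLM_apply,
    ← ContinuousLinearMap.integral_comp_comm _ (integrable_cexp_neg_sq_add y).integrableOn] at h
  convert h using 1
  · simp [Complex.exp_re, pow_two]
  · simp [-ofReal_exp, ← ofReal_ofNat, ← ofReal_div]

lemma integral_exp_neg_sq_mul_sin (y : ℝ) :
    ∫ s in Ioi (0:ℝ), rexp (-s ^ 2) * Real.sin (2 * y * s) = daw y := by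
  have h := congrArg Complex.im (gaussHalfFourier_eq y)
  rw [gaussHalfFourier, ← imCLM_apply,
    ← ContinuousLinearMap.integral_comp_comm _ (integrable_cexp_neg_sq_add y).integrableOn] at h
  convert h using 1
  · simp [Complex.exp_im, pow_two]
  · simp [-ofReal_exp, ← ofReal_ofNat, ← ofReal_div]

end

lemma integral_exp_neg_mul_sq_mul_comp (g : ℝ → ℝ) {x : ℝ} (hx : 0 < x) (ω : ℝ) :
    ∫ t in Ioi (0:ℝ), rexp (-(t ^ 2 * x)) * g (ω * t) =
      (√x)⁻¹ * ∫ s in Ioi (0:ℝ), rexp (-s ^ 2) * g (2 * (ω / (2 * √x)) * s) := by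
  have hsx : 0 < √x := sqrt_pos.2 hx
  have h := integral_comp_mul_left_Ioi (fun s => rexp (-s ^ 2) * g (2 * (ω / (2 * √x)) * s)) 0 hsx
  rw [mul_zero, smul_eq_mul] at h
  rw [← h]
  congr 1; ext t
  rw [mul_pow, sq_sqrt hx.le]
  field_simp

lemma integral_exp_neg_mul_sq_mul_cos (ω : ℝ) {x : ℝ} (hx : 0 < x) :
    ∫ t in Ioi (0:ℝ), rexp (-(t ^ 2 * x)) * Real.cos (ω * t) =
      √π / 2 * (1 / √x * rexp (-(ω ^ 2 / (4 * x)))) := by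
  rw [integral_exp_neg_mul_sq_mul_comp _ hx, integral_exp_neg_sq_mul_cos, div_pow, mul_pow,
    sq_sqrt hx.le]
  ring_nf

lemma integral_exp_neg_mul_sq_mul_sin (ω : ℝ) {x : ℝ} (hx : 0 < x) :
    ∫ t in Ioi (0:ℝ), rexp (-(t ^ 2 * x)) * Real.sin (ω * t) = 1 / √x * daw (ω / (2 * √x)) := by
  rw [integral_exp_neg_mul_sq_mul_comp _ hx, integral_exp_neg_sq_mul_sin, one_div]

lemma integrable_exp_neg_mul_sq_mul {x : ℝ} (hx : 0 < x) {g : ℝ → ℝ} (hg : Continuous g)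
    (hgb : ∀ t, |g t| ≤ 1) : Integrable (fun t => rexp (-(t ^ 2 * x)) * g t) := by
  refine (integrable_exp_neg_mul_sq hx).mono' (by fun_prop) (ae_of_all _ fun t => ?_)
  rw [norm_mul, norm_eq_abs, abs_exp, mul_comm (t ^ 2), ← neg_mul]
  exact mul_le_of_le_one_right (exp_pos _).le (hgb t)

lemma abs_intervalIntegral_mul_deriv_le {u u' v v' : ℝ → ℝ} {A M : ℝ} (hA : 0 ≤ A)
    (hu : ∀ t ∈ Icc 0 A, HasDerivAt u (u' t) t) (hv : ∀ t ∈ Icc 0 A, HasDerivAt v (v' t) t)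
    (hu' : IntervalIntegrable u' volume 0 A) (hv' : IntervalIntegrable v' volume 0 A)
    (hu'_nonpos : ∀ t ∈ Icc 0 A, u' t ≤ 0) (huA : 0 ≤ u A) (hvM : ∀ t ∈ Icc 0 A, |v t| ≤ M) :
    |∫ t in (0:ℝ)..A, u t * v' t| ≤ 2 * u 0 * M := by
  rw [← uIcc_of_le hA] at hu hv
  have hFTC : ∫ t in (0:ℝ)..A, u' t = u A - u 0 :=
    intervalIntegral.integral_eq_sub_of_hasDerivAt hu hu'
  have hu'v : |∫ t in (0:ℝ)..A, u' t * v t| ≤ (u 0 - u A) * M := by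
    have h := intervalIntegral.norm_integral_le_of_norm_le hA (f := fun t => u' t * v t)
      (g := fun t => -u' t * M) (ae_of_all _ fun t ht => ?_) (hu'.neg.mul_const M)
    · rwa [intervalIntegral.integral_mul_const, intervalIntegral.integral_neg, hFTC, neg_sub] at h
    · have ht' : t ∈ Icc 0 A := Ioc_subset_Icc_self ht
      rw [norm_mul, norm_eq_abs, norm_eq_abs, abs_of_nonpos (hu'_nonpos t ht')]
      exact mul_le_mul_of_nonneg_left (hvM t ht') (neg_nonneg.2 (hu'_nonpos t ht'))
  have hu0A : u A ≤ u 0 := by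
    have h := intervalIntegral.integral_mono_on hA hu' intervalIntegrable_const hu'_nonpos
    rw [hFTC, intervalIntegral.integral_const, smul_zero] at h
    linarith
  rw [intervalIntegral.integral_mul_deriv_eq_deriv_mul hu hv hu' hv']
  have h0 : |u 0 * v 0| ≤ u 0 * M := by
    rw [abs_mul, abs_of_nonneg (huA.trans hu0A)]
    exact mul_le_mul_of_nonneg_left (hvM 0 ⟨le_rfl, hA⟩) (huA.trans hu0A)
  have hA' : |u A * v A| ≤ u A * M := by
    rw [abs_mul, abs_of_nonneg huA]
    exact mul_le_mul_of_nonneg_left (hvM A ⟨hA, le_rfl⟩) huA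
  calc |u A * v A - u 0 * v 0 - ∫ t in (0:ℝ)..A, u' t * v t|
      ≤ |u A * v A| + |u 0 * v 0| + |∫ t in (0:ℝ)..A, u' t * v t| :=
        (abs_sub _ _).trans (add_le_add_left (abs_sub _ _) _)
    _ ≤ u A * M + u 0 * M + (u 0 - u A) * M := by gcongr
    _ = 2 * u 0 * M := by ring

lemma abs_intervalIntegral_exp_neg_mul_sq_mul_le {x A M : ℝ} (hx : 0 ≤ x) (hA : 0 ≤ A)
    {v v' : ℝ → ℝ} (hv : ∀ t, HasDerivAt v (v' t) t) (hv' : Continuous v')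
    (hvM : ∀ t, |v t| ≤ M) :
    |∫ t in (0:ℝ)..A, rexp (-(t ^ 2 * x)) * v' t| ≤ 2 * M := by
  have hu : ∀ t, HasDerivAt (fun t => rexp (-(t ^ 2 * x))) (rexp (-(t ^ 2 * x)) * -(2 * t * x)) t :=
    fun t => by simpa using ((hasDerivAt_pow 2 t).mul_const x).fun_neg.exp
  simpa using abs_intervalIntegral_mul_deriv_le hA (fun t _ => hu t) (fun t _ => hv t)
    ((by fun_prop : Continuous fun t => rexp (-(t ^ 2 * x)) * -(2 * t * x)).intervalIntegrable _ _)
    (hv'.intervalIntegrable _ _)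
    (fun t ht => mul_nonpos_of_nonneg_of_nonpos (exp_pos _).le (by nlinarith [ht.1]))
    (exp_pos _).le (fun t _ => hvM t)

lemma abs_intervalIntegral_exp_neg_mul_sq_mul_cos_le {x A ω : ℝ} (hx : 0 ≤ x) (hA : 0 ≤ A)
    (hω : ω ≠ 0) : |∫ t in (0:ℝ)..A, rexp (-(t ^ 2 * x)) * Real.cos (ω * t)| ≤ 2 * |ω|⁻¹ := by
  refine abs_intervalIntegral_exp_neg_mul_sq_mul_le hx hA (v := fun t => Real.sin (ω * t) / ω)
    (fun t => ?_) (by fun_prop) (fun t => ?_)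
  · refine (((hasDerivAt_sin _).comp t ((hasDerivAt_id t).const_mul ω)).div_const ω).congr_deriv ?_
    field_simp
    rfl
  · rw [abs_div, div_eq_mul_inv]
    exact mul_le_of_le_one_left (by positivity) (abs_sin_le_one _)

lemma abs_intervalIntegral_exp_neg_mul_sq_mul_sin_le {x A ω : ℝ} (hx : 0 ≤ x) (hA : 0 ≤ A)
    (hω : ω ≠ 0) : |∫ t in (0:ℝ)..A, rexp (-(t ^ 2 * x)) * Real.sin (ω * t)| ≤ 2 * |ω|⁻¹ := by
  refine abs_intervalIntegral_exp_neg_mul_sq_mul_le hx hA (v := fun t => -Real.cos (ω * t) / ω)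
    (fun t => ?_) (by fun_prop) (fun t => ?_)
  · refine (((hasDerivAt_cos _).comp t ((hasDerivAt_id t).const_mul ω)).neg.div_const
      ω).congr_deriv ?_
    field_simp
    rfl
  · rw [abs_div, abs_neg, div_eq_mul_inv]
    exact mul_le_of_le_one_left (by positivity) (abs_cos_le_one _)

lemma abs_intervalIntegral_exp_neg_mul_sq_mul_le_sqrt {x A : ℝ} (hx : 0 < x) (hA : 0 ≤ A)
    {g : ℝ → ℝ} (hgb : ∀ t, |g t| ≤ 1) :
    |∫ t in (0:ℝ)..A, rexp (-(t ^ 2 * x)) * g t| ≤ √π / 2 * (1 / √x) := by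
  have hint : Integrable fun t : ℝ => rexp (-(t ^ 2 * x)) :=
    (integrable_exp_neg_mul_sq hx).congr (ae_of_all _ fun t => by ring_nf)
  calc |∫ t in (0:ℝ)..A, rexp (-(t ^ 2 * x)) * g t|
      ≤ ∫ t in (0:ℝ)..A, rexp (-(t ^ 2 * x)) :=
        intervalIntegral.norm_integral_le_of_norm_le hA
          (f := fun t => rexp (-(t ^ 2 * x)) * g t) (ae_of_all _ fun t _ => by
          rw [norm_mul, norm_eq_abs, abs_exp]
          exact mul_le_of_le_one_right (exp_pos _).le (hgb t)) hint.intervalIntegrable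
    _ ≤ ∫ t in Ioi (0:ℝ), rexp (-(t ^ 2 * x)) := by
        rw [intervalIntegral.integral_of_le hA]
        exact setIntegral_mono_set hint.integrableOn (ae_of_all _ fun t => (exp_pos _).le)
          Ioc_subset_Ioi_self.eventuallyLE
    _ = ∫ t in Ioi (0:ℝ), rexp (-x * t ^ 2) := by simp_rw [neg_mul, mul_comm x]
    _ = √π / 2 * (1 / √x) := by rw [integral_gaussian_Ioi, sqrt_div' π hx.le]; ring

lemma sigmaFinite_of_integrable_pos {α : Type*} [MeasurableSpace α] {μ : Measure α} {f : α → ℝ}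
    (hf : Integrable f μ) (hpos : ∀ x, 0 < f x) : SigmaFinite μ := by
  refine ⟨⟨⟨fun n : ℕ => {x | 1 / (n + 1 : ℝ) ≤ ‖f x‖}, fun _ => trivial,
    fun n => hf.measure_norm_ge_lt_top Nat.one_div_pos_of_nat, ?_⟩⟩⟩
  refine eq_univ_of_forall fun x => mem_iUnion.2 ?_
  obtain ⟨n, hn⟩ := exists_nat_one_div_lt (hpos x)
  exact ⟨n, hn.le.trans (le_abs_self _)⟩

lemma one_div_sqrt_le_exp_one_mul_integral {x : ℝ} (hx : 1 ≤ x) :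
    1 / √x ≤ rexp 1 * ∫ t in (0:ℝ)..1, rexp (-(t ^ 2 * x)) := by
  have hsx : 0 < √x := sqrt_pos.2 (one_pos.trans_le hx)
  have hsx1 : 1 / √x ≤ 1 := by rw [div_le_one hsx]; exact one_le_sqrt.2 hx
  calc 1 / √x = rexp 1 * ∫ _ in (0:ℝ)..1 / √x, rexp (-1) := by
        rw [intervalIntegral.integral_const, smul_eq_mul, ← mul_assoc, mul_comm (rexp 1),
          mul_assoc, ← exp_add]
        simp
    _ ≤ rexp 1 * ∫ t in (0:ℝ)..1 / √x, rexp (-(t ^ 2 * x)) := by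
        gcongr
        refine intervalIntegral.integral_mono_on (by positivity) intervalIntegrable_const
          ((by fun_prop : Continuous fun t : ℝ => rexp (-(t ^ 2 * x))).intervalIntegrable _ _)
          fun t ht => exp_le_exp.2 (neg_le_neg ?_)
        have htx : t * √x ≤ 1 := (le_div_iff₀ hsx).1 ht.2
        calc t ^ 2 * x = (t * √x) ^ 2 := by rw [mul_pow, sq_sqrt (by linarith)]
          _ ≤ 1 := pow_le_one₀ (mul_nonneg ht.1 hsx.le) htx
    _ ≤ rexp 1 * ∫ t in (0:ℝ)..1, rexp (-(t ^ 2 * x)) := by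
        gcongr
        exact intervalIntegral.integral_mono_interval le_rfl (by positivity) hsx1
          (ae_of_all _ fun t => (exp_pos _).le)
          ((by fun_prop : Continuous fun t : ℝ => rexp (-(t ^ 2 * x))).intervalIntegrable _ _)

lemma integrable_min_const_mul_one_div_sqrt {ν : Measure ℝ} (hν : ν (Iio 1) < ⊤)
    (hsqrt : IntegrableOn (fun x => 1 / √x) (Ici 1) ν) {B c : ℝ} (hB : 0 ≤ B) (hc : 0 ≤ c) :
    Integrable (fun x => min B (c * (1 / √x))) ν := by
  have hmeas : AEStronglyMeasurable (fun x => min B (c * (1 / √x))) ν :=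
    (measurable_const.min (measurable_const.mul
      (measurable_const.div continuous_sqrt.measurable))).aestronglyMeasurable
  have hnorm : ∀ x, ‖min B (c * (1 / √x))‖ = min B (c * (1 / √x)) := fun x =>
    norm_of_nonneg (le_min hB (by positivity))
  rw [← integrableOn_univ, ← Iio_union_Ici (a := (1:ℝ))]
  refine IntegrableOn.union ?_ ?_
  · exact (integrableOn_const hν.ne).mono' hmeas.restrict
      (ae_of_all _ fun x => (hnorm x).trans_le (min_le_left _ _))
  · exact (hsqrt.const_mul c).mono' hmeas.restrict
      (ae_of_all _ fun x => (hnorm x).trans_le (min_le_right _ _))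

structure IsGaussianMixture (K : ℝ → ℝ) (ν : Measure ℝ) : Prop where
  integrable : ∀ t > 0, Integrable (fun x => rexp (-(t ^ 2 * x))) ν
  eq_integral : ∀ t > 0, K t = ∫ x, rexp (-(t ^ 2 * x)) ∂ν

namespace IsGaussianMixture

variable {K : ℝ → ℝ} {ν : Measure ℝ}

lemma measure_Iio_one_lt_top (hK : IsGaussianMixture K ν) : ν (Iio 1) < ⊤ := by
  refine (measure_mono fun x (hx : x < 1) => ?_).trans_lt
    ((hK.integrable 1 one_pos).measure_norm_ge_lt_top (exp_pos (-1)))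
  show rexp (-1) ≤ ‖rexp (-(1 ^ 2 * x))‖
  rw [one_pow, one_mul, norm_eq_abs, abs_exp]
  exact exp_le_exp.2 (by linarith)

lemma measure_zero_eq_zero (hK : IsGaussianMixture K ν) (hK0 : Tendsto K atTop (𝓝 0)) :
    ν {0} = 0 := by
  have hfin : ν {0} < ⊤ := (measure_mono (by simp)).trans_lt hK.measure_Iio_one_lt_top
  have hle : ∀ t > 0, ν.real {0} ≤ K t := fun t ht => by
    have h := setIntegral_le_integral (s := {0}) (hK.integrable t ht)
      (ae_of_all _ fun x => (exp_pos _).le)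
    rwa [integral_singleton, mul_zero, neg_zero, exp_zero, smul_eq_mul, mul_one,
      ← hK.eq_integral t ht] at h
  have h0 : ν.real {0} ≤ 0 := ge_of_tendsto hK0 (eventually_gt_atTop 0 |>.mono hle)
  exact (measureReal_eq_zero_iff hfin.ne).1 (le_antisymm h0 measureReal_nonneg)

lemma nonneg (hK : IsGaussianMixture K ν) {t : ℝ} (ht : 0 < t) : 0 ≤ K t := by
  rw [hK.eq_integral t ht]
  exact integral_nonneg fun x => (exp_pos _).le

lemma antitoneOn (hK : IsGaussianMixture K ν) (hν : ∀ᵐ x ∂ν, 0 ≤ x) :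
    AntitoneOn K (Ioi 0) := fun s (hs : 0 < s) t (ht : 0 < t) hst => by
  rw [hK.eq_integral s hs, hK.eq_integral t ht]
  refine integral_mono_ae (hK.integrable t ht) (hK.integrable s hs) ?_
  filter_upwards [hν] with x hx
  exact exp_le_exp.2 (neg_le_neg (by gcongr))

lemma aestronglyMeasurable [SFinite ν] (hK : IsGaussianMixture K ν) {s : Set ℝ}
    (hs : MeasurableSet s) (hs0 : s ⊆ Ioi 0) : AEStronglyMeasurable K (volume.restrict s) := by
  refine (StronglyMeasurable.integral_prod_right' (ν := ν)
    (by fun_prop : Continuous fun p : ℝ × ℝ => rexp (-(p.1 ^ 2 * p.2))).stronglyMeasurable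
    ).aestronglyMeasurable.congr ?_
  exact (ae_restrict_of_forall_mem hs fun t ht => (hK.eq_integral t (hs0 ht)).symm)

lemma integrableOn_Ioc [SFinite ν] (hK : IsGaussianMixture K ν) (hν : ∀ᵐ x ∂ν, 0 ≤ x)
    (hK01 : IntegrableOn K (Ioo 0 1)) (A : ℝ) : IntegrableOn K (Ioc 0 A) := by
  have hKA : IntegrableOn K (Icc 1 A) := by
    refine Integrable.mono' (integrableOn_const (C := K 1) measure_Icc_lt_top.ne)
      (hK.aestronglyMeasurable measurableSet_Icc fun t ht => one_pos.trans_le ht.1) ?_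
    refine ae_restrict_of_forall_mem measurableSet_Icc fun t ht => ?_
    have ht0 : 0 < t := one_pos.trans_le ht.1
    rw [norm_eq_abs, abs_of_nonneg (hK.nonneg ht0)]
    exact hK.antitoneOn hν (mem_Ioi.2 one_pos) ht0 ht.1
  refine (hK01.union hKA).mono_set fun t ht => ?_
  rcases lt_or_ge t 1 with h | h
  exacts [Or.inl ⟨ht.1, h⟩, Or.inr ⟨h, ht.2⟩]

lemma integrable_prod [SFinite ν] (hK : IsGaussianMixture K ν) {s : Set ℝ}
    (hs : MeasurableSet s) (hs0 : s ⊆ Ioi 0) (hKs : IntegrableOn K s) :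
    Integrable (fun p : ℝ × ℝ => rexp (-(p.1 ^ 2 * p.2))) ((volume.restrict s).prod ν) := by
  rw [integrable_prod_iff (by fun_prop)]
  refine ⟨ae_restrict_of_forall_mem hs fun t ht => hK.integrable t (hs0 ht), ?_⟩
  refine hKs.congr_fun (fun t ht => ?_) hs
  simp [hK.eq_integral t (hs0 ht)]

lemma integrableOn_one_div_sqrt [SFinite ν] (hK : IsGaussianMixture K ν)
    (hK01 : IntegrableOn K (Ioo 0 1)) : IntegrableOn (fun x => 1 / √x) (Ici 1) ν := by
  have h := (hK.integrable_prod measurableSet_Ioc Ioc_subset_Ioi_self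
    ((integrableOn_Ioc_iff_integrableOn_Ioo (by simp)).2 hK01)).integral_prod_right
  refine Integrable.mono' (h.const_mul (rexp 1)).integrableOn
    (measurable_const.div continuous_sqrt.measurable).aestronglyMeasurable
    (ae_restrict_of_forall_mem measurableSet_Ici fun x hx => ?_)
  rw [norm_of_nonneg (by positivity), ← intervalIntegral.integral_of_le zero_le_one]
  exact one_div_sqrt_le_exp_one_mul_integral hx

lemma intervalIntegral_mul_eq [SFinite ν] (hK : IsGaussianMixture K ν) {A : ℝ} (hA : 0 ≤ A)
    (hKA : IntegrableOn K (Ioc 0 A)) {g : ℝ → ℝ} (hg : Continuous g) (hgb : ∀ t, |g t| ≤ 1) :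
    ∫ t in (0:ℝ)..A, K t * g t = ∫ x, (∫ t in (0:ℝ)..A, rexp (-(t ^ 2 * x)) * g t) ∂ν := by
  have hprod : Integrable (Function.uncurry fun t x => rexp (-(t ^ 2 * x)) * g t)
      ((volume.restrict (Ioc 0 A)).prod ν) := by
    refine (hK.integrable_prod measurableSet_Ioc Ioc_subset_Ioi_self hKA).mono'
      (Continuous.aestronglyMeasurable (by fun_prop)) (ae_of_all _ fun p => ?_)
    rw [Function.uncurry_apply_pair, norm_mul, norm_eq_abs, abs_exp]
    exact mul_le_of_le_one_right (exp_pos _).le (hgb p.1)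
  simp_rw [intervalIntegral.integral_of_le hA]
  calc ∫ t in Ioc 0 A, K t * g t = ∫ t in Ioc 0 A, ∫ x, rexp (-(t ^ 2 * x)) * g t ∂ν :=
        setIntegral_congr_fun measurableSet_Ioc fun t ht => by
          rw [integral_mul_const, hK.eq_integral t ht.1]
    _ = _ := integral_integral_swap hprod

lemma tendsto_intervalIntegral_mul [SFinite ν] (hK : IsGaussianMixture K ν)
    (hν : ∀ᵐ x ∂ν, 0 < x) (hKA : ∀ A, IntegrableOn K (Ioc 0 A)) {g : ℝ → ℝ}
    (hg : Continuous g) (hgb : ∀ t, |g t| ≤ 1) {b : ℝ → ℝ} (hb : Integrable b ν)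
    (hbound : ∀ᵐ x ∂ν, ∀ A ≥ 0, |∫ t in (0:ℝ)..A, rexp (-(t ^ 2 * x)) * g t| ≤ b x) :
    Integrable (fun x => ∫ t in Ioi (0:ℝ), rexp (-(t ^ 2 * x)) * g t) ν ∧
      Tendsto (fun A => ∫ t in (0:ℝ)..A, K t * g t) atTop
        (𝓝 (∫ x, (∫ t in Ioi (0:ℝ), rexp (-(t ^ 2 * x)) * g t) ∂ν)) := by
  have hmeas : ∀ A : ℝ, AEStronglyMeasurable
      (fun x => ∫ t in (0:ℝ)..A, rexp (-(t ^ 2 * x)) * g t) ν := fun A =>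
    (intervalIntegral.continuous_parametric_intervalIntegral_of_continuous'
      (by fun_prop) 0 A).aestronglyMeasurable
  have hlim : ∀ᵐ x ∂ν, Tendsto (fun A => ∫ t in (0:ℝ)..A, rexp (-(t ^ 2 * x)) * g t) atTop
      (𝓝 (∫ t in Ioi (0:ℝ), rexp (-(t ^ 2 * x)) * g t)) := hν.mono fun x hx =>
    intervalIntegral_tendsto_integral_Ioi 0
      (integrable_exp_neg_mul_sq_mul hx hg hgb).integrableOn tendsto_id
  have hbound' : ∀ᶠ A in atTop, ∀ᵐ x ∂ν,
      ‖∫ t in (0:ℝ)..A, rexp (-(t ^ 2 * x)) * g t‖ ≤ b x :=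
    (eventually_ge_atTop 0).mono fun A hA => hbound.mono fun x hx => hx A hA
  refine ⟨hb.mono' (aestronglyMeasurable_of_tendsto_ae atTop hmeas hlim) ?_, ?_⟩
  · filter_upwards [hlim, hbound] with x hx hxb
    exact le_of_tendsto hx.norm ((eventually_ge_atTop 0).mono hxb)
  · refine Tendsto.congr' ?_ (tendsto_integral_filter_of_dominated_convergence b
      (Eventually.of_forall hmeas) hbound' hb hlim)
    exact (eventually_ge_atTop 0).mono fun A hA =>
      (hK.intervalIntegral_mul_eq hA (hKA A) hg hgb).symm

lemma tendsto_intervalIntegral_mul_of_abs_le [SFinite ν] (hK : IsGaussianMixture K ν)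
    (hν : ∀ᵐ x ∂ν, 0 < x) (hK01 : IntegrableOn K (Ioo 0 1)) {g : ℝ → ℝ}
    (hg : Continuous g) (hgb : ∀ t, |g t| ≤ 1) {B : ℝ} (hB : 0 ≤ B)
    (hgB : ∀ x > 0, ∀ A ≥ 0, |∫ t in (0:ℝ)..A, rexp (-(t ^ 2 * x)) * g t| ≤ B) :
    Integrable (fun x => ∫ t in Ioi (0:ℝ), rexp (-(t ^ 2 * x)) * g t) ν ∧
      Tendsto (fun A => ∫ t in (0:ℝ)..A, K t * g t) atTop
        (𝓝 (∫ x, (∫ t in Ioi (0:ℝ), rexp (-(t ^ 2 * x)) * g t) ∂ν)) :=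
  hK.tendsto_intervalIntegral_mul hν (hK.integrableOn_Ioc (hν.mono fun _ hx => hx.le) hK01) hg hgb
    (integrable_min_const_mul_one_div_sqrt hK.measure_Iio_one_lt_top
      (hK.integrableOn_one_div_sqrt hK01) hB (by positivity))
    (hν.mono fun x hx A hA => le_min (hgB x hx A hA)
      (abs_intervalIntegral_exp_neg_mul_sq_mul_le_sqrt hx hA hgb))

lemma tendsto_intervalIntegral_mul_cos [SFinite ν] (hK : IsGaussianMixture K ν)
    (hν : ∀ᵐ x ∂ν, 0 < x) (hK01 : IntegrableOn K (Ioo 0 1)) {ω : ℝ} (hω : ω ≠ 0) :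
    Integrable (fun x => 1 / √x * rexp (-(ω ^ 2 / (4 * x)))) ν ∧
      Tendsto (fun A => ∫ t in (0:ℝ)..A, K t * Real.cos (ω * t)) atTop
        (𝓝 (√π / 2 * ∫ x, 1 / √x * rexp (-(ω ^ 2 / (4 * x))) ∂ν)) := by
  obtain ⟨hint, hlim⟩ := hK.tendsto_intervalIntegral_mul_of_abs_le hν hK01 (by fun_prop)
    (fun t => abs_cos_le_one _) (by positivity) fun x hx A hA =>
      abs_intervalIntegral_exp_neg_mul_sq_mul_cos_le hx.le hA hω
  have heq := hν.mono fun x hx => integral_exp_neg_mul_sq_mul_cos ω hx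
  rw [integral_congr_ae heq, integral_const_mul] at hlim
  have hc : √π / 2 ≠ 0 := by positivity
  exact ⟨(integrable_const_mul_iff hc.isUnit _).1 (hint.congr heq), hlim⟩

lemma tendsto_intervalIntegral_mul_sin [SFinite ν] (hK : IsGaussianMixture K ν)
    (hν : ∀ᵐ x ∂ν, 0 < x) (hK01 : IntegrableOn K (Ioo 0 1)) {ω : ℝ} (hω : ω ≠ 0) :
    Integrable (fun x => 1 / √x * daw (ω / (2 * √x))) ν ∧
      Tendsto (fun A => ∫ t in (0:ℝ)..A, K t * Real.sin (ω * t)) atTop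
        (𝓝 (∫ x, 1 / √x * daw (ω / (2 * √x)) ∂ν)) := by
  obtain ⟨hint, hlim⟩ := hK.tendsto_intervalIntegral_mul_of_abs_le hν hK01 (by fun_prop)
    (fun t => abs_sin_le_one _) (by positivity) fun x hx A hA =>
      abs_intervalIntegral_exp_neg_mul_sq_mul_sin_le hx.le hA hω
  have heq := hν.mono fun x hx => integral_exp_neg_mul_sq_mul_sin ω hx
  exact ⟨hint.congr heq, integral_congr_ae heq ▸ hlim⟩

end IsGaussianMixture

theorem gaussian_type_kernel_fourier_transforms_general
    (μ : Measure ℝ) (K : ℝ → ℝ)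
    (hKfin : ∀ t > 0, IntegrableOn (fun x => Real.exp (-(t ^ 2 * x))) (Ici 0) μ)
    (hK : ∀ t > 0, K t = ∫ x in Ici (0:ℝ), Real.exp (-(t ^ 2 * x)) ∂μ)
    (hKint : IntegrableOn K (Ioo 0 1))
    (hK0 : Tendsto K atTop (nhds 0)) :
    μ {0} = 0 ∧
    IntegrableOn (fun x : ℝ => 1 / Real.sqrt x) (Ici 1) μ ∧
    ∀ ω : ℝ, ω ≠ 0 →
      IntegrableOn (fun x => (1 / Real.sqrt x) * Real.exp (-(ω ^ 2 / (4 * x)))) (Ici 0) μ ∧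
      IntegrableOn (fun x => (1 / Real.sqrt x) * daw (ω / (2 * Real.sqrt x))) (Ici 0) μ ∧
      Tendsto (fun A => ∫ t in (0:ℝ)..A, K t * Real.cos (ω * t)) atTop
        (nhds (Real.sqrt Real.pi / 2 *
          ∫ x in Ici (0:ℝ), (1 / Real.sqrt x) * Real.exp (-(ω ^ 2 / (4 * x))) ∂μ)) ∧
      Tendsto (fun A => ∫ t in (0:ℝ)..A, K t * Real.sin (ω * t)) atTop
        (nhds (∫ x in Ici (0:ℝ), (1 / Real.sqrt x) * daw (ω / (2 * Real.sqrt x)) ∂μ)) := by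
  have hmix : IsGaussianMixture K (μ.restrict (Ici 0)) := ⟨hKfin, hK⟩
  have : SigmaFinite (μ.restrict (Ici 0)) :=
    sigmaFinite_of_integrable_pos (hKfin 1 one_pos) fun _ => exp_pos _
  have hν0 := hmix.measure_zero_eq_zero hK0
  have hpos : ∀ᵐ x ∂μ.restrict (Ici 0), 0 < x := by
    filter_upwards [ae_restrict_mem measurableSet_Ici, measure_eq_zero_iff_ae_notMem.1 hν0]
      with x hx hx0
    exact lt_of_le_of_ne hx (Ne.symm hx0)
  have hsqrt := hmix.integrableOn_one_div_sqrt hKint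
  rw [IntegrableOn, Measure.restrict_restrict measurableSet_Ici,
    inter_eq_left.2 (Ici_subset_Ici.2 zero_le_one)] at hsqrt
  refine ⟨by simpa [Measure.restrict_apply (measurableSet_singleton 0)] using hν0, hsqrt,
    fun ω hω => ?_⟩
  obtain ⟨hcos_int, hcos⟩ := hmix.tendsto_intervalIntegral_mul_cos hpos hKint hω
  obtain ⟨hsin_int, hsin⟩ := hmix.tendsto_intervalIntegral_mul_sin hpos hKint hω
  exact ⟨hcos_int, hsin_int, hcos, hsin⟩

/-- Fourier cosine and sine transforms of a kernel
`K(t) = φ(t²) = ∫₀^∞ e^{−t²x} μ(dx)` with `φ` completely monotonic: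
`μ({0}) = 0`, `∫₁^∞ x^{−1/2} μ(dx) < ∞`, and for every `ω ≠ 0`,
`𝒦cos(ω) = (√π/2)∫₀^∞ x^{−1/2} e^{−ω²/(4x)} μ(dx)` and
`𝒦sin(ω) = ∫₀^∞ x^{−1/2} daw(ω/(2√x)) μ(dx)` as convergent improper
integrals. -/
theorem gaussian_type_kernel_fourier_transforms
    (μ : Measure ℝ) (K : ℝ → ℝ)
    (hKfin : ∀ t > 0, IntegrableOn (fun x => Real.exp (-(t ^ 2 * x))) (Ici 0) μ)
    (hK : ∀ t > 0, K t = ∫ x in Ici (0:ℝ), Real.exp (-(t ^ 2 * x)) ∂μ)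
    (hKint : IntegrableOn K (Ioo 0 1))
    (hKanti : AntitoneOn K (Ioi 0))
    (hK0 : Tendsto K atTop (nhds 0)) :
    μ {0} = 0 ∧
    IntegrableOn (fun x : ℝ => 1 / Real.sqrt x) (Ici 1) μ ∧
    ∀ ω : ℝ, ω ≠ 0 →
      IntegrableOn (fun x => (1 / Real.sqrt x) * Real.exp (-(ω ^ 2 / (4 * x)))) (Ici 0) μ ∧
      IntegrableOn (fun x => (1 / Real.sqrt x) * daw (ω / (2 * Real.sqrt x))) (Ici 0) μ ∧
      Tendsto (fun A => ∫ t in (0:ℝ)..A, K t * Real.cos (ω * t)) atTop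
        (nhds (Real.sqrt Real.pi / 2 *
          ∫ x in Ici (0:ℝ), (1 / Real.sqrt x) * Real.exp (-(ω ^ 2 / (4 * x))) ∂μ)) ∧
      Tendsto (fun A => ∫ t in (0:ℝ)..A, K t * Real.sin (ω * t)) atTop
        (nhds (∫ x in Ici (0:ℝ), (1 / Real.sqrt x) * daw (ω / (2 * Real.sqrt x)) ∂μ)) :=
  gaussian_type_kernel_fourier_transforms_general μ K hKfin hK hKint hK0
end
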